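/- arXiv:1404.4837 — 14 statements merged into one kernel-verified Lean document; each statement's English description precedes it below -/
import Mathlib

section
/- Let H be a real Hilbert space, T : H → H non-expansive with fix T = {z : Tz = z} non-empty, and let (z_k) be generated by the inexact Krasnosel'skiĭ–Mann iteration z_{k+1} = z_k + λ_k(T z_k + ε_k − z_k) with λ_k ∈ (0,1]. If Σ_k λ_k(1−λ_k) = +∞ and Σ_k λ_k‖ε_k‖ < +∞, then: (a) the residuals e_k = z_k − T z_k converge strongly to 0, and (b) the sequence (z_k) converges weakly to some point z* ∈ fix T (i.e. ⟨z_k, y⟩ → ⟨z*, y⟩ for every y ∈ H). -/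
open scoped RealInnerProductSpace
open Filter Finset

section aux
variable {H : Type*} [NormedAddCommGroup H] [InnerProductSpace ℝ H]

lemma km_norm_identity (t : ℝ) (x y : H) :
    ‖x + t • (y - x)‖ ^ 2
      = (1 - t) * ‖x‖ ^ 2 + t * ‖y‖ ^ 2 - t * (1 - t) * ‖x - y‖ ^ 2 := by
  simp only [← real_inner_self_eq_norm_sq, inner_add_left, inner_add_right,
    inner_sub_left, inner_sub_right, inner_smul_left, inner_smul_right,
    starRingEnd_apply, star_trivial, real_inner_comm y x]
  ring

lemma km_three_point (s p q : H) :
    ‖s - q‖ ^ 2 = ‖s - p‖ ^ 2 + 2 * ⟪s - p, p - q⟫ + ‖p - q‖ ^ 2 := by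
  simp only [← real_inner_self_eq_norm_sq, inner_sub_left, inner_sub_right,
    starRingEnd_apply, star_trivial, real_inner_comm q s, real_inner_comm p s,
    real_inner_comm q p]
  ring

lemma quasi_fejer {a c : ℕ → ℝ} (ha : ∀ k, 0 ≤ a k) (hc : ∀ k, 0 ≤ c k)
    (hs : Summable c) (h : ∀ k, a (k + 1) ≤ a k + c k) :
    ∃ L, Tendsto a atTop (nhds L) := by
  set b : ℕ → ℝ := fun k => a k - ∑ j ∈ range k, c j with hb
  have hmono : Antitone b := antitone_nat_of_succ_le fun k => by
    have := h k
    simp only [hb, Finset.sum_range_succ]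
    linarith
  have hbdd : BddBelow (Set.range b) := by
    refine ⟨-∑' j, c j, ?_⟩
    rintro _ ⟨k, rfl⟩
    have h1 := Summable.sum_le_tsum (range k) (fun i _ => hc i) hs
    have := ha k
    simp only [hb]
    linarith
  have hbl := tendsto_atTop_ciInf hmono hbdd
  have hsum := hs.hasSum.tendsto_sum_nat
  refine ⟨(⨅ i, b i) + ∑' j, c j, ?_⟩
  have := hbl.add hsum
  refine this.congr fun k => by simp [hb]

lemma weak_seq_compact [CompleteSpace H] (z : ℕ → H) {B : ℝ} (hB : ∀ k, ‖z k‖ ≤ B) :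
    ∃ p : H, ∃ φ : ℕ → ℕ, StrictMono φ ∧
      ∀ y : H, Tendsto (fun i => ⟪z (φ i), y⟫) atTop (nhds ⟪p, y⟫) := by
  have hB0 : 0 ≤ B := le_trans (norm_nonneg _) (hB 0)
  set S : Set (ℕ → ℝ) := Set.univ.pi fun _ => Set.Icc (-(B * B)) (B * B) with hS
  have hScpt : IsCompact S := isCompact_univ_pi fun _ => isCompact_Icc
  set F : ℕ → ℕ → ℝ := fun k j => ⟪z k, z j⟫ with hF
  have hFS : ∀ k, F k ∈ S := by
    intro k
    refine Set.mem_univ_pi.mpr fun j => ?_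
    have h1 := abs_real_inner_le_norm (z k) (z j)
    have h2 : ‖z k‖ * ‖z j‖ ≤ B * B :=
      mul_le_mul (hB k) (hB j) (norm_nonneg _) hB0
    have := abs_le.mp (h1.trans h2)
    exact ⟨this.1, this.2⟩
  obtain ⟨a, -, φ, hφ, hconv⟩ := hScpt.tendsto_subseq hFS
  have hcoord : ∀ j, Tendsto (fun i => ⟪z (φ i), z j⟫) atTop (nhds (a j)) :=
    fun j => (tendsto_pi_nhds.mp hconv) j
  set M : Submodule ℝ H := (Submodule.span ℝ (Set.range z)).topologicalClosure with hM
  have hzM : ∀ k, z k ∈ M := fun k =>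
    Submodule.le_topologicalClosure _ (Submodule.subset_span ⟨k, rfl⟩)
  haveI : CompleteSpace M :=
    (Submodule.isClosed_topologicalClosure _).completeSpace_coe
  have hspan : ∀ v ∈ Submodule.span ℝ (Set.range z),
      ∃ L, Tendsto (fun i => ⟪z (φ i), v⟫) atTop (nhds L) := by
    intro v hv
    induction hv using Submodule.span_induction with
    | mem x h =>
      obtain ⟨j, rfl⟩ := h
      exact ⟨a j, hcoord j⟩
    | zero => exact ⟨0, by simp⟩
    | add x y hx hy ihx ihy =>
      obtain ⟨L1, h1⟩ := ihx; obtain ⟨L2, h2⟩ := ihy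
      exact ⟨L1 + L2, by simpa [inner_add_right] using h1.add h2⟩
    | smul r x hx ih =>
      obtain ⟨L, h⟩ := ih
      exact ⟨r * L, by simpa [inner_smul_right] using h.const_mul r⟩
  have hMlim : ∀ v ∈ M, ∃ L, Tendsto (fun i => ⟪z (φ i), v⟫) atTop (nhds L) := by
    intro v hv
    refine cauchySeq_tendsto_of_complete ?_
    rw [Metric.cauchySeq_iff]
    intro δ hδ
    have hv' : v ∈ closure ((Submodule.span ℝ (Set.range z) : Submodule ℝ H) : Set H) := hv
    obtain ⟨v', hv'mem, hdist⟩ := Metric.mem_closure_iff.mp hv' (δ / (3 * (B + 1)))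
      (by positivity)
    obtain ⟨L, hL⟩ := hspan v' hv'mem
    have hc := hL.cauchySeq
    rw [Metric.cauchySeq_iff] at hc
    obtain ⟨N, hN⟩ := hc (δ / 3) (by linarith)
    refine ⟨N, fun m hm n hn => ?_⟩
    have key : ∀ i, |⟪z (φ i), v⟫ - ⟪z (φ i), v'⟫| ≤ B * ‖v - v'‖ := by
      intro i
      rw [← inner_sub_right]
      exact (abs_real_inner_le_norm _ _).trans
        (mul_le_mul_of_nonneg_right (hB _) (norm_nonneg _))
    have hvv' : ‖v - v'‖ < δ / (3 * (B + 1)) := by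
      rwa [dist_eq_norm] at hdist
    have hBv : B * ‖v - v'‖ ≤ δ / 3 := by
      have h1 : B * ‖v - v'‖ ≤ B * (δ / (3 * (B + 1))) :=
        mul_le_mul_of_nonneg_left hvv'.le hB0
      have hq : (0:ℝ) ≤ δ / (3 * (B + 1)) := by positivity
      have h3 : B * (δ / (3 * (B + 1))) ≤ (B + 1) * (δ / (3 * (B + 1))) := by
        gcongr
        linarith
      have h4 : (B + 1) * (δ / (3 * (B + 1))) = δ / 3 := by
        field_simp
      linarith
    have hd := hN m hm n hn
    rw [Real.dist_eq] at hd ⊢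
    have km := key m; have kn := key n
    have : |⟪z (φ m), v⟫ - ⟪z (φ n), v⟫| ≤
        |⟪z (φ m), v⟫ - ⟪z (φ m), v'⟫| + |⟪z (φ m), v'⟫ - ⟪z (φ n), v'⟫|
          + |⟪z (φ n), v'⟫ - ⟪z (φ n), v⟫| := by
      calc |⟪z (φ m), v⟫ - ⟪z (φ n), v⟫|
          = |(⟪z (φ m), v⟫ - ⟪z (φ m), v'⟫) + (⟪z (φ m), v'⟫ - ⟪z (φ n), v'⟫)
              + (⟪z (φ n), v'⟫ - ⟪z (φ n), v⟫)| := by congr 1; ring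
        _ ≤ _ := by
            exact (abs_add_le _ _).trans (by gcongr; exact abs_add_le _ _)
    rw [abs_sub_comm (⟪z (φ n), v'⟫)] at this
    linarith
  have key : ∀ y : H, ∃ L, Tendsto (fun i => ⟪z (φ i), y⟫) atTop (nhds L) := by
    intro y
    obtain ⟨L, hL⟩ := hMlim ((Submodule.orthogonalProjection M y : H)) (Submodule.orthogonalProjection M y).2
    refine ⟨L, hL.congr fun i => ?_⟩
    have ho := Submodule.sub_starProjection_mem_orthogonal (K := M) y
    have h0 : ⟪z (φ i), y - (Submodule.orthogonalProjection M y : H)⟫ = 0 :=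
      (Submodule.mem_orthogonal M _).mp ho _ (hzM _)
    rw [inner_sub_right, sub_eq_zero] at h0
    exact h0.symm
  choose ℓ hℓ using key
  have hadd : ∀ y1 y2, ℓ (y1 + y2) = ℓ y1 + ℓ y2 := by
    intro y1 y2
    refine tendsto_nhds_unique (hℓ (y1 + y2)) ?_
    simpa [inner_add_right] using (hℓ y1).add (hℓ y2)
  have hsmul : ∀ (r : ℝ) y, ℓ (r • y) = r * ℓ y := by
    intro r y
    refine tendsto_nhds_unique (hℓ (r • y)) ?_
    simpa [inner_smul_right] using (hℓ y).const_mul r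
  have hbound : ∀ y, ‖ℓ y‖ ≤ B * ‖y‖ := by
    intro y
    rw [Real.norm_eq_abs]
    refine le_of_tendsto (hℓ y).abs (Eventually.of_forall fun i => ?_)
    exact (abs_real_inner_le_norm _ _).trans
      (mul_le_mul_of_nonneg_right (hB _) (norm_nonneg _))
  set Lmap : H →L[ℝ] ℝ := LinearMap.mkContinuous
    { toFun := ℓ, map_add' := hadd, map_smul' := hsmul } B hbound with hLmap
  refine ⟨(InnerProductSpace.toDual ℝ H).symm Lmap, φ, hφ, fun y => ?_⟩
  have : ⟪(InnerProductSpace.toDual ℝ H).symm Lmap, y⟫ = Lmap y :=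
    InnerProductSpace.toDual_symm_apply
  rw [this]
  exact hℓ y

end aux

set_option maxHeartbeats 1000000

/-- Convergence of the inexact Krasnosel'skiĭ–Mann iteration: if `T` is non-expansive
with a fixed point, `λ_k ∈ (0,1]`, `Σ λ_k(1−λ_k) = +∞`, and `Σ λ_k‖ε_k‖ < +∞`, then the
residuals `e_k = z_k − T z_k` converge strongly to `0` and `(z_k)` converges weakly to some
fixed point `z*` of `T`. -/
theorem stmt2 {H : Type*} [NormedAddCommGroup H] [InnerProductSpace ℝ H] [CompleteSpace H]
    (T : H → H) (hT : ∀ x y, ‖T x - T y‖ ≤ ‖x - y‖)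
    (hfix : ∃ w, T w = w)
    (lam : ℕ → ℝ) (ε : ℕ → H) (z : ℕ → H)
    (hlam : ∀ k, lam k ∈ Set.Ioc (0 : ℝ) 1)
    (hiter : ∀ k, z (k + 1) = z k + lam k • (T (z k) + ε k - z k))
    (hdiv : ¬ Summable (fun k => lam k * (1 - lam k)))
    (herr : Summable (fun k => lam k * ‖ε k‖)) :
    Filter.Tendsto (fun k => z k - T (z k)) Filter.atTop (nhds 0) ∧
    ∃ zs : H, T zs = zs ∧
      ∀ y : H, Filter.Tendsto (fun k => ⟪z k, y⟫) Filter.atTop (nhds ⟪zs, y⟫) := by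
  obtain ⟨w, hw⟩ := hfix
  have hl0 : ∀ k, 0 < lam k := fun k => (hlam k).1
  have hl1 : ∀ k, lam k ≤ 1 := fun k => (hlam k).2
  set c : ℕ → ℝ := fun k => lam k * ‖ε k‖ with hcdef
  have hc0 : ∀ k, 0 ≤ c k := fun k => mul_nonneg (hl0 k).le (norm_nonneg _)
  have hcs : Summable c := herr
  set e : ℕ → H := fun k => z k - T (z k) with hedef
  set S : ℝ := ∑' j, c j with hSdef
  have hS0 : 0 ≤ S := tsum_nonneg hc0
  have hcS : ∀ k, c k ≤ S := fun k => Summable.le_tsum hcs k fun j _ => hc0 j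
  -- quasi-Fejér inequality for any fixed point
  have fejer : ∀ w', T w' = w' → ∀ k, ‖z (k + 1) - w'‖ ≤ ‖z k - w'‖ + c k := by
    intro w' hw' k
    have h1 : z (k + 1) - w'
        = ((z k - w') + lam k • ((T (z k) - w') - (z k - w'))) + lam k • ε k := by
      rw [hiter k]; module
    have h5 : ‖lam k • ε k‖ = c k := by
      rw [norm_smul, Real.norm_eq_abs, abs_of_pos (hl0 k)]
    have h6 : (z k - w') + lam k • ((T (z k) - w') - (z k - w'))
        = (1 - lam k) • (z k - w') + lam k • (T (z k) - w') := by module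
    rw [h1, h6]
    have h7 : ‖(1 - lam k) • (z k - w') + lam k • (T (z k) - w')‖
        ≤ (1 - lam k) * ‖z k - w'‖ + lam k * ‖T (z k) - w'‖ := by
      refine (norm_add_le _ _).trans ?_
      rw [norm_smul, norm_smul, Real.norm_eq_abs, Real.norm_eq_abs,
        abs_of_nonneg (by linarith [hl1 k] : (0:ℝ) ≤ 1 - lam k), abs_of_pos (hl0 k)]
    have h8 : ‖T (z k) - w'‖ ≤ ‖z k - w'‖ := by
      have := hT (z k) w'
      rwa [hw'] at this
    have h9 : (1 - lam k) * ‖z k - w'‖ + lam k * ‖T (z k) - w'‖ ≤ ‖z k - w'‖ := by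
      nlinarith [hl0 k, hl1 k]
    calc ‖((1 - lam k) • (z k - w') + lam k • (T (z k) - w')) + lam k • ε k‖
        ≤ ‖(1 - lam k) • (z k - w') + lam k • (T (z k) - w')‖ + ‖lam k • ε k‖ :=
          norm_add_le _ _
      _ ≤ ‖z k - w'‖ + c k := by rw [h5]; linarith
  -- uniform bound
  have hbdd : ∀ k, ‖z k - w‖ ≤ ‖z 0 - w‖ + S := by
    have mono : ∀ k, ‖z k - w‖ ≤ ‖z 0 - w‖ + ∑ j ∈ range k, c j := by
      intro k
      induction k with
      | zero => simp
      | succ n ih =>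
        rw [Finset.sum_range_succ]
        have := fejer w hw n
        linarith
    intro k
    have h1 := Summable.sum_le_tsum (range k) (fun i _ => hc0 i) hcs
    have := mono k
    rw [← hSdef] at h1
    linarith
  set B : ℝ := ‖z 0 - w‖ + S with hBdef
  have hB0 : 0 ≤ B := le_trans (norm_nonneg _) (hbdd 0)
  have hzB : ∀ k, ‖z k‖ ≤ B + ‖w‖ := by
    intro k
    have h1 : ‖z k‖ ≤ ‖w‖ + ‖z k - w‖ := norm_le_norm_add_norm_sub' (z k) w
    linarith [hbdd k]
  -- summability of the residual series
  have step2 : ∀ k, lam k * (1 - lam k) * ‖e k‖ ^ 2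
      ≤ ‖z k - w‖ ^ 2 - ‖z (k + 1) - w‖ ^ 2 + (2 * B + S) * c k := by
    intro k
    set x : H := z k - w with hx
    set y : H := T (z k) - w with hy
    have hxy : x - y = e k := by simp only [hx, hy, hedef]; abel
    have hid := km_norm_identity (lam k) x y
    have h8 : ‖y‖ ≤ ‖x‖ := by
      have := hT (z k) w
      rwa [hw] at this
    have hysq : ‖y‖ ^ 2 ≤ ‖x‖ ^ 2 := by nlinarith [norm_nonneg y, norm_nonneg x]
    have hm2 : ‖x + lam k • (y - x)‖ ^ 2
        ≤ ‖x‖ ^ 2 - lam k * (1 - lam k) * ‖x - y‖ ^ 2 := by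
      rw [hid]
      nlinarith [hl0 k, hl1 k]
    have hmB : ‖x + lam k • (y - x)‖ ≤ B := by
      have hxB : ‖x‖ ≤ B := hbdd k
      nlinarith [norm_nonneg (x + lam k • (y - x)), norm_nonneg x,
        mul_nonneg (mul_nonneg (hl0 k).le (by linarith [hl1 k] : (0:ℝ) ≤ 1 - lam k))
          (sq_nonneg ‖x - y‖)]
    have hz1 : ‖z (k + 1) - w‖ ≤ ‖x + lam k • (y - x)‖ + c k := by
      have hdec : z (k + 1) - w = (x + lam k • (y - x)) + lam k • ε k := by
        simp only [hx, hy]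
        rw [hiter k]; module
      rw [hdec]
      refine (norm_add_le _ _).trans ?_
      have : ‖lam k • ε k‖ = c k := by
        rw [norm_smul, Real.norm_eq_abs, abs_of_pos (hl0 k)]
      rw [this]
    have hz2 : ‖z (k + 1) - w‖ ^ 2 ≤ (‖x + lam k • (y - x)‖ + c k) ^ 2 := by
      nlinarith [norm_nonneg (z (k + 1) - w), hc0 k,
        norm_nonneg (x + lam k • (y - x))]
    have hmc : ‖x + lam k • (y - x)‖ * c k ≤ B * c k :=
      mul_le_mul_of_nonneg_right hmB (hc0 k)
    have hcc : c k * c k ≤ S * c k := mul_le_mul_of_nonneg_right (hcS k) (hc0 k)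
    rw [← hxy]
    nlinarith [hz2, hm2, hmc, hcc]
  have gsum : Summable (fun k => lam k * (1 - lam k) * ‖e k‖ ^ 2) := by
    refine summable_of_sum_range_le (c := ‖z 0 - w‖ ^ 2 + (2 * B + S) * S) ?_ ?_
    · intro k
      exact mul_nonneg (mul_nonneg (hl0 k).le (by linarith [hl1 k])) (sq_nonneg _)
    · intro n
      have h1 : ∑ k ∈ range n, lam k * (1 - lam k) * ‖e k‖ ^ 2
          ≤ ∑ k ∈ range n, (‖z k - w‖ ^ 2 - ‖z (k + 1) - w‖ ^ 2 + (2 * B + S) * c k) :=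
        Finset.sum_le_sum fun k _ => step2 k
      have h2 : ∑ k ∈ range n, (‖z k - w‖ ^ 2 - ‖z (k + 1) - w‖ ^ 2 + (2 * B + S) * c k)
          = (‖z 0 - w‖ ^ 2 - ‖z n - w‖ ^ 2) + (2 * B + S) * ∑ k ∈ range n, c k := by
        rw [Finset.sum_add_distrib, Finset.sum_range_sub' (fun k => ‖z k - w‖ ^ 2) n,
          ← Finset.mul_sum]
      have h3 : ∑ k ∈ range n, c k ≤ S := by
        have := Summable.sum_le_tsum (range n) (fun i _ => hc0 i) hcs
        rwa [← hSdef] at this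
      have h4 : 0 ≤ ‖z n - w‖ ^ 2 := sq_nonneg _
      have h5 : (2 * B + S) * ∑ k ∈ range n, c k ≤ (2 * B + S) * S :=
        mul_le_mul_of_nonneg_left h3 (by linarith)
      linarith
  -- frequently small residuals
  have freq : ∀ δ > (0:ℝ), ∀ N, ∃ k ≥ N, ‖e k‖ < δ := by
    by_contra hcon
    push_neg at hcon
    obtain ⟨δ, hδ, N, hN⟩ := hcon
    apply hdiv
    rw [← summable_nat_add_iff N]
    have hsum2 : Summable (fun k => lam (k + N) * (1 - lam (k + N)) * ‖e (k + N)‖ ^ 2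
        * (δ⁻¹ ^ 2)) := ((summable_nat_add_iff N).mpr gsum).mul_right _
    refine Summable.of_nonneg_of_le ?_ ?_ hsum2
    · intro k
      exact mul_nonneg (hl0 _).le (by linarith [hl1 (k + N)])
    · intro k
      have hek : δ ≤ ‖e (k + N)‖ := hN (k + N) (Nat.le_add_left N k)
      have h1 : δ ^ 2 ≤ ‖e (k + N)‖ ^ 2 := by nlinarith
      have h2 : (1:ℝ) ≤ ‖e (k + N)‖ ^ 2 * δ⁻¹ ^ 2 := by
        rw [inv_pow, ← div_eq_mul_inv, one_le_div (by positivity : (0:ℝ) < δ ^ 2)]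
        exact h1
      have h3 : 0 ≤ lam (k + N) * (1 - lam (k + N)) :=
        mul_nonneg (hl0 _).le (by linarith [hl1 (k + N)])
      nlinarith
  -- residual recursion
  have hrec : ∀ k, ‖e (k + 1)‖ ≤ ‖e k‖ + 2 * c k := by
    intro k
    have hd1 : e (k + 1) = ((1 - lam k) • e k + lam k • ε k)
        + (T (z k) - T (z (k + 1))) := by
      simp only [hedef]
      rw [hiter k]
      module
    have hd3 : z k - z (k + 1) = lam k • e k - lam k • ε k := by
      simp only [hedef]
      rw [hiter k]
      module
    have hd2 : ‖T (z k) - T (z (k + 1))‖ ≤ lam k * ‖e k‖ + lam k * ‖ε k‖ := by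
      refine (hT _ _).trans ?_
      rw [hd3]
      refine (norm_sub_le _ _).trans ?_
      rw [norm_smul, norm_smul, Real.norm_eq_abs, abs_of_pos (hl0 k)]
    rw [hd1]
    have h1 := norm_add_le ((1 - lam k) • e k + lam k • ε k) (T (z k) - T (z (k + 1)))
    have h2 := norm_add_le ((1 - lam k) • e k) (lam k • ε k)
    have h3 : ‖(1 - lam k) • e k‖ = (1 - lam k) * ‖e k‖ := by
      rw [norm_smul, Real.norm_eq_abs, abs_of_nonneg (by linarith [hl1 k])]
    have h4 : ‖lam k • ε k‖ = lam k * ‖ε k‖ := by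
      rw [norm_smul, Real.norm_eq_abs, abs_of_pos (hl0 k)]
    simp only [hcdef]
    linarith
  -- part (a)
  have parta : Tendsto e atTop (nhds (0:H)) := by
    rw [Metric.tendsto_atTop]
    intro δ hδ
    have htail := tendsto_sum_nat_add c
    have hev : ∀ᶠ i in atTop, ∑' j, c (j + i) < δ / 6 :=
      htail.eventually (gt_mem_nhds (by linarith))
    obtain ⟨K, hK⟩ := hev.exists
    obtain ⟨k, hkK, hek⟩ := freq (δ / 3) (by linarith) K
    refine ⟨k, fun n hn => ?_⟩
    have unroll : ∀ d, ‖e (k + d)‖ ≤ ‖e k‖ + 2 * ∑ i ∈ range d, c (k + i) := by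
      intro d
      induction d with
      | zero => simp
      | succ m ih =>
        have h1 := hrec (k + m)
        rw [Finset.sum_range_succ]
        have h2 : k + (m + 1) = (k + m) + 1 := rfl
        rw [h2]
        linarith
    have hsumb : ∑ i ∈ range (n - k), c (k + i) ≤ ∑' j, c (j + K) := by
      have hsub : Summable (fun j => c (j + K)) := (summable_nat_add_iff K).mpr hcs
      have e1 : ∑ i ∈ range (n - k), c (k + i)
          = ∑ i ∈ Ico (k - K) ((k - K) + (n - k)), (fun j => c (j + K)) i := by
        rw [Finset.sum_Ico_eq_sum_range]
        simp only [Nat.add_sub_cancel_left]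
        refine Finset.sum_congr rfl fun i _ => ?_
        show c (k + i) = c (k - K + i + K)
        congr 1
        omega
      rw [e1]
      exact Summable.sum_le_tsum _ (fun i _ => hc0 _) hsub
    have hn' : n = k + (n - k) := by omega
    rw [dist_zero_right, hn']
    calc ‖e (k + (n - k))‖ ≤ ‖e k‖ + 2 * ∑ i ∈ range (n - k), c (k + i) := unroll _
      _ ≤ ‖e k‖ + 2 * ∑' j, c (j + K) := by linarith
      _ < δ / 3 + 2 * (δ / 6) := by
          have h0 : (0:ℝ) ≤ ∑' j, c (j + K) :=
            tsum_nonneg fun j => hc0 _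
          linarith
      _ ≤ δ := by linarith
  -- limits of distances to any fixed point
  have hfixlim : ∀ w', T w' = w' →
      ∃ L, Tendsto (fun k => ‖z k - w'‖) atTop (nhds L) := fun w' hw' =>
    quasi_fejer (fun k => norm_nonneg _) hc0 hcs (fejer w' hw')
  -- demiclosedness
  have demi : ∀ (ψ : ℕ → ℕ), StrictMono ψ → ∀ p : H,
      (∀ y, Tendsto (fun i => ⟪z (ψ i), y⟫) atTop (nhds ⟪p, y⟫)) → T p = p := by
    intro ψ hψ p hp
    have hepsi : Tendsto (fun i => ‖e (ψ i)‖) atTop (nhds 0) := by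
      have h1 : Tendsto (fun i => e (ψ i)) atTop (nhds 0) :=
        parta.comp hψ.tendsto_atTop
      simpa using h1.norm
    have hinner : Tendsto (fun i => ⟪z (ψ i), p - T p⟫) atTop (nhds ⟪p, p - T p⟫) :=
      hp _
    set B2 : ℝ := B + ‖w‖ + ‖p‖ with hB2
    have key : ∀ i, ‖p - T p‖ ^ 2 ≤ ‖e (ψ i)‖ ^ 2 + 2 * B2 * ‖e (ψ i)‖
        - 2 * (⟪z (ψ i), p - T p⟫ - ⟪p, p - T p⟫) := by
      intro i
      set s : H := z (ψ i) with hs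
      have hid := km_three_point s p (T p)
      have h1 : ‖s - T p‖ ≤ ‖e (ψ i)‖ + ‖s - p‖ := by
        have : s - T p = e (ψ i) + (T s - T p) := by simp only [hedef, hs]; abel
        rw [this]
        exact (norm_add_le _ _).trans (by linarith [hT s p])
      have hsp : ‖s - p‖ ≤ B2 := by
        have h2 : ‖s - p‖ ≤ ‖s‖ + ‖p‖ := norm_sub_le _ _
        have := hzB (ψ i)
        simp only [hB2]
        linarith
      have h2 : ‖s - T p‖ ^ 2 ≤ ‖e (ψ i)‖ ^ 2 + 2 * B2 * ‖e (ψ i)‖ + ‖s - p‖ ^ 2 := by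
        have he0 : (0:ℝ) ≤ ‖e (ψ i)‖ := norm_nonneg _
        have hsp0 : (0:ℝ) ≤ ‖s - p‖ := norm_nonneg _
        nlinarith [norm_nonneg (s - T p)]
      have h3 : ⟪s - p, p - T p⟫ = ⟪s, p - T p⟫ - ⟪p, p - T p⟫ := by
        rw [inner_sub_left]
      nlinarith [hid, h2, h3]
    have hR : Tendsto (fun i => ‖e (ψ i)‖ ^ 2 + 2 * B2 * ‖e (ψ i)‖
        - 2 * (⟪z (ψ i), p - T p⟫ - ⟪p, p - T p⟫)) atTop (nhds 0) := by
      have t1 : Tendsto (fun i => ‖e (ψ i)‖ ^ 2) atTop (nhds 0) := by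
        simpa using hepsi.pow 2
      have t2 : Tendsto (fun i => 2 * B2 * ‖e (ψ i)‖) atTop (nhds 0) := by
        simpa using hepsi.const_mul (2 * B2)
      have t3 : Tendsto (fun i => 2 * (⟪z (ψ i), p - T p⟫ - ⟪p, p - T p⟫))
          atTop (nhds 0) := by
        have := (hinner.sub_const ⟪p, p - T p⟫).const_mul 2
        simpa using this
      have := (t1.add t2).sub t3
      simpa using this
    have hle : ‖p - T p‖ ^ 2 ≤ 0 := ge_of_tendsto hR (Eventually.of_forall key)
    have : ‖p - T p‖ = 0 := by nlinarith [norm_nonneg (p - T p)]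
    have := norm_eq_zero.mp this
    have := sub_eq_zero.mp this
    exact this.symm
  -- Opial uniqueness
  have uniq : ∀ p q : H, T p = p → T q = q →
      (∃ ψ : ℕ → ℕ, StrictMono ψ ∧
        ∀ y, Tendsto (fun i => ⟪z (ψ i), y⟫) atTop (nhds ⟪p, y⟫)) →
      (∃ χ : ℕ → ℕ, StrictMono χ ∧
        ∀ y, Tendsto (fun i => ⟪z (χ i), y⟫) atTop (nhds ⟪q, y⟫)) → p = q := by
    rintro p q hp hq ⟨ψ, hψ, hψw⟩ ⟨χ, hχ, hχw⟩
    obtain ⟨Lp, hLp⟩ := hfixlim p hp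
    obtain ⟨Lq, hLq⟩ := hfixlim q hq
    have hid : ∀ k, ‖z k - q‖ ^ 2 - ‖z k - p‖ ^ 2
        = 2 * ⟪z k, p - q⟫ - 2 * ⟪p, p - q⟫ + ‖p - q‖ ^ 2 := by
      intro k
      have := km_three_point (z k) p q
      have h3 : ⟪z k - p, p - q⟫ = ⟪z k, p - q⟫ - ⟪p, p - q⟫ := by
        rw [inner_sub_left]
      linarith
    have hlim : ∀ (θ : ℕ → ℕ), StrictMono θ →
        (∀ y, Tendsto (fun i => ⟪z (θ i), y⟫) atTop (nhds ⟪(if True then p else q), y⟫))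
          → True := fun _ _ _ => trivial
    -- along ψ
    have l1 : Tendsto (fun i => ‖z (ψ i) - q‖ ^ 2 - ‖z (ψ i) - p‖ ^ 2) atTop
        (nhds (Lq ^ 2 - Lp ^ 2)) := by
      have a1 := (hLq.comp hψ.tendsto_atTop).pow 2
      have a2 := (hLp.comp hψ.tendsto_atTop).pow 2
      exact a1.sub a2
    have l2 : Tendsto (fun i => ‖z (χ i) - q‖ ^ 2 - ‖z (χ i) - p‖ ^ 2) atTop
        (nhds (Lq ^ 2 - Lp ^ 2)) := by
      have a1 := (hLq.comp hχ.tendsto_atTop).pow 2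
      have a2 := (hLp.comp hχ.tendsto_atTop).pow 2
      exact a1.sub a2
    have r1 : Tendsto (fun i => ‖z (ψ i) - q‖ ^ 2 - ‖z (ψ i) - p‖ ^ 2) atTop
        (nhds (2 * ⟪p, p - q⟫ - 2 * ⟪p, p - q⟫ + ‖p - q‖ ^ 2)) := by
      have := ((hψw (p - q)).const_mul 2).sub_const (2 * ⟪p, p - q⟫)
        |>.add_const (‖p - q‖ ^ 2)
      exact this.congr fun i => (hid (ψ i)).symm
    have r2 : Tendsto (fun i => ‖z (χ i) - q‖ ^ 2 - ‖z (χ i) - p‖ ^ 2) atTop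
        (nhds (2 * ⟪q, p - q⟫ - 2 * ⟪p, p - q⟫ + ‖p - q‖ ^ 2)) := by
      have := ((hχw (p - q)).const_mul 2).sub_const (2 * ⟪p, p - q⟫)
        |>.add_const (‖p - q‖ ^ 2)
      exact this.congr fun i => (hid (χ i)).symm
    have e1 := tendsto_nhds_unique l1 r1
    have e2 := tendsto_nhds_unique l2 r2
    have : ⟪p, p - q⟫ = ⟪q, p - q⟫ := by linarith
    have h0 : ⟪p - q, p - q⟫ = (0:ℝ) := by
      rw [inner_sub_left]
      linarith
    have := inner_self_eq_zero.mp h0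
    exact sub_eq_zero.mp this
  -- main extraction
  obtain ⟨p, φ, hφ, hφw⟩ := weak_seq_compact z hzB
  have hpfix : T p = p := demi φ hφ p hφw
  refine ⟨parta, ⟨p, hpfix, fun y => ?_⟩⟩
  by_contra hcon
  rw [Metric.tendsto_atTop] at hcon
  push_neg at hcon
  obtain ⟨δ, hδ, hfr⟩ := hcon
  have hfreq : ∃ᶠ n in atTop, δ ≤ dist ⟪z n, y⟫ ⟪p, y⟫ := by
    rw [frequently_atTop]
    intro N
    obtain ⟨n, hn, hd⟩ := hfr N
    exact ⟨n, hn, hd⟩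
  obtain ⟨ψ, hψ, hψprop⟩ := extraction_of_frequently_atTop hfreq
  obtain ⟨q, φ2, hφ2, hφ2w⟩ := weak_seq_compact (fun i => z (ψ i))
    (fun i => hzB (ψ i))
  have hcomp : StrictMono fun i => ψ (φ2 i) := hψ.comp hφ2
  have hqw : ∀ y', Tendsto (fun i => ⟪z (ψ (φ2 i)), y'⟫) atTop (nhds ⟪q, y'⟫) :=
    fun y' => hφ2w y'
  have hqfix : T q = q := demi _ hcomp q hqw
  have hpq : p = q := uniq p q hpfix hqfix ⟨φ, hφ, hφw⟩ ⟨_, hcomp, hqw⟩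
  have hy := hqw y
  rw [← hpq] at hy
  rw [Metric.tendsto_atTop] at hy
  obtain ⟨N, hN⟩ := hy δ hδ
  exact absurd (hψprop (φ2 N)) (not_le.mpr (hN N le_rfl))
end

section
/- Let H be a real Hilbert space, T : H → H non-expansive, and let (z_k) satisfy z_{k+1} = z_k + λ_k(T z_k + ε_k − z_k) with λ_k ∈ (0,1]. Set e_k = z_k − T z_k. Then for every k, (1/(2λ_k))‖e_k − e_{k+1}‖² ≤ ⟨e_k − ε_k, e_k − e_{k+1}⟩. -/
open scoped RealInnerProductSpace

/-- For the inexact Krasnosel'skiĭ–Mann iteration of a non-expansive operator `T` with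
`λ_k ∈ (0,1]` and residual `e_k = z_k − T z_k`, one has
`(1/(2λ_k))‖e_k − e_{k+1}‖² ≤ ⟪e_k − ε_k, e_k − e_{k+1}⟫` for every `k`. -/
theorem stmt3 {H : Type*} [NormedAddCommGroup H] [InnerProductSpace ℝ H]
    (T : H → H) (hT : ∀ x y, ‖T x - T y‖ ≤ ‖x - y‖)
    (lam : ℕ → ℝ) (ε : ℕ → H) (z : ℕ → H)
    (hlam : ∀ k, lam k ∈ Set.Ioc (0 : ℝ) 1)
    (hiter : ∀ k, z (k + 1) = z k + lam k • (T (z k) + ε k - z k))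
    (e : ℕ → H) (he : ∀ k, e k = z k - T (z k)) :
    ∀ k, (1 / (2 * lam k)) * ‖e k - e (k + 1)‖ ^ 2 ≤ ⟪e k - ε k, e k - e (k + 1)⟫ := by
  intro k
  obtain ⟨hpos, _⟩ := hlam k
  set u : H := z k - z (k + 1) with hu
  set d : H := e k - e (k + 1) with hd
  have hud : u = lam k • (e k - ε k) := by
    rw [hu, hiter k, he k]
    simp [smul_sub, smul_add]
    abel
  have hTd : T (z k) - T (z (k + 1)) = u - d := by
    rw [hd, he k, he (k + 1), hu]
    abel
  have h1 : ‖u - d‖ ≤ ‖u‖ := by rw [← hTd]; exact hT _ _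
  have h2 : ‖u - d‖ ^ 2 ≤ ‖u‖ ^ 2 := by
    apply pow_le_pow_left₀ (norm_nonneg _) h1
  have h3 : ‖d‖ ^ 2 ≤ 2 * ⟪u, d⟫ := by
    have := norm_sub_sq_real u d
    nlinarith [this]
  have h4 : ⟪u, d⟫ = lam k * ⟪e k - ε k, d⟫ := by
    rw [hud, real_inner_smul_left]
  rw [h4] at h3
  rw [div_mul_eq_mul_div, div_le_iff₀ (by positivity)]
  nlinarith [h3]
end

section
/- Let H be a real Hilbert space and T : H → H an α-averaged operator, α ∈ (0,1), i.e. T = αR + (1−α)Id with R non-expansive. Let (z_k) satisfy z_{k+1} = z_k + λ_k(T z_k + ε_k − z_k) with λ_k ∈ (0, 1/α), and set e_k = z_k − T z_k. Then for every k, (1/(2αλ_k))‖e_k − e_{k+1}‖² ≤ ⟨e_k − ε_k, e_k − e_{k+1}⟩. -/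
open scoped RealInnerProductSpace

/-- For the inexact Krasnosel'skiĭ–Mann iteration of an `α`-averaged operator `T`
(`α ∈ (0,1)`) with `λ_k ∈ (0, 1/α)` and residual `e_k = z_k − T z_k`, one has
`(1/(2αλ_k))‖e_k − e_{k+1}‖² ≤ ⟪e_k − ε_k, e_k − e_{k+1}⟫` for every `k`. -/
theorem stmt4 {H : Type*} [NormedAddCommGroup H] [InnerProductSpace ℝ H]
    (T : H → H) (α : ℝ) (hα0 : 0 < α) (hα1 : α < 1)
    (hT : ∃ R : H → H, (∀ x y, ‖R x - R y‖ ≤ ‖x - y‖) ∧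
      T = fun x => α • R x + (1 - α) • x)
    (lam : ℕ → ℝ) (ε : ℕ → H) (z : ℕ → H)
    (hlam : ∀ k, lam k ∈ Set.Ioo (0 : ℝ) (1 / α))
    (hiter : ∀ k, z (k + 1) = z k + lam k • (T (z k) + ε k - z k))
    (e : ℕ → H) (he : ∀ k, e k = z k - T (z k)) :
    ∀ k, (1 / (2 * α * lam k)) * ‖e k - e (k + 1)‖ ^ 2 ≤ ⟪e k - ε k, e k - e (k + 1)⟫ := by
  obtain ⟨R, hR, hTdef⟩ := hT
  intro k
  obtain ⟨hl0, hl1⟩ := hlam k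
  set u := z k - z (k + 1) with hu
  set v := R (z k) - R (z (k + 1)) with hv
  have hvu : ‖v‖ ≤ ‖u‖ := hR _ _
  have hek : ∀ j, e j = α • (z j - R (z j)) := by
    intro j
    rw [he j, hTdef]
    module
  have h1 : e k - e (k + 1) = α • (u - v) := by
    rw [hek, hek, hu, hv]; module
  have h2 : u = lam k • (e k - ε k) := by
    rw [he, hu, hiter k]; module
  have hln : lam k ≠ 0 := ne_of_gt hl0
  have h3 : e k - ε k = (lam k)⁻¹ • u := by
    rw [h2, smul_smul, inv_mul_cancel₀ hln, one_smul]
  have hiprod : ⟪e k - ε k, e k - e (k + 1)⟫ =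
      (lam k)⁻¹ * (α * (‖u‖ ^ 2 - ⟪u, v⟫)) := by
    rw [h3, h1, real_inner_smul_left, real_inner_smul_right, inner_sub_right,
      real_inner_self_eq_norm_sq]
  have hnorm : ‖e k - e (k + 1)‖ ^ 2 = α ^ 2 * ‖u - v‖ ^ 2 := by
    rw [h1, norm_smul, Real.norm_eq_abs, abs_of_pos hα0, mul_pow]
  have hexp : ‖u - v‖ ^ 2 = ‖u‖ ^ 2 - 2 * ⟪u, v⟫ + ‖v‖ ^ 2 := by
    rw [norm_sub_sq_real]
  rw [hiprod, hnorm, hexp]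
  have hv2 : ‖v‖ ^ 2 ≤ ‖u‖ ^ 2 := pow_le_pow_left₀ (norm_nonneg v) hvu 2
  have h4 : (0:ℝ) < α / (2 * lam k) := by positivity
  have : 1 / (2 * α * lam k) * (α ^ 2 * (‖u‖ ^ 2 - 2 * ⟪u, v⟫ + ‖v‖ ^ 2))
      = α / (2 * lam k) * (‖u‖ ^ 2 - 2 * ⟪u, v⟫ + ‖v‖ ^ 2) := by
    field_simp
  rw [this]
  have : (lam k)⁻¹ * (α * (‖u‖ ^ 2 - ⟪u, v⟫))
      = α / (2 * lam k) * (2 * ‖u‖ ^ 2 - 2 * ⟪u, v⟫) := by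
    field_simp
  rw [this]
  apply mul_le_mul_of_nonneg_left _ (le_of_lt h4)
  linarith
end

section
/- Let H be a real Hilbert space, T : H → H non-expansive, z* a fixed point of T, and let (z_k) satisfy z_{k+1} = z_k + λ_k(T z_k + ε_k − z_k) with λ_k ∈ (0,1]. Set e_k = z_k − T z_k, τ_k = λ_k(1−λ_k), and T_{λ_k} = λ_k T + (1−λ_k)Id. If ν₁ is a real number such that ν₁ ≥ 2‖T_{λ_k} z_k − z*‖ + λ_k‖ε_k‖ for every k, then for every k: ‖z_{k+1} − z*‖² ≤ ‖z_k − z*‖² − τ_k‖e_k‖² + ν₁ λ_k‖ε_k‖. -/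
open scoped InnerProductSpace
lemma convex_comb_sq {H : Type*} [NormedAddCommGroup H] [InnerProductSpace ℝ H]
    (l : ℝ) (u v : H) :
    ‖l • u + (1 - l) • v‖ ^ 2 =
      l * ‖u‖ ^ 2 + (1 - l) * ‖v‖ ^ 2 - l * (1 - l) * ‖u - v‖ ^ 2 := by
  have exp : ∀ x : H, ‖x‖ ^ 2 = ⟪x, x⟫_ℝ := fun x => (real_inner_self_eq_norm_sq x).symm
  rw [exp, exp, exp, exp]
  simp only [inner_add_add_self, inner_sub_sub_self, real_inner_smul_left,
    real_inner_smul_right, real_inner_comm u v]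
  ring

lemma norm_add_sq_le {H : Type*} [NormedAddCommGroup H] [InnerProductSpace ℝ H]
    (a b : H) : ‖a + b‖ ^ 2 ≤ ‖a‖ ^ 2 + (2 * ‖a‖ + ‖b‖) * ‖b‖ := by
  have h := norm_add_le a b
  have h2 : ‖a + b‖ ^ 2 ≤ (‖a‖ + ‖b‖) ^ 2 := by
    apply pow_le_pow_left₀ (norm_nonneg _) h
  nlinarith [norm_nonneg a, norm_nonneg b]

/-- Fejér-type inequality for the inexact Krasnosel'skiĭ–Mann iteration of a non-expansive
operator `T` with fixed point `z*`, `λ_k ∈ (0,1]`, residual `e_k = z_k − T z_k`,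
`τ_k = λ_k(1−λ_k)` and a bound `ν₁ ≥ 2‖T_{λ_k} z_k − z*‖ + λ_k‖ε_k‖` for all `k`:
`‖z_{k+1} − z*‖² ≤ ‖z_k − z*‖² − τ_k‖e_k‖² + ν₁ λ_k‖ε_k‖`. -/
theorem stmt5 {H : Type*} [NormedAddCommGroup H] [InnerProductSpace ℝ H]
    (T : H → H) (hT : ∀ x y, ‖T x - T y‖ ≤ ‖x - y‖)
    (zs : H) (hzs : T zs = zs)
    (lam : ℕ → ℝ) (ε : ℕ → H) (z : ℕ → H)
    (hlam : ∀ k, lam k ∈ Set.Ioc (0 : ℝ) 1)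
    (hiter : ∀ k, z (k + 1) = z k + lam k • (T (z k) + ε k - z k))
    (e : ℕ → H) (he : ∀ k, e k = z k - T (z k))
    (τ : ℕ → ℝ) (hτ : ∀ k, τ k = lam k * (1 - lam k))
    (ν₁ : ℝ)
    (hν₁ : ∀ k, 2 * ‖lam k • T (z k) + (1 - lam k) • z k - zs‖ + lam k * ‖ε k‖ ≤ ν₁) :
    ∀ k, ‖z (k + 1) - zs‖ ^ 2 ≤
      ‖z k - zs‖ ^ 2 - τ k * ‖e k‖ ^ 2 + ν₁ * (lam k * ‖ε k‖) := by
  intro k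
  set l := lam k with hl
  obtain ⟨hl0, hl1⟩ := hlam k
  set a : H := l • T (z k) + (1 - l) • z k - zs with ha
  set b : H := l • ε k with hb
  have hsplit : z (k + 1) - zs = a + b := by
    rw [hiter k, ha, hb]
    simp only [smul_sub, smul_add, sub_smul, one_smul]
    abel
  -- bound ‖a‖²
  have hacc : a = l • (T (z k) - zs) + (1 - l) • (z k - zs) := by
    rw [ha]; simp only [smul_sub, sub_smul, one_smul]; abel
  have hu : ‖T (z k) - zs‖ ≤ ‖z k - zs‖ := by
    have := hT (z k) zs; rwa [hzs] at this
  have ha2 : ‖a‖ ^ 2 ≤ ‖z k - zs‖ ^ 2 - τ k * ‖e k‖ ^ 2 := by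
    rw [hacc, convex_comb_sq, hτ k, he k]
    have he2 : ‖T (z k) - zs - (z k - zs)‖ = ‖z k - T (z k)‖ := by
      rw [show T (z k) - zs - (z k - zs) = -(z k - T (z k)) by abel, norm_neg]
    rw [he2]
    have h1 : l * ‖T (z k) - zs‖ ^ 2 ≤ l * ‖z k - zs‖ ^ 2 := by
      apply mul_le_mul_of_nonneg_left _ hl0.le
      exact pow_le_pow_left₀ (norm_nonneg _) hu 2
    linarith
  -- bound cross terms
  have hbn : ‖b‖ = l * ‖ε k‖ := by
    rw [hb, norm_smul, Real.norm_eq_abs, abs_of_pos hl0]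
  have key : ‖a + b‖ ^ 2 ≤ ‖a‖ ^ 2 + (2 * ‖a‖ + ‖b‖) * ‖b‖ := norm_add_sq_le a b
  have hnu : 2 * ‖a‖ + ‖b‖ ≤ ν₁ := by rw [hbn]; exact hν₁ k
  have hbn0 : 0 ≤ ‖b‖ := norm_nonneg b
  have : (2 * ‖a‖ + ‖b‖) * ‖b‖ ≤ ν₁ * ‖b‖ := mul_le_mul_of_nonneg_right hnu hbn0
  rw [hsplit]
  calc ‖a + b‖ ^ 2 ≤ ‖a‖ ^ 2 + ν₁ * ‖b‖ := by linarith
    _ ≤ ‖z k - zs‖ ^ 2 - τ k * ‖e k‖ ^ 2 + ν₁ * (l * ‖ε k‖) := by rw [← hbn]; linarith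
end

section
/- Let H be a real Hilbert space and T : H → H an α-averaged operator, α ∈ (0,1), with fixed point z*. Let (z_k) satisfy z_{k+1} = z_k + λ_k(T z_k + ε_k − z_k) with λ_k ∈ (0, 1/α). Set e_k = z_k − T z_k, τ_k = λ_k(1/α − λ_k), and T_{λ_k} = λ_k T + (1−λ_k)Id. If ν₁ is a real number such that ν₁ ≥ 2‖T_{λ_k} z_k − z*‖ + λ_k‖ε_k‖ for every k, then for every k: ‖z_{k+1} − z*‖² ≤ ‖z_k − z*‖² − τ_k‖e_k‖² + ν₁ λ_k‖ε_k‖. -/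
open scoped RealInnerProductSpace

lemma avg_identity {H : Type*} [NormedAddCommGroup H] [InnerProductSpace ℝ H]
    (β : ℝ) (a b : H) :
    ‖β • a + (1 - β) • b‖ ^ 2 =
      β * ‖a‖ ^ 2 + (1 - β) * ‖b‖ ^ 2 - β * (1 - β) * ‖a - b‖ ^ 2 := by
  simp only [← real_inner_self_eq_norm_sq]
  simp only [inner_add_add_self, inner_sub_sub_self, real_inner_smul_left,
    real_inner_smul_right]
  ring

/-- Fejér-type inequality for the inexact Krasnosel'skiĭ–Mann iteration of an `α`-averaged
operator `T` (`α ∈ (0,1)`) with fixed point `z*`, `λ_k ∈ (0, 1/α)`, residual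
`e_k = z_k − T z_k`, `τ_k = λ_k(1/α − λ_k)` and a bound
`ν₁ ≥ 2‖T_{λ_k} z_k − z*‖ + λ_k‖ε_k‖` for all `k`:
`‖z_{k+1} − z*‖² ≤ ‖z_k − z*‖² − τ_k‖e_k‖² + ν₁ λ_k‖ε_k‖`. -/
theorem stmt6 {H : Type*} [NormedAddCommGroup H] [InnerProductSpace ℝ H]
    (T : H → H) (α : ℝ) (hα0 : 0 < α) (hα1 : α < 1)
    (hT : ∃ R : H → H, (∀ x y, ‖R x - R y‖ ≤ ‖x - y‖) ∧
      T = fun x => α • R x + (1 - α) • x)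
    (zs : H) (hzs : T zs = zs)
    (lam : ℕ → ℝ) (ε : ℕ → H) (z : ℕ → H)
    (hlam : ∀ k, lam k ∈ Set.Ioo (0 : ℝ) (1 / α))
    (hiter : ∀ k, z (k + 1) = z k + lam k • (T (z k) + ε k - z k))
    (e : ℕ → H) (he : ∀ k, e k = z k - T (z k))
    (τ : ℕ → ℝ) (hτ : ∀ k, τ k = lam k * (1 / α - lam k))
    (ν₁ : ℝ)
    (hν₁ : ∀ k, 2 * ‖lam k • T (z k) + (1 - lam k) • z k - zs‖ + lam k * ‖ε k‖ ≤ ν₁) :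
    ∀ k, ‖z (k + 1) - zs‖ ^ 2 ≤
      ‖z k - zs‖ ^ 2 - τ k * ‖e k‖ ^ 2 + ν₁ * (lam k * ‖ε k‖) := by
  obtain ⟨R, hR, hTR⟩ := hT
  intro k
  obtain ⟨hl0, hl1⟩ := hlam k
  have hRzs : R zs = zs := by
    have h1 : α • R zs + (1 - α) • zs = zs := by rw [hTR] at hzs; exact hzs
    rw [sub_smul, one_smul] at h1
    have h2 : α • R zs = zs - (zs - α • zs) := eq_sub_of_add_eq h1
    have h3 : α • R zs = α • zs := by rw [h2]; abel
    exact smul_right_injective H (ne_of_gt hα0) h3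
  set w : H := lam k • T (z k) + (1 - lam k) • z k - zs with hw
  -- decomposition of the iterate
  have hsplit : z (k + 1) - zs = w + lam k • ε k := by
    rw [hiter k, hw]
    simp only [smul_add, smul_sub, sub_smul, one_smul]
    abel
  -- norm of λ•ε
  have hnorme : ‖lam k • ε k‖ = lam k * ‖ε k‖ := by
    rw [norm_smul, Real.norm_eq_abs, abs_of_pos hl0]
  have hεnn : 0 ≤ lam k * ‖ε k‖ := by positivity
  -- first estimate: ‖z(k+1)-zs‖² ≤ ‖w‖² + ν₁ * (λ‖ε‖)
  have step1 : ‖z (k + 1) - zs‖ ^ 2 ≤ ‖w‖ ^ 2 + ν₁ * (lam k * ‖ε k‖) := by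
    rw [hsplit, norm_add_sq_real]
    have hcs : (inner ℝ w (lam k • ε k) : ℝ) ≤ ‖w‖ * (lam k * ‖ε k‖) := by
      calc (inner ℝ w (lam k • ε k) : ℝ) ≤ ‖w‖ * ‖lam k • ε k‖ := real_inner_le_norm _ _
        _ = ‖w‖ * (lam k * ‖ε k‖) := by rw [hnorme]
    have hν := hν₁ k
    nlinarith [norm_nonneg w, norm_nonneg (ε k), sq_nonneg (lam k * ‖ε k‖)]
  -- second estimate: ‖w‖² ≤ ‖z k - zs‖² - τ k * ‖e k‖²
  have step2 : ‖w‖ ^ 2 ≤ ‖z k - zs‖ ^ 2 - τ k * ‖e k‖ ^ 2 := by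
    have hwid : w = (lam k * α) • (R (z k) - zs) + (1 - lam k * α) • (z k - zs) := by
      rw [hw, hTR]
      simp only [smul_add, smul_sub, sub_smul, one_smul, mul_smul]
      abel
    have hβ0 : 0 ≤ lam k * α := le_of_lt (mul_pos hl0 hα0)
    have hβ1 : lam k * α ≤ 1 := le_of_lt ((lt_div_iff₀ hα0).mp hl1)
    have hkey := avg_identity (lam k * α) (R (z k) - zs) (z k - zs)
    rw [← hwid] at hkey
    -- nonexpansiveness
    have hne : ‖R (z k) - zs‖ ≤ ‖z k - zs‖ := by
      have := hR (z k) zs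
      rwa [hRzs] at this
    -- residual relation: α • (R z - z) = T z - z, so α ‖Rz - z‖ = ‖e‖
    have hres : α * ‖R (z k) - z k‖ = ‖e k‖ := by
      have h1 : α • (R (z k) - z k) = T (z k) - z k := by
        rw [hTR]
        simp only [smul_sub, sub_smul, one_smul]
        abel
      have h2 : ‖α • (R (z k) - z k)‖ = ‖T (z k) - z k‖ := by rw [h1]
      rw [norm_smul, Real.norm_eq_abs, abs_of_pos hα0] at h2
      rw [h2, he k, norm_sub_rev]
    have hτk : τ k * ‖e k‖ ^ 2 =
        (lam k * α) * (1 - lam k * α) * ‖R (z k) - z k‖ ^ 2 := by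
      rw [hτ k, ← hres]
      field_simp
    have hsimp : (R (z k) - zs) - (z k - zs) = R (z k) - z k := by abel
    rw [hsimp] at hkey
    have hsq : ‖R (z k) - zs‖ ^ 2 ≤ ‖z k - zs‖ ^ 2 :=
      pow_le_pow_left₀ (norm_nonneg _) hne 2
    have hmul : lam k * α * ‖R (z k) - zs‖ ^ 2 ≤ lam k * α * ‖z k - zs‖ ^ 2 :=
      mul_le_mul_of_nonneg_left hsq hβ0
    linarith
  linarith
end

section
/- Let H be a real Hilbert space, T : H → H non-expansive, and let (z_k) satisfy z_{k+1} = z_k + λ_k(T z_k + ε_k − z_k) with λ_k ∈ (0,1]. Set e_k = z_k − T z_k. If ν₂ is a real number with ν₂ ≥ 2‖e_k − e_{k+1}‖ for a given k, then ‖e_{k+1}‖² ≤ ‖e_k‖² + ν₂‖ε_k‖. -/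
/-- Quasi-monotonicity of the residual norms: for the inexact Krasnosel'skiĭ–Mann iteration
of a non-expansive operator `T` with `λ_k ∈ (0,1]` and residual `e_k = z_k − T z_k`, if
`ν₂ ≥ 2‖e_k − e_{k+1}‖` for a given `k`, then `‖e_{k+1}‖² ≤ ‖e_k‖² + ν₂‖ε_k‖`. -/
theorem stmt7 {H : Type*} [NormedAddCommGroup H] [InnerProductSpace ℝ H]
    (T : H → H) (hT : ∀ x y, ‖T x - T y‖ ≤ ‖x - y‖)
    (lam : ℕ → ℝ) (ε : ℕ → H) (z : ℕ → H)
    (hlam : ∀ k, lam k ∈ Set.Ioc (0 : ℝ) 1)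
    (hiter : ∀ k, z (k + 1) = z k + lam k • (T (z k) + ε k - z k))
    (e : ℕ → H) (he : ∀ k, e k = z k - T (z k))
    (k : ℕ) (ν₂ : ℝ) (hν₂ : 2 * ‖e k - e (k + 1)‖ ≤ ν₂) :
    ‖e (k + 1)‖ ^ 2 ≤ ‖e k‖ ^ 2 + ν₂ * ‖ε k‖ := by
  obtain ⟨hl0, hl1⟩ := hlam k
  set d := e k - e (k + 1) with hd
  have hz : z k - z (k + 1) = lam k • (e k - ε k) := by
    rw [hiter k, he k]
    module
  have hTd : T (z k) - T (z (k + 1)) = (z k - z (k + 1)) - d := by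
    rw [hd, he k, he (k + 1)]
    abel
  have h1 : ‖T (z k) - T (z (k + 1))‖ ≤ ‖z k - z (k + 1)‖ := hT _ _
  rw [hTd] at h1
  have h1sq : ‖(z k - z (k + 1)) - d‖ ^ 2 ≤ ‖z k - z (k + 1)‖ ^ 2 :=
    pow_le_pow_left₀ (norm_nonneg _) h1 2
  rw [@norm_sub_sq_real] at h1sq
  -- h1sq : ‖u‖^2 - 2 * ⟪u, d⟫ + ‖d‖^2 ≤ ‖u‖^2
  have hkey : ‖d‖ ^ 2 ≤ 2 * (lam k * inner ℝ (e k - ε k) d) := by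
    have := h1sq
    rw [hz, real_inner_smul_left] at this
    nlinarith [this]
  have hpos : (0 : ℝ) ≤ inner ℝ (e k - ε k) d := by
    nlinarith [sq_nonneg (‖d‖)]
  have hkey2 : ‖d‖ ^ 2 ≤ 2 * inner ℝ (e k - ε k) d := by
    nlinarith
  rw [inner_sub_left] at hkey2
  have hεd : |inner ℝ (ε k) d| ≤ ‖ε k‖ * ‖d‖ := abs_real_inner_le_norm _ _
  have hεd' : -(‖ε k‖ * ‖d‖) ≤ inner ℝ (ε k) d := neg_le_of_abs_le hεd
  have hεnn : (0 : ℝ) ≤ ‖ε k‖ := norm_nonneg _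
  have hek1 : e (k + 1) = e k - d := by rw [hd]; abel
  have hexp : ‖e (k + 1)‖ ^ 2 = ‖e k‖ ^ 2 - 2 * inner ℝ (e k) d + ‖d‖ ^ 2 := by
    rw [hek1, @norm_sub_sq_real]
  rw [hexp]
  nlinarith [mul_le_mul_of_nonneg_left hν₂ hεnn]
end

section
/- (Pointwise iteration-complexity bound.) Let H be a real Hilbert space, T : H → H non-expansive with fixed point z*, and let (z_k) satisfy z_{k+1} = z_k + λ_k(T z_k + ε_k − z_k). Set e_k = z_k − T z_k, τ_k = λ_k(1−λ_k), and T_{λ_k} = λ_k T + (1−λ_k)Id. Assume: (a) there are λ̲, λ̄ with 0 < λ̲ ≤ λ_k ≤ λ̄ < 1 for all k; (b) Σ_k (k+1)‖ε_k‖ < +∞; (c) ν₁ and ν₂ are real numbers with ν₁ ≥ 2‖T_{λ_k} z_k − z*‖ + λ_k‖ε_k‖ and ν₂ ≥ 2‖e_k − e_{k+1}‖ for every k. Let τ̲ = inf_k τ_k, τ̄ = sup_k τ_k, and C₁ = ν₁ Σ_j λ_j‖ε_j‖ + ν₂ τ̄ Σ_ℓ (ℓ+1)‖ε_ℓ‖.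 Then for every k: ‖e_k‖² ≤ (‖z₀ − z*‖² + C₁)/(τ̲ (k+1)). -/
open RealInnerProductSpace Finset

lemma aux_convex_sq {H : Type*} [NormedAddCommGroup H] [InnerProductSpace ℝ H]
    (a b : H) (t : ℝ) :
    ‖t • a + (1 - t) • b‖ ^ 2
      = t * ‖a‖ ^ 2 + (1 - t) * ‖b‖ ^ 2 - t * (1 - t) * ‖a - b‖ ^ 2 := by
  simp only [← real_inner_self_eq_norm_sq]
  simp only [inner_add_left, inner_add_right, inner_sub_left, inner_sub_right,
    real_inner_smul_left, real_inner_smul_right]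
  rw [real_inner_comm b a]
  ring

lemma aux_coco {H : Type*} [NormedAddCommGroup H] [InnerProductSpace ℝ H]
    (T : H → H) (hT : ∀ x y, ‖T x - T y‖ ≤ ‖x - y‖) (x y : H) :
    (2⁻¹ : ℝ) * ‖(x - T x) - (y - T y)‖ ^ 2 ≤ ⟪(x - T x) - (y - T y), x - y⟫ := by
  have hq : ‖T x - T y‖ ^ 2 ≤ ‖x - y‖ ^ 2 :=
    pow_le_pow_left₀ (norm_nonneg _) (hT x y) 2
  have e1 : (x - T x) - (y - T y) = (x - y) - (T x - T y) := by abel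
  rw [e1, norm_sub_sq_real]
  have h2 : ⟪x - y - (T x - T y), x - y⟫ = ‖x - y‖ ^ 2 - ⟪x - y, T x - T y⟫ := by
    rw [inner_sub_left, real_inner_self_eq_norm_sq, real_inner_comm (T x - T y)]
  rw [h2]
  linarith

lemma aux_ident (a : ℕ → ℝ) : ∀ k : ℕ, ((k : ℝ) + 1) * a k
    = ∑ j ∈ range (k + 1), a j
      + ∑ l ∈ range k, ((l : ℝ) + 1) * (a (l + 1) - a l) := by
  intro k
  induction k with
  | zero => simp
  | succ k ih =>
    rw [sum_range_succ a (k + 1),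
      sum_range_succ (fun l => ((l : ℝ) + 1) * (a (l + 1) - a l)) k]
    push_cast
    push_cast at ih
    linear_combination ih


set_option maxHeartbeats 1000000

/-- Pointwise iteration-complexity bound for the inexact Krasnosel'skiĭ–Mann iteration:
under `0 < λ̲ ≤ λ_k ≤ λ̄ < 1`, `Σ (k+1)‖ε_k‖ < +∞`, and uniform bounds `ν₁, ν₂`, one has
`‖e_k‖² ≤ (‖z₀ − z*‖² + C₁)/(τ̲(k+1))` with
`C₁ = ν₁ Σ λ_j‖ε_j‖ + ν₂ τ̄ Σ (ℓ+1)‖ε_ℓ‖`, `τ̲ = inf τ_k`, `τ̄ = sup τ_k`,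
`τ_k = λ_k(1−λ_k)`. -/
theorem stmt8 {H : Type*} [NormedAddCommGroup H] [InnerProductSpace ℝ H]
    (T : H → H) (hT : ∀ x y, ‖T x - T y‖ ≤ ‖x - y‖)
    (zs : H) (hzs : T zs = zs)
    (lam : ℕ → ℝ) (ε : ℕ → H) (z : ℕ → H)
    (hiter : ∀ k, z (k + 1) = z k + lam k • (T (z k) + ε k - z k))
    (e : ℕ → H) (he : ∀ k, e k = z k - T (z k))
    (lamlo lamhi : ℝ) (hlo : 0 < lamlo) (hhi : lamhi < 1)
    (hlam : ∀ k, lamlo ≤ lam k ∧ lam k ≤ lamhi)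
    (herr : Summable (fun k : ℕ => ((k : ℝ) + 1) * ‖ε k‖))
    (ν₁ ν₂ : ℝ)
    (hν₁ : ∀ k, 2 * ‖lam k • T (z k) + (1 - lam k) • z k - zs‖ + lam k * ‖ε k‖ ≤ ν₁)
    (hν₂ : ∀ k, 2 * ‖e k - e (k + 1)‖ ≤ ν₂)
    (τ : ℕ → ℝ) (hτ : ∀ k, τ k = lam k * (1 - lam k))
    (τlo τhi C₁ : ℝ) (hτlo : τlo = ⨅ k, τ k) (hτhi : τhi = ⨆ k, τ k)
    (hC₁ : C₁ = ν₁ * ∑' j, lam j * ‖ε j‖ + ν₂ * τhi * ∑' l : ℕ, ((l : ℝ) + 1) * ‖ε l‖) :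
    ∀ k, ‖e k‖ ^ 2 ≤ (‖z 0 - zs‖ ^ 2 + C₁) / (τlo * ((k : ℝ) + 1)) := by
  -- basic facts about lam and τ
  have hlam0 : ∀ k, 0 < lam k := fun k => lt_of_lt_of_le hlo (hlam k).1
  have hlam1 : ∀ k, lam k < 1 := fun k => lt_of_le_of_lt (hlam k).2 hhi
  have hτc : ∀ k, lamlo * (1 - lamhi) ≤ τ k := by
    intro k; rw [hτ k]
    nlinarith [(hlam k).1, (hlam k).2, hlam0 k, hlam1 k]
  have hτq : ∀ k, τ k ≤ 4⁻¹ := by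
    intro k; rw [hτ k]; nlinarith [sq_nonneg (1 - 2 * lam k)]
  have hcpos : 0 < lamlo * (1 - lamhi) := mul_pos hlo (by linarith)
  have hbddB : BddBelow (Set.range τ) :=
    ⟨lamlo * (1 - lamhi), by rintro _ ⟨k, rfl⟩; exact hτc k⟩
  have hbddA : BddAbove (Set.range τ) :=
    ⟨4⁻¹, by rintro _ ⟨k, rfl⟩; exact hτq k⟩
  have hτlo_pos : 0 < τlo := by
    rw [hτlo]; exact lt_of_lt_of_le hcpos (le_ciInf hτc)
  have hτlo_le : ∀ k, τlo ≤ τ k := fun k => hτlo ▸ ciInf_le hbddB k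
  have hτhi_ge : ∀ k, τ k ≤ τhi := fun k => hτhi ▸ le_ciSup hbddA k
  have hτlohi : τlo ≤ τhi := (hτlo_le 0).trans (hτhi_ge 0)
  have hν₁0 : 0 ≤ ν₁ := by
    have := hν₁ 0
    nlinarith [norm_nonneg (lam 0 • T (z 0) + (1 - lam 0) • z 0 - zs),
      norm_nonneg (ε 0), hlam0 0]
  have hν₂0 : 0 ≤ ν₂ := le_trans (by positivity) (hν₂ 0)
  -- summability of lam j * ‖ε j‖
  have hsummA : Summable (fun j : ℕ => lam j * ‖ε j‖) := by
    apply Summable.of_nonneg_of_le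
      (fun j => mul_nonneg (hlam0 j).le (norm_nonneg _)) _ herr
    intro j
    have h1 : lam j ≤ (j : ℝ) + 1 := by
      have : (0:ℝ) ≤ (j : ℝ) := Nat.cast_nonneg j
      linarith [hlam1 j]
    exact mul_le_mul_of_nonneg_right h1 (norm_nonneg _)
  -- rewritten iteration
  have hz' : ∀ k, z (k + 1) = lam k • T (z k) + (1 - lam k) • z k + lam k • ε k := by
    intro k; rw [hiter k]; module
  -- Fejér-type inequality
  have fejer : ∀ k, τ k * ‖e k‖ ^ 2 + ‖z (k + 1) - zs‖ ^ 2
      ≤ ‖z k - zs‖ ^ 2 + ν₁ * (lam k * ‖ε k‖) := by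
    intro k
    have hub : lam k • T (z k) + (1 - lam k) • z k - zs
        = lam k • (T (z k) - zs) + (1 - lam k) • (z k - zs) := by module
    have h1 : ‖lam k • T (z k) + (1 - lam k) • z k - zs‖ ^ 2
        = lam k * ‖T (z k) - zs‖ ^ 2 + (1 - lam k) * ‖z k - zs‖ ^ 2
          - lam k * (1 - lam k) * ‖(T (z k) - zs) - (z k - zs)‖ ^ 2 := by
      rw [hub, aux_convex_sq]
    have hTz : ‖T (z k) - zs‖ ≤ ‖z k - zs‖ := by
      have := hT (z k) zs; rwa [hzs] at this
    have he' : (T (z k) - zs) - (z k - zs) = -(e k) := by rw [he k]; abel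
    have h2 : ‖lam k • T (z k) + (1 - lam k) • z k - zs‖ ^ 2
        ≤ ‖z k - zs‖ ^ 2 - τ k * ‖e k‖ ^ 2 := by
      rw [h1, he', norm_neg, hτ k]
      have hTz2 : ‖T (z k) - zs‖ ^ 2 ≤ ‖z k - zs‖ ^ 2 :=
        pow_le_pow_left₀ (norm_nonneg _) hTz 2
      nlinarith [mul_le_mul_of_nonneg_left hTz2 (hlam0 k).le]
    have h3 : ‖z (k + 1) - zs‖
        ≤ ‖lam k • T (z k) + (1 - lam k) • z k - zs‖ + lam k * ‖ε k‖ := by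
      have hdec : z (k + 1) - zs
          = (lam k • T (z k) + (1 - lam k) • z k - zs) + lam k • ε k := by
        rw [hz' k]; abel
      rw [hdec]
      calc ‖(lam k • T (z k) + (1 - lam k) • z k - zs) + lam k • ε k‖
          ≤ ‖lam k • T (z k) + (1 - lam k) • z k - zs‖ + ‖lam k • ε k‖ :=
            norm_add_le _ _
        _ = ‖lam k • T (z k) + (1 - lam k) • z k - zs‖ + lam k * ‖ε k‖ := by
            rw [norm_smul, Real.norm_eq_abs, abs_of_pos (hlam0 k)]
    have h4 : ‖z (k + 1) - zs‖ ^ 2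
        ≤ ‖lam k • T (z k) + (1 - lam k) • z k - zs‖ ^ 2 + ν₁ * (lam k * ‖ε k‖) := by
      have hsq : ‖z (k + 1) - zs‖ ^ 2
          ≤ (‖lam k • T (z k) + (1 - lam k) • z k - zs‖ + lam k * ‖ε k‖) ^ 2 :=
        pow_le_pow_left₀ (norm_nonneg _) h3 2
      have hν := hν₁ k
      nlinarith [mul_nonneg (hlam0 k).le (norm_nonneg (ε k)),
        norm_nonneg (lam k • T (z k) + (1 - lam k) • z k - zs)]
    linarith
  -- summed Fejér inequality
  have fejer_sum : ∀ k, ∑ j ∈ range (k + 1), τ j * ‖e j‖ ^ 2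
      ≤ ‖z 0 - zs‖ ^ 2 + ν₁ * ∑' j, lam j * ‖ε j‖ := by
    intro k
    have key : ∀ n, ∑ j ∈ range n, τ j * ‖e j‖ ^ 2 + ‖z n - zs‖ ^ 2
        ≤ ‖z 0 - zs‖ ^ 2 + ν₁ * ∑ j ∈ range n, lam j * ‖ε j‖ := by
      intro n
      induction n with
      | zero => simp
      | succ n ih =>
        rw [sum_range_succ, sum_range_succ, mul_add]
        linarith [fejer n]
    have h := key (k + 1)
    have h2 : ∑ j ∈ range (k + 1), lam j * ‖ε j‖ ≤ ∑' j, lam j * ‖ε j‖ :=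
      Summable.sum_le_tsum _ (fun j _ => mul_nonneg (hlam0 j).le (norm_nonneg _)) hsummA
    nlinarith [sq_nonneg ‖z (k + 1) - zs‖, mul_le_mul_of_nonneg_left h2 hν₁0]
  -- quasi-monotonicity of the residual
  have hdelta : ∀ l, ‖e (l + 1)‖ ^ 2 - ‖e l‖ ^ 2 ≤ ν₂ * ‖ε l‖ := by
    intro l
    have hc := aux_coco T hT (z (l + 1)) (z l)
    rw [← he (l + 1), ← he l] at hc
    have hzz : z (l + 1) - z l = lam l • (ε l - e l) := by
      rw [hiter l, he l]; module
    rw [hzz, real_inner_smul_right, inner_sub_right] at hc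
    have hΔ : ‖e (l + 1)‖ ^ 2
        = ‖e l‖ ^ 2 + 2 * ⟪e l, e (l + 1) - e l⟫ + ‖e (l + 1) - e l‖ ^ 2 := by
      have h6 := norm_add_sq_real (e l) (e (l + 1) - e l)
      have h5 : e l + (e (l + 1) - e l) = e (l + 1) := by abel
      rw [h5] at h6
      exact h6
    have hCS : ⟪e (l + 1) - e l, ε l⟫ ≤ ‖e (l + 1) - e l‖ * ‖ε l‖ :=
      real_inner_le_norm _ _
    have hdn : 2 * ‖e (l + 1) - e l‖ ≤ ν₂ := by
      have := hν₂ l; rwa [norm_sub_rev] at this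
    have hcomm : ⟪e l, e (l + 1) - e l⟫ = ⟪e (l + 1) - e l, e l⟫ :=
      real_inner_comm _ _
    have key : lam l * (‖e (l + 1)‖ ^ 2 - ‖e l‖ ^ 2) ≤ lam l * (ν₂ * ‖ε l‖) := by
      rw [hΔ, hcomm]
      nlinarith [hc, hCS, hdn, hlam0 l, hlam1 l, norm_nonneg (ε l),
        norm_nonneg (e (l + 1) - e l), sq_nonneg ‖e (l + 1) - e l‖,
        mul_nonneg (hlam0 l).le (norm_nonneg (ε l))]
    exact le_of_mul_le_mul_left key (hlam0 l)
  -- final assembly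
  intro k
  have hkpos : (0:ℝ) < τlo * ((k : ℝ) + 1) := by positivity
  rw [le_div_iff₀ hkpos]
  have main : τlo * (((k : ℝ) + 1) * ‖e k‖ ^ 2) ≤ ‖z 0 - zs‖ ^ 2 + C₁ := by
    rw [aux_ident (fun j => ‖e j‖ ^ 2) k, mul_add]
    have t1 : τlo * ∑ j ∈ range (k + 1), ‖e j‖ ^ 2
        ≤ ∑ j ∈ range (k + 1), τ j * ‖e j‖ ^ 2 := by
      rw [mul_sum]
      exact sum_le_sum fun j _ => mul_le_mul_of_nonneg_right (hτlo_le j) (sq_nonneg _)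
    have t2 : τlo * ∑ l ∈ range k, ((l : ℝ) + 1) * (‖e (l + 1)‖ ^ 2 - ‖e l‖ ^ 2)
        ≤ ν₂ * τhi * ∑' l : ℕ, ((l : ℝ) + 1) * ‖ε l‖ := by
      have step : ∀ l : ℕ, τlo * (((l : ℝ) + 1) * (‖e (l + 1)‖ ^ 2 - ‖e l‖ ^ 2))
          ≤ ν₂ * τhi * (((l : ℝ) + 1) * ‖ε l‖) := by
        intro l
        have hl1 : (0:ℝ) ≤ (l : ℝ) + 1 := by positivity
        rcases le_or_gt (‖e (l + 1)‖ ^ 2 - ‖e l‖ ^ 2) 0 with h | h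
        · have hL : τlo * (((l : ℝ) + 1) * (‖e (l + 1)‖ ^ 2 - ‖e l‖ ^ 2)) ≤ 0 := by
            apply mul_nonpos_of_nonneg_of_nonpos hτlo_pos.le
            exact mul_nonpos_of_nonneg_of_nonpos hl1 h
          have hR : 0 ≤ ν₂ * τhi * (((l : ℝ) + 1) * ‖ε l‖) := by
            apply mul_nonneg (mul_nonneg hν₂0 (hτlo_pos.le.trans hτlohi))
            positivity
          linarith
        · have hτhi0 : 0 ≤ τhi := hτlo_pos.le.trans hτlohi
          calc τlo * (((l : ℝ) + 1) * (‖e (l + 1)‖ ^ 2 - ‖e l‖ ^ 2))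
              ≤ τhi * (((l : ℝ) + 1) * (‖e (l + 1)‖ ^ 2 - ‖e l‖ ^ 2)) :=
                mul_le_mul_of_nonneg_right hτlohi (mul_nonneg hl1 h.le)
            _ ≤ τhi * (((l : ℝ) + 1) * (ν₂ * ‖ε l‖)) :=
                mul_le_mul_of_nonneg_left
                  (mul_le_mul_of_nonneg_left (hdelta l) hl1) hτhi0
            _ = ν₂ * τhi * (((l : ℝ) + 1) * ‖ε l‖) := by ring
      calc τlo * ∑ l ∈ range k, ((l : ℝ) + 1) * (‖e (l + 1)‖ ^ 2 - ‖e l‖ ^ 2)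
          = ∑ l ∈ range k, τlo * (((l : ℝ) + 1) * (‖e (l + 1)‖ ^ 2 - ‖e l‖ ^ 2)) := by
            rw [mul_sum]
        _ ≤ ∑ l ∈ range k, ν₂ * τhi * (((l : ℝ) + 1) * ‖ε l‖) :=
            sum_le_sum fun l _ => step l
        _ = ν₂ * τhi * ∑ l ∈ range k, ((l : ℝ) + 1) * ‖ε l‖ := by rw [mul_sum]
        _ ≤ ν₂ * τhi * ∑' l : ℕ, ((l : ℝ) + 1) * ‖ε l‖ := by
            apply mul_le_mul_of_nonneg_left
              (Summable.sum_le_tsum _ (fun l _ => by positivity) herr)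
              (mul_nonneg hν₂0 (hτlo_pos.le.trans hτlohi))
    rw [hC₁]
    linarith [fejer_sum k, t1, t2]
  calc ‖e k‖ ^ 2 * (τlo * ((k : ℝ) + 1)) = τlo * (((k : ℝ) + 1) * ‖e k‖ ^ 2) := by ring
    _ ≤ ‖z 0 - zs‖ ^ 2 + C₁ := main
end

section
/- Let H be a real Hilbert space, T : H → H non-expansive with fixed point z*, and let (z_k) be generated by the exact Krasnosel'skiĭ–Mann iteration z_{k+1} = z_k + λ_k(T z_k − z_k) with λ_k ∈ (0,1]. Set e_k = z_k − T z_k and τ_k = λ_k(1−λ_k). Then the sequence (‖e_k‖) is non-increasing, and for every k with Σ_{j=0}^{k} τ_j > 0 one has ‖e_k‖ ≤ ‖z₀ − z*‖ / √(Σ_{j=0}^{k} τ_j). -/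
/-- For the exact Krasnosel'skiĭ–Mann iteration of a non-expansive operator `T` with fixed
point `z*` and `λ_k ∈ (0,1]`, the residual norms `‖e_k‖` are non-increasing, and whenever
`Σ_{j=0}^{k} τ_j > 0` one has `‖e_k‖ ≤ ‖z₀ − z*‖ / √(Σ_{j=0}^{k} τ_j)`,
where `e_k = z_k − T z_k` and `τ_k = λ_k(1−λ_k)`. -/
theorem stmt9 {H : Type*} [NormedAddCommGroup H] [InnerProductSpace ℝ H]
    (T : H → H) (hT : ∀ x y, ‖T x - T y‖ ≤ ‖x - y‖)
    (zs : H) (hzs : T zs = zs)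
    (lam : ℕ → ℝ) (z : ℕ → H)
    (hlam : ∀ k, lam k ∈ Set.Ioc (0 : ℝ) 1)
    (hiter : ∀ k, z (k + 1) = z k + lam k • (T (z k) - z k))
    (e : ℕ → H) (he : ∀ k, e k = z k - T (z k))
    (τ : ℕ → ℝ) (hτ : ∀ k, τ k = lam k * (1 - lam k)) :
    (∀ k, ‖e (k + 1)‖ ≤ ‖e k‖) ∧
    (∀ k, 0 < ∑ j ∈ Finset.range (k + 1), τ j →
      ‖e k‖ ≤ ‖z 0 - zs‖ / Real.sqrt (∑ j ∈ Finset.range (k + 1), τ j)) := by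
  have hlam0 : ∀ k, 0 < lam k := fun k => (hlam k).1
  have hlam1 : ∀ k, lam k ≤ 1 := fun k => (hlam k).2
  have hτnn : ∀ k, 0 ≤ τ k := by
    intro k; rw [hτ k]
    have := hlam0 k; have := hlam1 k; nlinarith
  -- monotonicity of residuals
  have hmono : ∀ k, ‖e (k + 1)‖ ≤ ‖e k‖ := by
    intro k
    have hrepr : e (k + 1) = (1 - lam k) • e k + (T (z k) - T (z (k + 1))) := by
      rw [he (k + 1), he k, hiter k]
      module
    have hdiff : z k - z (k + 1) = lam k • e k := by
      rw [hiter k, he k]; module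
    calc ‖e (k + 1)‖ ≤ ‖(1 - lam k) • e k‖ + ‖T (z k) - T (z (k + 1))‖ := by
          rw [hrepr]; exact norm_add_le _ _
      _ ≤ (1 - lam k) * ‖e k‖ + lam k * ‖e k‖ := by
          refine add_le_add ?_ ?_
          · rw [norm_smul, Real.norm_eq_abs, abs_of_nonneg (by linarith [hlam1 k])]
          · calc ‖T (z k) - T (z (k + 1))‖ ≤ ‖z k - z (k + 1)‖ := hT _ _
              _ = lam k * ‖e k‖ := by
                  rw [hdiff, norm_smul, Real.norm_eq_abs, abs_of_pos (hlam0 k)]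
      _ = ‖e k‖ := by ring
  have hanti : ∀ j k : ℕ, j ≤ k → ‖e k‖ ≤ ‖e j‖ := by
    intro j k h
    induction h with
    | refl => exact le_rfl
    | step h ih => exact le_trans (hmono _) ih
  -- Fejér inequality
  have hfejer : ∀ k, ‖z (k + 1) - zs‖ ^ 2 ≤ ‖z k - zs‖ ^ 2 - τ k * ‖e k‖ ^ 2 := by
    intro k
    have hkey : ‖e k‖ ^ 2 / 2 ≤ inner ℝ (z k - zs) (e k) := by
      have h1 : ‖T (z k) - zs‖ ≤ ‖z k - zs‖ := by
        have := hT (z k) zs; rwa [hzs] at this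
      have h2 : T (z k) - zs = (z k - zs) - e k := by rw [he k]; abel
      have h3 : ‖(z k - zs) - e k‖ ^ 2 ≤ ‖z k - zs‖ ^ 2 := by
        rw [← h2]; exact pow_le_pow_left₀ (norm_nonneg _) h1 2
      rw [@norm_sub_sq_real] at h3
      linarith
    have hz1 : z (k + 1) - zs = (z k - zs) - lam k • e k := by
      rw [hiter k, he k]; module
    have hns : ‖lam k • e k‖ = lam k * ‖e k‖ := by
      rw [norm_smul, Real.norm_eq_abs, abs_of_pos (hlam0 k)]
    rw [hz1, @norm_sub_sq_real, inner_smul_right, hns, hτ k]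
    have h5 : lam k * (‖e k‖ ^ 2 / 2) ≤ lam k * inner ℝ (z k - zs) (e k) :=
      mul_le_mul_of_nonneg_left hkey (le_of_lt (hlam0 k))
    nlinarith [hlam0 k, sq_nonneg ‖e k‖]
  -- summed inequality
  have H : ∀ n : ℕ, ‖z n - zs‖ ^ 2 + ∑ j ∈ Finset.range n, τ j * ‖e j‖ ^ 2
      ≤ ‖z 0 - zs‖ ^ 2 := by
    intro n
    induction n with
    | zero => simp
    | succ n ih =>
      rw [Finset.sum_range_succ]
      have := hfejer n
      linarith
  refine ⟨hmono, ?_⟩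
  intro k hS
  set S := ∑ j ∈ Finset.range (k + 1), τ j with hSdef
  have hbound : S * ‖e k‖ ^ 2 ≤ ‖z 0 - zs‖ ^ 2 := by
    have h1 : S * ‖e k‖ ^ 2 = ∑ j ∈ Finset.range (k + 1), τ j * ‖e k‖ ^ 2 := by
      rw [hSdef, Finset.sum_mul]
    rw [h1]
    have h2 : ∑ j ∈ Finset.range (k + 1), τ j * ‖e k‖ ^ 2
        ≤ ∑ j ∈ Finset.range (k + 1), τ j * ‖e j‖ ^ 2 := by
      refine Finset.sum_le_sum ?_
      intro j hj
      have hjk : j ≤ k := Nat.lt_succ_iff.mp (Finset.mem_range.mp hj)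
      exact mul_le_mul_of_nonneg_left
        (pow_le_pow_left₀ (norm_nonneg _) (hanti j k hjk) 2) (hτnn j)
    have h3 := H (k + 1)
    have h4 : (0:ℝ) ≤ ‖z (k + 1) - zs‖ ^ 2 := sq_nonneg _
    linarith
  have hsqrtS : 0 < Real.sqrt S := Real.sqrt_pos.mpr hS
  rw [le_div_iff₀ hsqrtS]
  have heq : ‖e k‖ * Real.sqrt S = Real.sqrt (‖e k‖ ^ 2 * S) := by
    rw [Real.sqrt_mul (sq_nonneg _), Real.sqrt_sq (norm_nonneg _)]
  rw [heq]
  calc Real.sqrt (‖e k‖ ^ 2 * S) ≤ Real.sqrt (‖z 0 - zs‖ ^ 2) :=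
        Real.sqrt_le_sqrt (by nlinarith)
    _ = ‖z 0 - zs‖ := Real.sqrt_sq (norm_nonneg _)
end

section
/- (Ergodic iteration-complexity bound.) Let H be a real Hilbert space, T : H → H non-expansive with fixed point z*, and let (z_k) satisfy z_{k+1} = z_k + λ_k(T z_k + ε_k − z_k) with λ_k ∈ (0,1]. Set e_k = z_k − T z_k, Λ_k = Σ_{j=0}^{k} λ_j, and ē_k = (1/Λ_k) Σ_{j=0}^{k} λ_j e_j. If C₂ = Σ_k λ_k‖ε_k‖ < +∞, then for every k with Λ_k > 0: ‖ē_k‖ ≤ 2(‖z₀ − z*‖ + C₂)/Λ_k. -/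
/-- Ergodic iteration-complexity bound for the inexact Krasnosel'skiĭ–Mann iteration:
if `C₂ = Σ λ_k‖ε_k‖ < +∞`, then `‖ē_k‖ ≤ 2(‖z₀ − z*‖ + C₂)/Λ_k` whenever `Λ_k > 0`,
where `Λ_k = Σ_{j=0}^{k} λ_j` and `ē_k = (1/Λ_k) Σ_{j=0}^{k} λ_j e_j`,
`e_j = z_j − T z_j`. -/
theorem stmt10 {H : Type*} [NormedAddCommGroup H] [InnerProductSpace ℝ H]
    (T : H → H) (hT : ∀ x y, ‖T x - T y‖ ≤ ‖x - y‖)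
    (zs : H) (hzs : T zs = zs)
    (lam : ℕ → ℝ) (ε : ℕ → H) (z : ℕ → H)
    (hlam : ∀ k, lam k ∈ Set.Ioc (0 : ℝ) 1)
    (hiter : ∀ k, z (k + 1) = z k + lam k • (T (z k) + ε k - z k))
    (e : ℕ → H) (he : ∀ k, e k = z k - T (z k))
    (Λ : ℕ → ℝ) (hΛ : ∀ k, Λ k = ∑ j ∈ Finset.range (k + 1), lam j)
    (ebar : ℕ → H) (hebar : ∀ k, ebar k = (Λ k)⁻¹ • ∑ j ∈ Finset.range (k + 1), lam j • e j)
    (herr : Summable (fun k => lam k * ‖ε k‖))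
    (C₂ : ℝ) (hC₂ : C₂ = ∑' k, lam k * ‖ε k‖) :
    ∀ k, 0 < Λ k → ‖ebar k‖ ≤ 2 * (‖z 0 - zs‖ + C₂) / Λ k := by
  have hεnn : ∀ j, 0 ≤ lam j * ‖ε j‖ := fun j => mul_nonneg (hlam j).1.le (norm_nonneg _)
  have hstep : ∀ j, ‖z (j+1) - zs‖ ≤ ‖z j - zs‖ + lam j * ‖ε j‖ := by
    intro j
    have h1 : z (j+1) - zs
        = ((1 - lam j) • (z j - zs) + lam j • (T (z j) - zs)) + lam j • ε j := by
      rw [hiter]; module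
    have h2 : ‖T (z j) - zs‖ ≤ ‖z j - zs‖ := by
      have := hT (z j) zs; rwa [hzs] at this
    calc ‖z (j+1) - zs‖
        ≤ ‖(1 - lam j) • (z j - zs) + lam j • (T (z j) - zs)‖ + ‖lam j • ε j‖ := by
          rw [h1]; exact norm_add_le _ _
      _ ≤ (‖(1 - lam j) • (z j - zs)‖ + ‖lam j • (T (z j) - zs)‖) + ‖lam j • ε j‖ := by
          gcongr; exact norm_add_le _ _
      _ ≤ ((1 - lam j) * ‖z j - zs‖ + lam j * ‖z j - zs‖) + lam j * ‖ε j‖ := by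
          rw [norm_smul, norm_smul, norm_smul,
            Real.norm_of_nonneg (by linarith [(hlam j).2]),
            Real.norm_of_nonneg (hlam j).1.le]
          gcongr
          exact (hlam j).1.le
      _ = ‖z j - zs‖ + lam j * ‖ε j‖ := by ring
  have hbound : ∀ k, ‖z (k+1) - zs‖
      ≤ ‖z 0 - zs‖ + ∑ j ∈ Finset.range (k+1), lam j * ‖ε j‖ := by
    intro k
    induction k with
    | zero => simpa using hstep 0
    | succ n ih =>
      rw [Finset.sum_range_succ]
      have := hstep (n+1)
      linarith
  have hpart : ∀ k, ∑ j ∈ Finset.range (k+1), lam j * ‖ε j‖ ≤ C₂ := by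
    intro k
    rw [hC₂]
    exact Summable.sum_le_tsum _ (fun j _ => hεnn j) herr
  have htel : ∀ k, ∑ j ∈ Finset.range (k+1), lam j • e j
      = (z 0 - z (k+1)) + ∑ j ∈ Finset.range (k+1), lam j • ε j := by
    intro k
    induction k with
    | zero =>
      simp only [zero_add, Finset.sum_range_one, he 0, hiter 0]
      module
    | succ n ih =>
      rw [Finset.sum_range_succ, ih, Finset.sum_range_succ (fun j => lam j • ε j) (n+1),
        he, hiter (n+1)]
      module
  intro k hk
  have hεsum : ‖∑ j ∈ Finset.range (k+1), lam j • ε j‖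
      ≤ ∑ j ∈ Finset.range (k+1), lam j * ‖ε j‖ := by
    refine (norm_sum_le _ _).trans (Finset.sum_le_sum fun j _ => ?_)
    rw [norm_smul, Real.norm_of_nonneg (hlam j).1.le]
  have hmain : ‖∑ j ∈ Finset.range (k+1), lam j • e j‖ ≤ 2 * (‖z 0 - zs‖ + C₂) := by
    rw [htel]
    calc ‖(z 0 - z (k+1)) + ∑ j ∈ Finset.range (k+1), lam j • ε j‖
        ≤ ‖z 0 - z (k+1)‖ + ‖∑ j ∈ Finset.range (k+1), lam j • ε j‖ := norm_add_le _ _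
      _ ≤ (‖z 0 - zs‖ + ‖z (k+1) - zs‖) + ∑ j ∈ Finset.range (k+1), lam j * ‖ε j‖ := by
          gcongr
          have : z 0 - z (k+1) = (z 0 - zs) - (z (k+1) - zs) := by abel
          rw [this]; exact norm_sub_le _ _
      _ ≤ 2 * (‖z 0 - zs‖ + C₂) := by
          have h1 := hbound k
          have h2 := hpart k
          linarith
  rw [hebar, norm_smul, Real.norm_of_nonneg (inv_nonneg.2 hk.le), div_eq_inv_mul]
  gcongr
end

section
/- Let H be a real Hilbert space, T : H → H non-expansive with fixed point z*, and let (z_k) be generated by the exact Krasnosel'skiĭ–Mann iteration z_{k+1} = z_k + λ_k(T z_k − z_k). If there are λ̲, λ̄ with 0 < λ̲ ≤ λ_k ≤ λ̄ < 1 for all k, then with τ̲ = inf_k λ_k(1−λ_k) and v_k = z_k − z_{k+1}, one has for every k: ‖v_k‖ ≤ ‖z₀ − z*‖ / √(τ̲ (k+1)). -/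
lemma km_key {H : Type*} [NormedAddCommGroup H] [InnerProductSpace ℝ H]
    (a b : H) (l : ℝ) (hb : ‖b‖ ≤ ‖a‖) (h0 : 0 ≤ l) (h1 : l ≤ 1) :
    ‖a + l • (b - a)‖ ^ 2 + l * (1 - l) * ‖b - a‖ ^ 2 ≤ ‖a‖ ^ 2 := by
  have e1 := norm_add_sq_real a (l • (b - a))
  have e2 := norm_add_sq_real a (b - a)
  rw [real_inner_smul_right] at e1
  have e3 : ‖l • (b - a)‖ = |l| * ‖b - a‖ := by rw [norm_smul]; simp
  have e4 : a + (b - a) = b := by abel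
  rw [e4] at e2
  have hbb : ‖b‖ ^ 2 ≤ ‖a‖ ^ 2 := by
    have := norm_nonneg b; nlinarith
  rw [e3, abs_of_nonneg h0] at e1
  nlinarith [norm_nonneg (b - a), sq_nonneg (l * ‖b - a‖)]

/-- For the exact Krasnosel'skiĭ–Mann iteration of a non-expansive operator `T` with fixed
point `z*` and `0 < λ̲ ≤ λ_k ≤ λ̄ < 1`, with `τ̲ = inf_k λ_k(1−λ_k)` and
`v_k = z_k − z_{k+1}`, one has `‖v_k‖ ≤ ‖z₀ − z*‖ / √(τ̲(k+1))` for every `k`. -/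
theorem stmt11 {H : Type*} [NormedAddCommGroup H] [InnerProductSpace ℝ H]
    (T : H → H) (hT : ∀ x y, ‖T x - T y‖ ≤ ‖x - y‖)
    (zs : H) (hzs : T zs = zs)
    (lam : ℕ → ℝ) (z : ℕ → H)
    (hiter : ∀ k, z (k + 1) = z k + lam k • (T (z k) - z k))
    (lamlo lamhi : ℝ) (hlo : 0 < lamlo) (hhi : lamhi < 1)
    (hlam : ∀ k, lamlo ≤ lam k ∧ lam k ≤ lamhi)
    (τlo : ℝ) (hτlo : τlo = ⨅ k, lam k * (1 - lam k))
    (v : ℕ → H) (hv : ∀ k, v k = z k - z (k + 1)) :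
    ∀ k, ‖v k‖ ≤ ‖z 0 - zs‖ / Real.sqrt (τlo * ((k : ℝ) + 1)) := by
  set r : ℕ → H := fun k => T (z k) - z k with hr
  set D : ℝ := ‖z 0 - zs‖ with hD
  have hl0 : ∀ k, 0 ≤ lam k := fun k => hlo.le.trans (hlam k).1
  have hl1 : ∀ k, lam k ≤ 1 := fun k => (hlam k).2.trans hhi.le
  -- τlo bounds
  have hbdd : BddBelow (Set.range fun k => lam k * (1 - lam k)) := by
    refine ⟨0, ?_⟩
    rintro x ⟨k, rfl⟩
    show (0:ℝ) ≤ lam k * (1 - lam k)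
    have := hl0 k; have := hl1 k; nlinarith
  have hτle : ∀ k, τlo ≤ lam k * (1 - lam k) := by
    intro k; rw [hτlo]; exact ciInf_le hbdd k
  have hτpos : 0 < τlo := by
    rw [hτlo]
    have : (0:ℝ) < lamlo * (1 - lamhi) := by nlinarith
    refine lt_of_lt_of_le this (le_ciInf fun k => ?_)
    have h1 := (hlam k).1; have h2 := (hlam k).2
    nlinarith
  -- Fejér inequality
  have fejer : ∀ k, ‖z (k+1) - zs‖ ^ 2 + lam k * (1 - lam k) * ‖r k‖ ^ 2
      ≤ ‖z k - zs‖ ^ 2 := by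
    intro k
    have hb : ‖T (z k) - zs‖ ≤ ‖z k - zs‖ := by
      have := hT (z k) zs; rwa [hzs] at this
    have key := km_key (z k - zs) (T (z k) - zs) (lam k) hb (hl0 k) (hl1 k)
    have e1 : T (z k) - zs - (z k - zs) = r k := by rw [hr]; abel_nf
    have e2 : z k - zs + lam k • r k = z (k+1) - zs := by
      rw [← e1, hiter k]; abel
    rw [e1, e2] at key
    exact key
  -- residual monotone
  have rmono : ∀ k, ‖r (k+1)‖ ≤ ‖r k‖ := by
    intro k
    have h1 : ‖T (z (k+1)) - T (z k)‖ ≤ ‖z (k+1) - z k‖ := hT _ _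
    have h2 : ‖z (k+1) - z k‖ = lam k * ‖r k‖ := by
      rw [hiter k]
      simp [norm_smul, abs_of_nonneg (hl0 k)]
      exact Or.inl rfl
    have h3 : r (k+1) = (T (z (k+1)) - T (z k)) + (1 - lam k) • r k := by
      simp only [hr, hiter k, sub_smul, one_smul]; abel
    calc ‖r (k+1)‖ ≤ ‖T (z (k+1)) - T (z k)‖ + ‖(1 - lam k) • r k‖ := by
          rw [h3]; exact norm_add_le _ _
      _ ≤ lam k * ‖r k‖ + (1 - lam k) * ‖r k‖ := by
          rw [norm_smul, Real.norm_eq_abs, abs_of_nonneg (by linarith [hl1 k])]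
          linarith [h1.trans_eq h2]
      _ = ‖r k‖ := by ring
  have rmono' : ∀ i k, i ≤ k → ‖r k‖ ≤ ‖r i‖ := by
    intro i k hik
    induction k with
    | zero => simp_all
    | succ n ih =>
      rcases Nat.lt_or_ge i (n+1) with h | h
      · exact (rmono n).trans (ih (Nat.lt_succ_iff.mp h))
      · have : i = n + 1 := le_antisymm hik h
        rw [this]
  -- summed bound
  have sum : ∀ k : ℕ, ((k:ℝ) + 1) * (τlo * ‖r k‖ ^ 2) ≤ D ^ 2 - ‖z (k+1) - zs‖ ^ 2 := by
    intro k
    induction k with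
    | zero =>
      have := fejer 0
      have h := hτle 0
      have hrn : (0:ℝ) ≤ ‖r 0‖ ^ 2 := sq_nonneg _
      simp only [Nat.cast_zero, zero_add, one_mul]
      nlinarith
    | succ n ih =>
      have hf := fejer (n+1)
      have h := hτle (n+1)
      have hm : ‖r (n+1)‖ ≤ ‖r n‖ := rmono n
      have hrn : (0:ℝ) ≤ ‖r (n+1)‖ := norm_nonneg _
      have hrn2 : (0:ℝ) ≤ ‖r n‖ := norm_nonneg _
      have hsq : ‖r (n+1)‖ ^ 2 ≤ ‖r n‖ ^ 2 := by nlinarith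
      have hn1 : (0:ℝ) ≤ (n:ℝ) + 1 := by positivity
      push_cast
      nlinarith [mul_le_mul_of_nonneg_left hsq (by positivity : (0:ℝ) ≤ ((n:ℝ)+1) * τlo),
        mul_le_mul_of_nonneg_right h (sq_nonneg ‖r (n+1)‖)]
  intro k
  have hvk : ‖v k‖ ≤ ‖r k‖ := by
    have : v k = -(lam k • r k) := by rw [hv, hiter k]; abel
    rw [this, norm_neg, norm_smul, Real.norm_eq_abs, abs_of_nonneg (hl0 k)]
    nlinarith [norm_nonneg (r k), hl1 k]
  have hc : 0 < τlo * ((k:ℝ) + 1) := by positivity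
  have hkey : τlo * ((k:ℝ) + 1) * ‖r k‖ ^ 2 ≤ D ^ 2 := by
    have := sum k
    nlinarith [sq_nonneg ‖z (k+1) - zs‖]
  have hrk : ‖r k‖ ≤ D / Real.sqrt (τlo * ((k:ℝ) + 1)) := by
    have h1 : ‖r k‖ ^ 2 ≤ D ^ 2 / (τlo * ((k:ℝ) + 1)) := by
      rw [le_div_iff₀ hc]; nlinarith
    calc ‖r k‖ = Real.sqrt (‖r k‖ ^ 2) := (Real.sqrt_sq (norm_nonneg _)).symm
      _ ≤ Real.sqrt (D ^ 2 / (τlo * ((k:ℝ) + 1))) := Real.sqrt_le_sqrt h1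
      _ = D / Real.sqrt (τlo * ((k:ℝ) + 1)) := by
          rw [Real.sqrt_div (sq_nonneg D), Real.sqrt_sq (by rw [hD]; positivity)]
  exact hvk.trans hrk
end

section
/- Under the hypotheses of the local convergence-rate theorem (T non-expansive, Id − T metrically sub-regular at z* ∈ fix T for 0 with modulus κ on a neighborhood Z, z₀ in a ball B_a(z*) with B_{a+C₂}(z*) ⊆ Z, λ_k ∈ (0,1], C₂ = Σ_k λ_k‖ε_k‖ < +∞, and c_k = ν₁λ_k‖ε_k‖ with ν₁ a uniform bound as in that theorem), if moreover Σ_k λ_k(1−λ_k) = +∞, then d_k = d(z_k, fix T) converges to 0. -/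
open Filter

lemma km_identity {H : Type*} [NormedAddCommGroup H] [InnerProductSpace ℝ H]
    (u v w : H) (l : ℝ) :
    ‖(l • u + (1 - l) • v) - w‖ ^ 2 =
      l * ‖u - w‖ ^ 2 + (1 - l) * ‖v - w‖ ^ 2 - l * (1 - l) * ‖u - v‖ ^ 2 := by
  have h : (l • u + (1 - l) • v) - w = l • (u - w) + (1 - l) • (v - w) := by
    module
  rw [h]
  have huv : u - v = (u - w) - (v - w) := by abel
  rw [huv]
  set p := u - w
  set q := v - w
  rw [← real_inner_self_eq_norm_sq, ← real_inner_self_eq_norm_sq,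
    ← real_inner_self_eq_norm_sq, ← real_inner_self_eq_norm_sq]
  simp only [inner_add_left, inner_add_right, inner_sub_left, inner_sub_right,
    real_inner_smul_left, real_inner_smul_right]
  nlinarith [real_inner_comm p q]

lemma le_infDist_aux {H : Type*} [MetricSpace H]
    (x : H) (s : Set H) (hs : s.Nonempty) (b : ℝ) (h : ∀ y ∈ s, b ≤ dist x y) :
    b ≤ Metric.infDist x s := by
  by_contra hc
  push_neg at hc
  obtain ⟨y, hy, hlt⟩ := (Metric.infDist_lt_iff hs).mp hc
  exact absurd (h y hy) (not_le.mpr hlt)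

lemma sq_mono_aux (A B : ℝ) (hB : 0 ≤ B) (h : A ^ 2 ≤ B ^ 2) : A ≤ B := by
  nlinarith

lemma aux_recur (d e β : ℕ → ℝ) (hd0 : ∀ k, 0 ≤ d k) (he0 : ∀ k, 0 ≤ e k)
    (hβ0 : ∀ k, 0 ≤ β k) (hβ1 : ∀ k, β k ≤ 1)
    (hrec : ∀ k, d (k + 1) ≤ (1 - β k) * d k + e k)
    (hβdiv : Tendsto (fun n => ∑ i ∈ Finset.range n, β i) atTop atTop)
    (he : Summable e) : Tendsto d atTop (nhds 0) := by
  set S : ℕ → ℝ := fun n => ∑ i ∈ Finset.range n, β i with hS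
  have key : ∀ N n, N ≤ n →
      d n ≤ Real.exp (S N - S n) * d N + ∑ k ∈ Finset.Ico N n, e k := by
    intro N n hn
    induction n with
    | zero =>
      have : N = 0 := Nat.le_zero.mp hn
      subst this; simp
    | succ n ih =>
      rcases Nat.lt_or_ge N (n + 1) with h | h
      · have hNn : N ≤ n := Nat.lt_succ_iff.mp h
        have ihn := ih hNn
        have h1 : d (n + 1) ≤ (1 - β n) * d n + e n := hrec n
        have h2 : (1 - β n) * d n ≤ (1 - β n) * (Real.exp (S N - S n) * d N + ∑ k ∈ Finset.Ico N n, e k) := by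
          apply mul_le_mul_of_nonneg_left ihn
          linarith [hβ1 n]
        have hexp : (1 - β n) ≤ Real.exp (-(β n)) := by
          have := Real.add_one_le_exp (-(β n)); linarith
        have hSn : S (n + 1) = S n + β n := by
          simp [hS, Finset.sum_range_succ]
        have h3 : (1 - β n) * (Real.exp (S N - S n) * d N) ≤ Real.exp (S N - S (n+1)) * d N := by
          rw [hSn]
          have hdN : 0 ≤ Real.exp (S N - S n) * d N := mul_nonneg (Real.exp_nonneg _) (hd0 N)
          calc (1 - β n) * (Real.exp (S N - S n) * d N)
              ≤ Real.exp (-(β n)) * (Real.exp (S N - S n) * d N) := by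
                apply mul_le_mul_of_nonneg_right hexp hdN
            _ = Real.exp (S N - (S n + β n)) * d N := by
                rw [← mul_assoc, ← Real.exp_add]; ring_nf
        have h4 : (1 - β n) * (∑ k ∈ Finset.Ico N n, e k) ≤ ∑ k ∈ Finset.Ico N n, e k := by
          have hs : 0 ≤ ∑ k ∈ Finset.Ico N n, e k := Finset.sum_nonneg fun k _ => he0 k
          nlinarith [hβ0 n]
        have h5 : (∑ k ∈ Finset.Ico N n, e k) + e n = ∑ k ∈ Finset.Ico N (n+1), e k := by
          rw [Finset.sum_Ico_succ_top hNn]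
        nlinarith
      · have : N = n + 1 := le_antisymm hn h
        subst this
        simp [hd0 (n+1)]
  have htail : Tendsto (fun N => ∑' k, e (k + N)) atTop (nhds 0) := tendsto_sum_nat_add e
  rw [Metric.tendsto_atTop]
  intro εp hεp
  obtain ⟨N, hN⟩ := (Metric.tendsto_atTop.mp htail (εp / 2) (by linarith)).imp (fun N h => h N le_rfl)
  have h0 : 0 ≤ ∑' k, e (k + N) := tsum_nonneg fun k => he0 _
  have hNlt : ∑' k, e (k + N) < εp / 2 := by
    rwa [Real.dist_eq, sub_zero, abs_of_nonneg h0] at hN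
  have hIco : ∀ n, (∑ k ∈ Finset.Ico N n, e k) ≤ ∑' k, e (k + N) := by
    intro n
    rcases Nat.lt_or_ge n N with h | h
    · rw [Finset.Ico_eq_empty (by omega)]
      simp [tsum_nonneg fun k => he0 _]
    · rw [Finset.sum_Ico_eq_sum_range]
      have hsum : Summable fun k => e (k + N) := (summable_nat_add_iff N).mpr he
      calc (∑ i ∈ Finset.range (n - N), e (N + i))
          = ∑ i ∈ Finset.range (n - N), e (i + N) := by
            apply Finset.sum_congr rfl; intro i _; ring_nf
        _ ≤ ∑' k, e (k + N) := Summable.sum_le_tsum _ (fun k _ => he0 _) hsum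
  have hexp0 : Tendsto (fun n => Real.exp (S N - S n) * d N) atTop (nhds 0) := by
    have h1 : Tendsto (fun n => S N - S n) atTop atBot := by
      have := tendsto_atBot_add_const_left atTop (S N) (tendsto_neg_atTop_atBot.comp hβdiv)
      simpa [sub_eq_add_neg] using this
    have := (Real.tendsto_exp_atBot.comp h1).mul_const (d N)
    simpa using this
  obtain ⟨M, hM⟩ := (Metric.tendsto_atTop.mp hexp0 (εp / 2 - (∑' k, e (k + N)))) (by linarith)
  refine ⟨max N M, fun n hn => ?_⟩
  have hnN : N ≤ n := le_trans (le_max_left _ _) hn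
  have hnM : M ≤ n := le_trans (le_max_right _ _) hn
  have h1 := key N n hnN
  have h2 := hM n hnM
  rw [Real.dist_eq, sub_zero] at h2 ⊢
  have hexpnn : 0 ≤ Real.exp (S N - S n) * d N := mul_nonneg (Real.exp_nonneg _) (hd0 N)
  rw [abs_of_nonneg hexpnn] at h2
  rw [abs_of_nonneg (hd0 n)]
  have := hIco n
  linarith

set_option maxHeartbeats 1000000 in
/-- Under the hypotheses of the local convergence-rate theorem (metric sub-regularity of
`Id − T` at `z* ∈ fix T` for `0` on a neighborhood `Z`, iterates starting in a suitable
ball, summable errors), if moreover `Σ_k λ_k(1−λ_k) = +∞`, then `d_k = d(z_k, fix T)`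
converges to `0`. -/
theorem stmt14 {H : Type*} [NormedAddCommGroup H] [InnerProductSpace ℝ H]
    (T : H → H) (hT : ∀ x y, ‖T x - T y‖ ≤ ‖x - y‖)
    (fixT : Set H) (hfixT : fixT = {w | T w = w}) (hne : fixT.Nonempty)
    (zs : H) (hzs : zs ∈ fixT)
    (Z : Set H) (hZ : Z ∈ nhds zs)
    (κ : ℝ) (hκ : 0 < κ)
    (hsub : ∀ w ∈ Z, Metric.infDist w fixT ≤ κ * ‖w - T w‖)
    (lam : ℕ → ℝ) (hlam : ∀ k, lam k ∈ Set.Ioc (0 : ℝ) 1)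
    (ε : ℕ → H) (z : ℕ → H)
    (hiter : ∀ k, z (k + 1) = z k + lam k • (T (z k) + ε k - z k))
    (τ : ℕ → ℝ) (hτ : ∀ k, τ k = lam k * (1 - lam k))
    (d : ℕ → ℝ) (hd : ∀ k, d k = Metric.infDist (z k) fixT)
    (ν₁ : ℝ)
    (hν₁ : ∀ k, ∀ zt ∈ fixT, ‖z k - zt‖ = d k →
      2 * ‖lam k • T (z k) + (1 - lam k) • z k - zt‖ + lam k * ‖ε k‖ ≤ ν₁)
    (c : ℕ → ℝ) (hc : ∀ k, c k = ν₁ * (lam k * ‖ε k‖))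
    (a : ℝ) (ha : 0 ≤ a)
    (herr : Summable (fun k => lam k * ‖ε k‖))
    (C₂ : ℝ) (hC₂ : C₂ = ∑' k, lam k * ‖ε k‖)
    (hball : Metric.closedBall zs (a + C₂) ⊆ Z)
    (hz0 : z 0 ∈ Metric.closedBall zs a)
    (hdiv : ¬ Summable τ) :
    Filter.Tendsto d Filter.atTop (nhds 0) := by
  have hTzs : T zs = zs := by rw [hfixT] at hzs; exact hzs
  set e : ℕ → ℝ := fun k => lam k * ‖ε k‖ with he_def
  have he0 : ∀ k, 0 ≤ e k := fun k =>
    mul_nonneg (le_of_lt (hlam k).1) (norm_nonneg _)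
  set y : ℕ → H := fun k => lam k • T (z k) + (1 - lam k) • z k with hy_def
  have hzy : ∀ k, z (k + 1) = y k + lam k • ε k := by
    intro k; rw [hiter k, hy_def]; module
  have hdisty : ∀ k, ‖z (k + 1) - y k‖ = e k := by
    intro k
    rw [hzy k]
    simp only [add_sub_cancel_left, norm_smul, Real.norm_eq_abs,
      abs_of_pos (hlam k).1, he_def]
  -- contraction of the exact step towards any fixed point
  have hfixw : ∀ w ∈ fixT, T w = w := by
    intro w hw; rw [hfixT] at hw; exact hw
  have hTle : ∀ k, ∀ w ∈ fixT, ‖T (z k) - w‖ ≤ ‖z k - w‖ := by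
    intro k w hw
    calc ‖T (z k) - w‖ = ‖T (z k) - T w‖ := by rw [hfixw w hw]
      _ ≤ ‖z k - w‖ := hT _ _
  have hy_sq : ∀ k, ∀ w ∈ fixT,
      ‖y k - w‖ ^ 2 ≤ ‖z k - w‖ ^ 2 - τ k * ‖T (z k) - z k‖ ^ 2 := by
    intro k w hw
    have hid := km_identity (T (z k)) (z k) w (lam k)
    rw [hy_def]
    have h1 := hTle k w hw
    have h2 : ‖T (z k) - w‖ ^ 2 ≤ ‖z k - w‖ ^ 2 :=
      pow_le_pow_left₀ (norm_nonneg _) h1 2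
    have hl := hlam k
    rw [hτ k]
    nlinarith [hl.1, hl.2]
  have hy_le : ∀ k, ∀ w ∈ fixT, ‖y k - w‖ ≤ ‖z k - w‖ := by
    intro k w hw
    apply sq_mono_aux _ _ (norm_nonneg _)
    have := hy_sq k w hw
    have hτ0 : 0 ≤ τ k := by
      rw [hτ k]; have := hlam k
      nlinarith [this.1, this.2]
    nlinarith [sq_nonneg ‖T (z k) - z k‖]
  -- boundedness of the iterates
  have hz0' : ‖z 0 - zs‖ ≤ a := by
    rw [← dist_eq_norm]; exact Metric.mem_closedBall.mp hz0
  have hbd : ∀ n, ‖z n - zs‖ ≤ ‖z 0 - zs‖ + ∑ k ∈ Finset.range n, e k := by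
    intro n
    induction n with
    | zero => simp
    | succ n ih =>
      have h1 : ‖z (n + 1) - zs‖ ≤ ‖y n - zs‖ + e n := by
        calc ‖z (n + 1) - zs‖ = ‖(y n - zs) + lam n • ε n‖ := by rw [hzy n]; abel_nf
          _ ≤ ‖y n - zs‖ + ‖lam n • ε n‖ := norm_add_le _ _
          _ = ‖y n - zs‖ + e n := by
              rw [norm_smul, Real.norm_eq_abs, abs_of_pos (hlam n).1]
      have h2 := hy_le n zs hzs
      rw [Finset.sum_range_succ]
      linarith
  have hC₂le : ∀ n, (∑ k ∈ Finset.range n, e k) ≤ C₂ := by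
    intro n; rw [hC₂]
    exact Summable.sum_le_tsum _ (fun k _ => he0 k) herr
  have hmem : ∀ n, z n ∈ Z := by
    intro n
    apply hball
    rw [Metric.mem_closedBall, dist_eq_norm]
    have := hbd n
    have := hC₂le n
    linarith
  -- constants
  set κ' : ℝ := max κ 1 with hκ'
  have hκ'1 : (1 : ℝ) ≤ κ' := le_max_right _ _
  have hκ'κ : κ ≤ κ' := le_max_left _ _
  clear_value κ'
  have hκ'0 : (0 : ℝ) < κ' := lt_of_lt_of_le one_pos hκ'1
  set β : ℕ → ℝ := fun k => τ k / (2 * κ' ^ 2) with hβ_def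
  clear_value β
  have hτ0 : ∀ k, 0 ≤ τ k := by
    intro k; rw [hτ k]; have := hlam k; nlinarith [this.1, this.2]
  have hτ4 : ∀ k, τ k ≤ 1 / 4 := by
    intro k; rw [hτ k]; have := hlam k; nlinarith [sq_nonneg (lam k - 1/2)]
  have hβ0 : ∀ k, 0 ≤ β k := by
    intro k; rw [hβ_def]
    exact div_nonneg (hτ0 k) (by positivity)
  have hβ1 : ∀ k, β k ≤ 1 := by
    intro k; rw [hβ_def]
    rw [div_le_one (by positivity)]
    nlinarith [hτ4 k, hκ'1]
  have hd0 : ∀ k, 0 ≤ d k := by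
    intro k; rw [hd k]; exact Metric.infDist_nonneg
  -- subregularity bound
  have hsubk : ∀ k, d k ≤ κ' * ‖z k - T (z k)‖ := by
    intro k
    have h1 := hsub (z k) (hmem k)
    rw [hd k]
    calc Metric.infDist (z k) fixT ≤ κ * ‖z k - T (z k)‖ := h1
      _ ≤ κ' * ‖z k - T (z k)‖ :=
        mul_le_mul_of_nonneg_right hκ'κ (norm_nonneg _)
  -- key recursion
  have hrec : ∀ k, d (k + 1) ≤ (1 - β k) * d k + e k := by
    intro k
    set D : ℝ := Metric.infDist (y k) fixT with hD
    have hD0 : 0 ≤ D := Metric.infDist_nonneg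
    set s : ℝ := ‖z k - T (z k)‖ with hs_def
    have hs0 : 0 ≤ s := norm_nonneg _
    -- (i)
    have hi : d (k + 1) ≤ D + e k := by
      rw [hd (k + 1)]
      calc Metric.infDist (z (k + 1)) fixT
          ≤ Metric.infDist (y k) fixT + dist (z (k + 1)) (y k) :=
            Metric.infDist_le_infDist_add_dist
        _ = D + e k := by rw [dist_eq_norm, hdisty k]
    -- (ii): d k ^ 2 ≥ D ^ 2 + τ k * s ^ 2
    have hii : D ^ 2 + τ k * s ^ 2 ≤ d k ^ 2 := by
      have hr : Real.sqrt (D ^ 2 + τ k * s ^ 2) ≤ d k := by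
        rw [hd k]
        apply le_infDist_aux _ _ hne
        intro w hw
        rw [dist_eq_norm]
        have h1 := hy_sq k w hw
        have h2 : D ≤ ‖y k - w‖ := by
          rw [hD, ← dist_eq_norm]
          exact Metric.infDist_le_dist_of_mem hw
        have h3 : ‖T (z k) - z k‖ = s := by rw [hs_def, norm_sub_rev]
        rw [h3] at h1
        have h4 : D ^ 2 + τ k * s ^ 2 ≤ ‖z k - w‖ ^ 2 := by nlinarith
        calc Real.sqrt (D ^ 2 + τ k * s ^ 2) ≤ Real.sqrt (‖z k - w‖ ^ 2) :=
              Real.sqrt_le_sqrt h4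
          _ = ‖z k - w‖ := Real.sqrt_sq (norm_nonneg _)
      have hpos : 0 ≤ D ^ 2 + τ k * s ^ 2 := by
        have := hτ0 k; positivity
      calc D ^ 2 + τ k * s ^ 2 = Real.sqrt (D ^ 2 + τ k * s ^ 2) ^ 2 :=
            (Real.sq_sqrt hpos).symm
        _ ≤ d k ^ 2 := by
            apply pow_le_pow_left₀ (Real.sqrt_nonneg _) hr
    -- (iii): D ≤ (1 - β k) * d k
    have hiii : D ≤ (1 - β k) * d k := by
      apply sq_mono_aux _ _ (mul_nonneg (by linarith [hβ1 k]) (hd0 k))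
      have h1 : d k ≤ κ' * s := hsubk k
      clear_value D s
      set t : ℝ := τ k / κ' ^ 2 with ht_def
      clear_value t
      have hκ'2 : (0:ℝ) < κ' ^ 2 := by positivity
      have hds : d k ^ 2 ≤ κ' ^ 2 * s ^ 2 := by
        nlinarith [hd0 k, hs0, mul_nonneg hκ'0.le hs0]
      have hts : t * d k ^ 2 ≤ τ k * s ^ 2 := by
        have h7 : t * (κ' ^ 2 * s ^ 2) = τ k * s ^ 2 := by
          rw [ht_def]; field_simp
        have h8 := mul_le_mul_of_nonneg_left hds
          (div_nonneg (hτ0 k) hκ'2.le)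
        rw [ht_def] at h7 ⊢
        linarith
      have hD2 : D ^ 2 ≤ (1 - t) * d k ^ 2 := by nlinarith [hii]
      have hβk : β k = t / 2 := by rw [hβ_def, ht_def]; ring
      have hid2 : ((1 - β k) * d k) ^ 2 = (1 - t) * d k ^ 2 + (t * d k / 2) ^ 2 := by
        rw [hβk]; ring
      rw [hid2]
      linarith [sq_nonneg (t * d k / 2)]
    linarith [hi, hiii]
  -- divergence of β
  have hβdiv : Tendsto (fun n => ∑ i ∈ Finset.range n, β i) atTop atTop := by
    rw [← not_summable_iff_tendsto_nat_atTop_of_nonneg hβ0]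
    intro hsummable
    apply hdiv
    have : τ = fun k => β k * (2 * κ' ^ 2) := by
      funext k; rw [hβ_def]; field_simp
    rw [this]
    exact hsummable.mul_right _
  exact aux_recur d e β hd0 he0 hβ0 hβ1 hrec hβdiv herr
end

section
/- (Convergence of the non-stationary Krasnosel'skiĭ–Mann iteration.) Let H be a real Hilbert space, T : H → H non-expansive with fix T non-empty, and (T_k) a sequence of operators H → H. Let (z_k) satisfy z_{k+1} = z_k + λ_k(T_k z_k + ε_k − z_k) with λ_k ∈ (0,1). Assume: (a) for every k the operator λ_k T_k + (1−λ_k)Id is (1+β_k)-Lipschitz with β_k ≥ 0 and Σ_k β_k < +∞; (b) inf_k λ_k(1−λ_k) > 0; (c) Σ_k λ_k‖ε_k‖ < +∞; (d) for every ρ ≥ 0, Σ_k λ_k Δ_{k,ρ} < +∞ where Δ_{k,ρ} = sup{‖T_k z − T z‖ : ‖z‖ ≤ ρ}. Then e_k = z_k − T z_k converges strongly to 0, and (z_k) converges weakly to a point z* ∈ fix T (i.e. ⟨z_k, y⟩ → ⟨z*, y⟩ for every y ∈ H). -/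
open scoped RealInnerProductSpace
open Filter

section Aux

lemma aux_conv (a c : ℕ → ℝ) (ha : ∀ k, 0 ≤ a k) (hc : ∀ k, 0 ≤ c k) (hcs : Summable c)
    (hstep : ∀ k, a (k + 1) ≤ a k + c k) :
    ∃ L, Tendsto a atTop (nhds L) := by
  set S : ℕ → ℝ := fun k => ∑ j ∈ Finset.range k, c j with hS
  have hSt : Tendsto S atTop (nhds (∑' j, c j)) := hcs.hasSum.tendsto_sum_nat
  set v : ℕ → ℝ := fun k => a k + (∑' j, c j) - S k with hv
  have hanti : Antitone v := by
    apply antitone_nat_of_succ_le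
    intro k
    have h1 : S (k+1) = S k + c k := Finset.sum_range_succ c k
    have := hstep k
    simp only [hv, h1]
    linarith
  have hbdd : BddBelow (Set.range v) := by
    refine ⟨0, ?_⟩
    rintro x ⟨k, rfl⟩
    have : S k ≤ ∑' j, c j := Summable.sum_le_tsum (Finset.range k) (fun i _ => hc i) hcs
    have := ha k
    simp only [hv]
    linarith
  have hvt : Tendsto v atTop (nhds (⨅ k, v k)) := tendsto_atTop_ciInf hanti hbdd
  refine ⟨(⨅ k, v k) - (∑' j, c j) + (∑' j, c j), ?_⟩
  have : a = fun k => v k - (∑' j, c j) + S k := by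
    funext k; simp [hv]; ring
  rw [this]
  exact ((hvt.sub_const _).add hSt)

lemma aux_summ (a r c : ℕ → ℝ) (ha : ∀ k, 0 ≤ a k) (hr : ∀ k, 0 ≤ r k)
    (hc : ∀ k, 0 ≤ c k) (hcs : Summable c)
    (hstep : ∀ k, a (k + 1) ≤ a k - r k + c k) : Summable r := by
  have key : ∀ n, ∑ j ∈ Finset.range n, r j ≤ a 0 + ∑' j, c j := by
    intro n
    have h : ∀ n, ∑ j ∈ Finset.range n, r j + a n ≤ a 0 + ∑ j ∈ Finset.range n, c j := by
      intro n
      induction n with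
      | zero => simp
      | succ m ih =>
        rw [Finset.sum_range_succ, Finset.sum_range_succ]
        have := hstep m
        linarith
    have h2 : ∑ j ∈ Finset.range n, c j ≤ ∑' j, c j :=
      Summable.sum_le_tsum (Finset.range n) (fun i _ => hc i) hcs
    have := h n; have := ha n
    linarith
  exact summable_of_sum_range_le hr key

lemma aux_bdd (a β c : ℕ → ℝ) (ha0 : 0 ≤ a 0) (hβ0 : ∀ k, 0 ≤ β k) (hβ : Summable β)
    (hc : ∀ k, 0 ≤ c k) (hcs : Summable c)
    (hstep : ∀ k, a (k + 1) ≤ (1 + β k) * a k + c k) :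
    ∀ k, a k ≤ Real.exp (∑' j, β j) * (a 0 + ∑' j, c j) := by
  set P : ℕ → ℝ := fun k => ∏ j ∈ Finset.range k, (1 + β j) with hP
  set S : ℕ → ℝ := fun k => ∑ j ∈ Finset.range k, c j with hS
  have hP1 : ∀ k, 1 ≤ P k := by
    intro k
    show (1:ℝ) ≤ ∏ j ∈ Finset.range k, (1 + β j)
    calc (1:ℝ) = ∏ _j ∈ Finset.range k, (1:ℝ) := by simp
      _ ≤ ∏ j ∈ Finset.range k, (1 + β j) :=
        Finset.prod_le_prod (fun i _ => zero_le_one) (fun i _ => by linarith [hβ0 i])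
  have hQ : ∀ k, a k ≤ P k * (a 0 + S k) := by
    intro k
    induction k with
    | zero => simp [hP, hS]
    | succ m ih =>
      have h1 : P (m + 1) = P m * (1 + β m) := by
        simp [hP, Finset.prod_range_succ]
      have h2 : S (m + 1) = S m + c m := Finset.sum_range_succ c m
      have h3 : (1 + β m) * a m ≤ (1 + β m) * (P m * (a 0 + S m)) :=
        mul_le_mul_of_nonneg_left ih (by linarith [hβ0 m])
      have h4 : c m ≤ P (m + 1) * c m := le_mul_of_one_le_left (hc m) (hP1 (m + 1))
      have := hstep m
      calc a (m + 1) ≤ (1 + β m) * a m + c m := hstep m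
        _ ≤ (1 + β m) * (P m * (a 0 + S m)) + P (m + 1) * c m := by linarith
        _ = P (m + 1) * (a 0 + S (m + 1)) := by rw [h1, h2]; ring
  intro k
  have hPle : P k ≤ Real.exp (∑' j, β j) := by
    have h1 : P k ≤ ∏ j ∈ Finset.range k, Real.exp (β j) := by
      refine Finset.prod_le_prod (fun i _ => by linarith [hβ0 i]) (fun i _ => ?_)
      linarith [Real.add_one_le_exp (β i)]
    have h2 : ∏ j ∈ Finset.range k, Real.exp (β j) =
        Real.exp (∑ j ∈ Finset.range k, β j) := (Real.exp_sum _ _).symm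
    have h3 : ∑ j ∈ Finset.range k, β j ≤ ∑' j, β j :=
      Summable.sum_le_tsum (Finset.range k) (fun i _ => hβ0 i) hβ
    calc P k ≤ Real.exp (∑ j ∈ Finset.range k, β j) := by rw [← h2]; exact h1
      _ ≤ Real.exp (∑' j, β j) := Real.exp_le_exp.mpr h3
  have hSle : S k ≤ ∑' j, c j := Summable.sum_le_tsum (Finset.range k) (fun i _ => hc i) hcs
  have hSnn : 0 ≤ S k := Finset.sum_nonneg fun i _ => hc i
  calc a k ≤ P k * (a 0 + S k) := hQ k
    _ ≤ Real.exp (∑' j, β j) * (a 0 + ∑' j, c j) := by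
        refine mul_le_mul hPle (by linarith) (by linarith) (le_of_lt (Real.exp_pos _))

variable {H : Type*} [NormedAddCommGroup H] [InnerProductSpace ℝ H]

lemma aux_combo (l : ℝ) (a b : H) :
    ‖l • a + (1 - l) • b‖ ^ 2
      = l * ‖a‖ ^ 2 + (1 - l) * ‖b‖ ^ 2 - l * (1 - l) * ‖a - b‖ ^ 2 := by
  have h1 : ∀ u : H, ‖u‖ ^ 2 = ⟪u, u⟫ := fun u => (real_inner_self_eq_norm_sq u).symm
  simp only [h1, inner_add_left, inner_add_right, inner_sub_left, inner_sub_right,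
    real_inner_smul_left, real_inner_smul_right, real_inner_comm b a]
  ring

lemma aux_weaklim [CompleteSpace H] (z : ℕ → H) (M : ℝ) (hM : ∀ k, ‖z k‖ ≤ M)
    (G : Ultrafilter ℕ) :
    ∃ x : H, ∀ y : H, Tendsto (fun k => ⟪z k, y⟫) ↑G (nhds ⟪x, y⟫) := by
  have hM0 : 0 ≤ M := le_trans (norm_nonneg (z 0)) (hM 0)
  have hex : ∀ y : H, ∃ L : ℝ, Tendsto (fun k => ⟪z k, y⟫) ↑G (nhds L) := by
    intro y
    have hb : ∀ k, (⟪z k, y⟫) ∈ Set.Icc (-(M * ‖y‖)) (M * ‖y‖) := by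
      intro k
      have h : |⟪z k, y⟫| ≤ M * ‖y‖ :=
        le_trans (abs_real_inner_le_norm (z k) y)
          (mul_le_mul_of_nonneg_right (hM k) (norm_nonneg y))
      exact ⟨neg_le_of_abs_le h, le_of_abs_le h⟩
    have hle : ↑(G.map (fun k => ⟪z k, y⟫)) ≤
        Filter.principal (Set.Icc (-(M * ‖y‖)) (M * ‖y‖)) := by
      rw [Ultrafilter.coe_map, Filter.le_principal_iff, Filter.mem_map]
      exact Filter.univ_mem' hb
    obtain ⟨L, -, hL⟩ := (isCompact_Icc).ultrafilter_le_nhds (G.map _) hle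
    exact ⟨L, by rwa [Ultrafilter.coe_map] at hL⟩
  choose L hL using hex
  have habs : ∀ y, |L y| ≤ M * ‖y‖ := by
    intro y
    have h1 : Tendsto (fun k => |⟪z k, y⟫|) ↑G (nhds |L y|) := (hL y).abs
    refine le_of_tendsto h1 (Filter.Eventually.of_forall fun k => ?_)
    exact le_trans (abs_real_inner_le_norm (z k) y)
      (mul_le_mul_of_nonneg_right (hM k) (norm_nonneg y))
  let f : H →ₗ[ℝ] ℝ :=
    { toFun := L
      map_add' := fun y y' => by
        refine tendsto_nhds_unique (hL (y + y')) ?_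
        have := (hL y).add (hL y')
        simpa [inner_add_right] using this
      map_smul' := fun c y => by
        refine tendsto_nhds_unique (hL (c • y)) ?_
        have := (hL y).const_mul c
        simpa [inner_smul_right] using this }
  let f' : H →L[ℝ] ℝ := LinearMap.mkContinuous f M (fun y => by
    simpa [f, Real.norm_eq_abs] using habs y)
  refine ⟨(InnerProductSpace.toDual ℝ H).symm f', fun y => ?_⟩
  have : ⟪(InnerProductSpace.toDual ℝ H).symm f', y⟫ = f' y :=
    InnerProductSpace.toDual_symm_apply
  rw [this]
  exact hL y

lemma aux_demiclosed (T : H → H) (hT : ∀ x y, ‖T x - T y‖ ≤ ‖x - y‖) (z : ℕ → H) (x : H)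
    (he : Tendsto (fun k => z k - T (z k)) atTop (nhds 0))
    (C : ℝ) (hC : ∀ k, ‖z k - x‖ ≤ C)
    (G : Ultrafilter ℕ) (hG : ↑G ≤ (atTop : Filter ℕ))
    (hx : ∀ y : H, Tendsto (fun k => ⟪z k, y⟫) ↑G (nhds ⟪x, y⟫)) : T x = x := by
  set e : ℕ → H := fun k => z k - T (z k) with he'
  have key : ∀ k, 2 * ⟪z k - x, x - T x⟫ + ‖x - T x‖ ^ 2 ≤ ‖e k‖ ^ 2 + 2 * ‖e k‖ * C := by
    intro k
    have h1 : ‖z k - T x‖ ^ 2 = ‖z k - x‖ ^ 2 + 2 * ⟪z k - x, x - T x⟫ + ‖x - T x‖ ^ 2 := by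
      have h : z k - T x = (z k - x) + (x - T x) := by abel
      rw [h, norm_add_sq_real]
    have h2 : ‖z k - T x‖ ^ 2 ≤ ‖e k‖ ^ 2 + 2 * ‖e k‖ * ‖T (z k) - T x‖ + ‖T (z k) - T x‖ ^ 2 := by
      have h : z k - T x = e k + (T (z k) - T x) := by simp [he']
      rw [h, norm_add_sq_real]
      have := real_inner_le_norm (e k) (T (z k) - T x)
      nlinarith [norm_nonneg (e k), norm_nonneg (T (z k) - T x)]
    have h3 : ‖T (z k) - T x‖ ≤ ‖z k - x‖ := hT _ _
    have h4 : ‖T (z k) - T x‖ ^ 2 ≤ ‖z k - x‖ ^ 2 :=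
      pow_le_pow_left₀ (norm_nonneg _) h3 2
    have h5 : ‖T (z k) - T x‖ ≤ C := le_trans h3 (hC k)
    nlinarith [norm_nonneg (e k)]
  have hn : Tendsto (fun k => ‖e k‖) atTop (nhds 0) :=
    tendsto_zero_iff_norm_tendsto_zero.mp he
  have hr : Tendsto (fun k => ‖e k‖ ^ 2 + 2 * ‖e k‖ * C) atTop (nhds 0) := by
    have h1 : Tendsto (fun k => ‖e k‖ ^ 2) atTop (nhds 0) := by
      simpa using hn.pow 2
    have h2 : Tendsto (fun k => 2 * ‖e k‖ * C) atTop (nhds 0) := by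
      have := (hn.const_mul 2).mul_const C
      simpa [mul_assoc] using this
    simpa using h1.add h2
  have hlhs : Tendsto (fun k => 2 * ⟪z k - x, x - T x⟫ + ‖x - T x‖ ^ 2) ↑G
      (nhds (‖x - T x‖ ^ 2)) := by
    have h0 : Tendsto (fun k => ⟪z k - x, x - T x⟫) ↑G (nhds 0) := by
      have := (hx (x - T x)).sub_const ⟪x, x - T x⟫
      simpa [inner_sub_left] using this
    have := (h0.const_mul 2).add_const (‖x - T x‖ ^ 2)
    simpa using this
  have hfin : ‖x - T x‖ ^ 2 ≤ 0 :=
    le_of_tendsto_of_tendsto' hlhs (hr.mono_left hG) key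
  have : ‖x - T x‖ = 0 := by nlinarith [norm_nonneg (x - T x)]
  have := sub_eq_zero.mp (norm_eq_zero.mp this)
  exact this.symm

end Aux


set_option maxHeartbeats 1000000 in
/-- Convergence of the non-stationary inexact Krasnosel'skiĭ–Mann iteration
`z_{k+1} = z_k + λ_k(T_k z_k + ε_k − z_k)`: if each relaxed operator
`λ_k T_k + (1−λ_k)Id` is `(1+β_k)`-Lipschitz with `Σ β_k < ∞`, `inf_k λ_k(1−λ_k) > 0`,
`Σ λ_k‖ε_k‖ < ∞`, and `Σ λ_k Δ_{k,ρ} < ∞` for every `ρ ≥ 0` where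
`Δ_{k,ρ} = sup_{‖w‖≤ρ} ‖T_k w − T w‖`, then `e_k = z_k − T z_k → 0` strongly and `(z_k)`
converges weakly to a fixed point of `T`. -/
theorem stmt17 {H : Type*} [NormedAddCommGroup H] [InnerProductSpace ℝ H] [CompleteSpace H]
    (T : H → H) (hT : ∀ x y, ‖T x - T y‖ ≤ ‖x - y‖)
    (hfix : ∃ w, T w = w)
    (Tk : ℕ → H → H) (lam : ℕ → ℝ) (ε : ℕ → H) (z : ℕ → H)
    (hlam : ∀ k, lam k ∈ Set.Ioo (0 : ℝ) 1)
    (hiter : ∀ k, z (k + 1) = z k + lam k • (Tk k (z k) + ε k - z k))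
    (β : ℕ → ℝ) (hβ0 : ∀ k, 0 ≤ β k) (hβ : Summable β)
    (hLip : ∀ k x y,
      ‖(lam k • Tk k x + (1 - lam k) • x) - (lam k • Tk k y + (1 - lam k) • y)‖ ≤
        (1 + β k) * ‖x - y‖)
    (hτ : 0 < ⨅ k, lam k * (1 - lam k))
    (herr : Summable (fun k => lam k * ‖ε k‖))
    (hΔ : ∀ ρ : ℝ, 0 ≤ ρ →
      Summable (fun k => lam k * ⨆ w : {w : H // ‖w‖ ≤ ρ}, ‖Tk k w.1 - T w.1‖)) :
    Filter.Tendsto (fun k => z k - T (z k)) Filter.atTop (nhds 0) ∧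
    ∃ zs : H, T zs = zs ∧
      ∀ y : H, Filter.Tendsto (fun k => ⟪z k, y⟫) Filter.atTop (nhds ⟪zs, y⟫) := by
  obtain ⟨w₀, hw₀⟩ := hfix
  set Δ : ℝ → ℕ → ℝ := fun ρ k => ⨆ w : {w : H // ‖w‖ ≤ ρ}, ‖Tk k w.1 - T w.1‖ with hΔdef
  -- pointwise bound by the sup
  have Δle : ∀ (ρ : ℝ) (k : ℕ) (v : H), ‖v‖ ≤ ρ → ‖Tk k v - T v‖ ≤ Δ ρ k := by
    intro ρ k v hv
    have hρ0 : 0 ≤ ρ := le_trans (norm_nonneg v) hv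
    obtain ⟨hl0, hl1⟩ := hlam k
    have hbdd : BddAbove (Set.range fun w : {w : H // ‖w‖ ≤ ρ} => ‖Tk k w.1 - T w.1‖) := by
      refine ⟨(2 + β k) * ρ / lam k + ‖Tk k 0 - T 0‖ + ρ, ?_⟩
      rintro r ⟨w, rfl⟩
      have hw : ‖w.1‖ ≤ ρ := w.2
      have h1 : ‖Tk k w.1 - Tk k 0‖ ≤ (2 + β k) * ρ / lam k := by
        have h := hLip k w.1 0
        rw [sub_zero] at h
        have h2 : ‖lam k • (Tk k w.1 - Tk k 0)‖ ≤ (2 + β k) * ρ := by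
          have hich : lam k • (Tk k w.1 - Tk k 0) =
              ((lam k • Tk k w.1 + (1 - lam k) • w.1) -
                (lam k • Tk k 0 + (1 - lam k) • (0 : H))) - (1 - lam k) • w.1 := by
            module
          rw [hich]
          refine le_trans (norm_sub_le _ _) ?_
          have h3 : ‖(1 - lam k) • w.1‖ ≤ 1 * ρ := by
            rw [norm_smul, Real.norm_eq_abs, abs_of_nonneg (by linarith)]
            exact mul_le_mul (by linarith) hw (norm_nonneg _) zero_le_one
          have h4 : (1 + β k) * ‖w.1‖ ≤ (1 + β k) * ρ :=
            mul_le_mul_of_nonneg_left hw (by linarith [hβ0 k])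
          have := le_trans h h4
          linarith
        rw [norm_smul, Real.norm_eq_abs, abs_of_pos hl0] at h2
        rw [le_div_iff₀ hl0]
        linarith [h2]
      have h5 : ‖T 0 - T w.1‖ ≤ ρ := by
        refine le_trans (hT 0 w.1) ?_
        simpa using hw
      have hsplit : Tk k w.1 - T w.1 =
          (Tk k w.1 - Tk k 0) + (Tk k 0 - T 0) + (T 0 - T w.1) := by abel
      calc ‖Tk k w.1 - T w.1‖ ≤ ‖Tk k w.1 - Tk k 0‖ + ‖Tk k 0 - T 0‖ + ‖T 0 - T w.1‖ := by
            rw [hsplit]; exact norm_add₃_le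
        _ ≤ _ := by linarith
    exact le_ciSup hbdd ⟨v, hv⟩
  have Δnn : ∀ ρ k, 0 ≤ Δ ρ k := fun ρ k => Real.iSup_nonneg fun w => norm_nonneg _
  -- iterate decomposition
  have hdecomp : ∀ k, z (k + 1) =
      (lam k • Tk k (z k) + (1 - lam k) • z k) + lam k • ε k := by
    intro k
    rw [hiter k]
    module
  obtain ⟨hl0, hl1⟩ : (∀ k, 0 < lam k) ∧ (∀ k, lam k < 1) :=
    ⟨fun k => (hlam k).1, fun k => (hlam k).2⟩
  -- Step 1: boundedness
  set a : ℕ → ℝ := fun k => ‖z k - w₀‖ with ha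
  set c₀ : ℕ → ℝ := fun k => lam k * Δ ‖w₀‖ k + lam k * ‖ε k‖ with hc₀
  have hc₀nn : ∀ k, 0 ≤ c₀ k := fun k => by
    have := Δnn ‖w₀‖ k
    have := (hl0 k).le
    have := norm_nonneg (ε k)
    positivity
  have hc₀s : Summable c₀ := (hΔ ‖w₀‖ (norm_nonneg _)).add herr
  have hstep1 : ∀ k, a (k + 1) ≤ (1 + β k) * a k + c₀ k := by
    intro k
    have hsplit : z (k + 1) - w₀ =
        ((lam k • Tk k (z k) + (1 - lam k) • z k) -
          (lam k • Tk k w₀ + (1 - lam k) • w₀)) +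
        lam k • (Tk k w₀ - w₀) + lam k • ε k := by
      rw [hdecomp k]; module
    have h1 : ‖lam k • (Tk k w₀ - w₀)‖ ≤ lam k * Δ ‖w₀‖ k := by
      rw [norm_smul, Real.norm_eq_abs, abs_of_pos (hl0 k)]
      refine mul_le_mul_of_nonneg_left ?_ (hl0 k).le
      have : Tk k w₀ - w₀ = Tk k w₀ - T w₀ := by rw [hw₀]
      rw [this]
      exact Δle ‖w₀‖ k w₀ le_rfl
    have h2 : ‖lam k • ε k‖ = lam k * ‖ε k‖ := by
      rw [norm_smul, Real.norm_eq_abs, abs_of_pos (hl0 k)]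
    calc a (k + 1) = ‖z (k + 1) - w₀‖ := rfl
      _ ≤ ‖(lam k • Tk k (z k) + (1 - lam k) • z k) -
            (lam k • Tk k w₀ + (1 - lam k) • w₀)‖ +
          ‖lam k • (Tk k w₀ - w₀)‖ + ‖lam k • ε k‖ := by
            rw [hsplit]; exact norm_add₃_le
      _ ≤ (1 + β k) * a k + c₀ k := by
            have := hLip k (z k) w₀
            simp only [hc₀]
            rw [h2]
            linarith [h1, this]
  set E : ℝ := Real.exp (∑' j, β j) * (a 0 + ∑' j, c₀ j) with hE
  have haE : ∀ k, a k ≤ E := aux_bdd a β c₀ (norm_nonneg _) hβ0 hβ hc₀nn hc₀s hstep1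
  have hE0 : 0 ≤ E := le_trans (norm_nonneg _) (haE 0)
  set ρ : ℝ := E + ‖w₀‖ with hρ
  have hρ0 : 0 ≤ ρ := by positivity
  have hzρ : ∀ k, ‖z k‖ ≤ ρ := by
    intro k
    calc ‖z k‖ = ‖z k - w₀ + w₀‖ := by rw [sub_add_cancel]
      _ ≤ ‖z k - w₀‖ + ‖w₀‖ := norm_add_le _ _
      _ ≤ ρ := by have := haE k; simp only [hρ]; linarith
  -- Step 2: Fejér-type inequality for any fixed point
  set d : ℕ → ℝ := fun k => lam k * Δ ρ k + lam k * ‖ε k‖ with hd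
  have hdnn : ∀ k, 0 ≤ d k := fun k => by
    have := Δnn ρ k
    have := (hl0 k).le
    have := norm_nonneg (ε k)
    positivity
  have hds : Summable d := (hΔ ρ hρ0).add herr
  set D : ℝ := ∑' k, d k with hD
  have hdD : ∀ k, d k ≤ D := fun k => Summable.le_tsum hds k (fun j _ => hdnn j)
  have hD0 : 0 ≤ D := le_trans (hdnn 0) (hdD 0)
  set e : ℕ → H := fun k => z k - T (z k) with he'
  have hfej : ∀ w, T w = w → ∀ k,
      ‖z (k + 1) - w‖ ^ 2 ≤ ‖z k - w‖ ^ 2 - (lam k * (1 - lam k)) * ‖e k‖ ^ 2 +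
        d k * (2 * (ρ + ‖w‖) + D) := by
    intro w hw k
    set g : H := lam k • T (z k) + (1 - lam k) • z k with hg
    have hzg : ‖z (k + 1) - w‖ ≤ ‖g - w‖ + d k := by
      have hsplit : z (k + 1) - w = (g - w) + lam k • (Tk k (z k) - T (z k)) +
          lam k • ε k := by
        rw [hdecomp k, hg]; module
      have h1 : ‖lam k • (Tk k (z k) - T (z k))‖ ≤ lam k * Δ ρ k := by
        rw [norm_smul, Real.norm_eq_abs, abs_of_pos (hl0 k)]
        exact mul_le_mul_of_nonneg_left (Δle ρ k (z k) (hzρ k)) (hl0 k).le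
      have h2 : ‖lam k • ε k‖ = lam k * ‖ε k‖ := by
        rw [norm_smul, Real.norm_eq_abs, abs_of_pos (hl0 k)]
      calc ‖z (k + 1) - w‖ ≤ ‖g - w‖ + ‖lam k • (Tk k (z k) - T (z k))‖ + ‖lam k • ε k‖ := by
            rw [hsplit]; exact norm_add₃_le
        _ ≤ ‖g - w‖ + d k := by simp only [hd]; rw [h2]; linarith
    have hgw : g - w = lam k • (T (z k) - w) + (1 - lam k) • (z k - w) := by
      rw [hg]; module
    have hcombo : ‖g - w‖ ^ 2 = lam k * ‖T (z k) - w‖ ^ 2 + (1 - lam k) * ‖z k - w‖ ^ 2 -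
        lam k * (1 - lam k) * ‖e k‖ ^ 2 := by
      rw [hgw, aux_combo]
      have : T (z k) - w - (z k - w) = -e k := by
        show T (z k) - w - (z k - w) = -(z k - T (z k))
        abel
      rw [this, norm_neg]
    have hTzw : ‖T (z k) - w‖ ≤ ‖z k - w‖ := by
      have := hT (z k) w
      rwa [hw] at this
    have hgle : ‖g - w‖ ^ 2 ≤ ‖z k - w‖ ^ 2 - lam k * (1 - lam k) * ‖e k‖ ^ 2 := by
      rw [hcombo]
      have h4 : ‖T (z k) - w‖ ^ 2 ≤ ‖z k - w‖ ^ 2 :=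
        pow_le_pow_left₀ (norm_nonneg _) hTzw 2
      nlinarith [(hl0 k), (hl1 k)]
    have hgw_le : ‖g - w‖ ≤ ‖z k - w‖ := by
      nlinarith [norm_nonneg (g - w), norm_nonneg (z k - w), hgle,
        mul_nonneg (mul_nonneg (hl0 k).le (by linarith [hl1 k] : (0:ℝ) ≤ 1 - lam k))
          (sq_nonneg ‖e k‖)]
    have hzkwρ : ‖z k - w‖ ≤ ρ + ‖w‖ := by
      calc ‖z k - w‖ ≤ ‖z k‖ + ‖w‖ := norm_sub_le _ _
        _ ≤ ρ + ‖w‖ := by linarith [hzρ k]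
    have hsq : ‖z (k + 1) - w‖ ^ 2 ≤ (‖g - w‖ + d k) ^ 2 :=
      pow_le_pow_left₀ (norm_nonneg _) hzg 2
    have hsq' : ‖z (k + 1) - w‖ ^ 2 ≤ ‖g - w‖ ^ 2 + d k * (2 * ‖g - w‖ + d k) := by
      calc ‖z (k + 1) - w‖ ^ 2 ≤ (‖g - w‖ + d k) ^ 2 := hsq
        _ = ‖g - w‖ ^ 2 + d k * (2 * ‖g - w‖ + d k) := by ring
    have h5 : 2 * ‖g - w‖ + d k ≤ 2 * (ρ + ‖w‖) + D := by
      linarith [hgw_le, hzkwρ, hdD k]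
    have h6 : d k * (2 * ‖g - w‖ + d k) ≤ d k * (2 * (ρ + ‖w‖) + D) :=
      mul_le_mul_of_nonneg_left h5 (hdnn k)
    linarith [hgle, hsq', h6]
  -- residual summability and convergence to 0
  have hτk : ∀ k, (⨅ j, lam j * (1 - lam j)) ≤ lam k * (1 - lam k) := by
    intro k
    refine ciInf_le ⟨0, ?_⟩ k
    rintro x ⟨j, rfl⟩
    exact mul_nonneg (hl0 j).le (by linarith [hl1 j])
  set τ : ℝ := ⨅ j, lam j * (1 - lam j) with hτdef
  have hcw₀nn : ∀ k, 0 ≤ d k * (2 * (ρ + ‖w₀‖) + D) := fun k =>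
    mul_nonneg (hdnn k) (by positivity)
  have hcw₀s : Summable (fun k => d k * (2 * (ρ + ‖w₀‖) + D)) := hds.mul_right _
  have hrsummable : Summable (fun k => (lam k * (1 - lam k)) * ‖e k‖ ^ 2) :=
    aux_summ (fun k => ‖z k - w₀‖ ^ 2) _ _ (fun k => sq_nonneg _)
      (fun k => mul_nonneg (mul_nonneg (hl0 k).le (by linarith [hl1 k])) (sq_nonneg _))
      hcw₀nn hcw₀s (fun k => hfej w₀ hw₀ k)
  have hesummable : Summable (fun k => ‖e k‖ ^ 2) := by
    refine Summable.of_nonneg_of_le (fun k => sq_nonneg _) (fun k => ?_)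
      (hrsummable.mul_left (1 / τ))
    have h1 : τ * ‖e k‖ ^ 2 ≤ (lam k * (1 - lam k)) * ‖e k‖ ^ 2 :=
      mul_le_mul_of_nonneg_right (hτk k) (sq_nonneg _)
    rw [div_mul_eq_mul_div, le_div_iff₀ hτ, one_mul]
    calc ‖e k‖ ^ 2 * τ = τ * ‖e k‖ ^ 2 := by ring
      _ ≤ _ := h1
  have he : Tendsto e atTop (nhds 0) := by
    have h1 : Tendsto (fun k => ‖e k‖ ^ 2) atTop (nhds 0) := hesummable.tendsto_atTop_zero
    have h2 : Tendsto (fun k => Real.sqrt (‖e k‖ ^ 2)) atTop (nhds (Real.sqrt 0)) :=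
      (Real.continuous_sqrt.tendsto 0).comp h1
    have h3 : Tendsto (fun k => ‖e k‖) atTop (nhds 0) := by
      simpa [Real.sqrt_sq (norm_nonneg _)] using h2
    exact tendsto_zero_iff_norm_tendsto_zero.mpr h3
  refine ⟨he, ?_⟩
  -- limit of distances to any fixed point
  have hconv : ∀ w, T w = w → ∃ L, Tendsto (fun k => ‖z k - w‖ ^ 2) atTop (nhds L) := by
    intro w hw
    refine aux_conv _ (fun k => d k * (2 * (ρ + ‖w‖) + D)) (fun k => sq_nonneg _)
      (fun k => mul_nonneg (hdnn k) (by positivity)) (hds.mul_right _) (fun k => ?_)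
    have := hfej w hw k
    have hr0 : 0 ≤ (lam k * (1 - lam k)) * ‖e k‖ ^ 2 :=
      mul_nonneg (mul_nonneg (hl0 k).le (by linarith [hl1 k])) (sq_nonneg _)
    show ‖z (k + 1) - w‖ ^ 2 ≤ ‖z k - w‖ ^ 2 + d k * (2 * (ρ + ‖w‖) + D)
    linarith
  -- weak cluster limits along ultrafilters
  have hbig : ∀ G : Ultrafilter ℕ, ↑G ≤ (atTop : Filter ℕ) →
      ∃ x, T x = x ∧ ∀ y : H, Tendsto (fun k => ⟪z k, y⟫) ↑G (nhds ⟪x, y⟫) := by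
    intro G hG
    obtain ⟨x, hx⟩ := aux_weaklim z ρ hzρ G
    refine ⟨x, ?_, hx⟩
    refine aux_demiclosed T hT z x he (ρ + ‖x‖) (fun k => ?_) G hG hx
    calc ‖z k - x‖ ≤ ‖z k‖ + ‖x‖ := norm_sub_le _ _
      _ ≤ ρ + ‖x‖ := by linarith [hzρ k]
  -- uniqueness of such limits
  have huniq : ∀ (G G' : Ultrafilter ℕ), ↑G ≤ (atTop : Filter ℕ) →
      ↑G' ≤ (atTop : Filter ℕ) → ∀ x x', T x = x → T x' = x' →
      (∀ y : H, Tendsto (fun k => ⟪z k, y⟫) ↑G (nhds ⟪x, y⟫)) →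
      (∀ y : H, Tendsto (fun k => ⟪z k, y⟫) ↑G' (nhds ⟪x', y⟫)) → x = x' := by
    intro G G' hG hG' x x' hxf hx'f hx hx'
    obtain ⟨Lx, hLx⟩ := hconv x hxf
    obtain ⟨Lx', hLx'⟩ := hconv x' hx'f
    set q : ℕ → ℝ := fun k => ⟪z k - x, x - x'⟫ with hq
    have hqeq : ∀ k, q k = (‖z k - x'‖ ^ 2 - ‖z k - x‖ ^ 2 - ‖x - x'‖ ^ 2) / 2 := by
      intro k
      have h : z k - x' = (z k - x) + (x - x') := by abel
      have h2 : ‖z k - x'‖ ^ 2 = ‖z k - x‖ ^ 2 + 2 * ⟪z k - x, x - x'⟫ + ‖x - x'‖ ^ 2 := by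
        rw [h, norm_add_sq_real]
      simp only [hq]
      linarith
    have hqt : Tendsto q atTop (nhds ((Lx' - Lx - ‖x - x'‖ ^ 2) / 2)) := by
      have : q = fun k => (‖z k - x'‖ ^ 2 - ‖z k - x‖ ^ 2 - ‖x - x'‖ ^ 2) / 2 := funext hqeq
      rw [this]
      exact ((hLx'.sub hLx).sub_const _).div_const 2
    have hq0 : Tendsto q ↑G (nhds 0) := by
      have := (hx (x - x')).sub_const ⟪x, x - x'⟫
      simp only [hq]
      have heq : (fun k => ⟪z k - x, x - x'⟫) = fun k => ⟪z k, x - x'⟫ - ⟪x, x - x'⟫ := by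
        funext k; rw [inner_sub_left]
      rw [heq]
      simpa using this
    have hq1 : Tendsto q ↑G' (nhds (-‖x - x'‖ ^ 2)) := by
      have h1 := (hx' (x - x')).sub_const ⟪x, x - x'⟫
      have heq : q = fun k => ⟪z k, x - x'⟫ - ⟪x, x - x'⟫ := by
        funext k; simp only [hq]; rw [inner_sub_left]
      have h2 : ⟪x', x - x'⟫ - ⟪x, x - x'⟫ = -‖x - x'‖ ^ 2 := by
        rw [← inner_sub_left]
        have : x' - x = -(x - x') := by abel
        rw [this, inner_neg_left, real_inner_self_eq_norm_sq]
      rw [heq]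
      rw [← h2]
      exact h1
    have hc1 : (Lx' - Lx - ‖x - x'‖ ^ 2) / 2 = 0 :=
      tendsto_nhds_unique (hqt.mono_left hG) hq0
    have hc2 : (Lx' - Lx - ‖x - x'‖ ^ 2) / 2 = -‖x - x'‖ ^ 2 :=
      tendsto_nhds_unique (hqt.mono_left hG') hq1
    have : ‖x - x'‖ ^ 2 = 0 := by linarith
    have : ‖x - x'‖ = 0 := by nlinarith [norm_nonneg (x - x')]
    exact sub_eq_zero.mp (norm_eq_zero.mp this)
  -- conclude
  set G₀ : Ultrafilter ℕ := Ultrafilter.of atTop with hG₀def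
  have hG₀ : ↑G₀ ≤ (atTop : Filter ℕ) := Ultrafilter.of_le _
  obtain ⟨zs, hzsfix, hzsw⟩ := hbig G₀ hG₀
  refine ⟨zs, hzsfix, fun y => ?_⟩
  by_contra hcon
  rw [Metric.tendsto_atTop] at hcon
  push_neg at hcon
  obtain ⟨δ, hδ, hfr⟩ := hcon
  set s : Set ℕ := {k | δ ≤ dist ⟪z k, y⟫ ⟪zs, y⟫} with hs
  have hneBot : (atTop ⊓ Filter.principal s).NeBot := by
    rw [Filter.inf_principal_neBot_iff]
    intro U hU
    rw [Filter.mem_atTop_sets] at hU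
    obtain ⟨N, hN⟩ := hU
    obtain ⟨k, hkN, hk⟩ := hfr N
    exact ⟨k, hN k hkN, hk⟩
  haveI := hneBot
  set G' : Ultrafilter ℕ := Ultrafilter.of (atTop ⊓ Filter.principal s) with hG'def
  have hG'le : ↑G' ≤ atTop ⊓ Filter.principal s := Ultrafilter.of_le _
  have hG' : ↑G' ≤ (atTop : Filter ℕ) := le_trans hG'le inf_le_left
  obtain ⟨x', hx'fix, hx'⟩ := hbig G' hG'
  have hxeq : zs = x' := huniq G₀ G' hG₀ hG' zs x' hzsfix hx'fix hzsw hx'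
  have htend : Tendsto (fun k => ⟪z k, y⟫) ↑G' (nhds ⟪zs, y⟫) := by
    rw [hxeq]; exact hx' y
  have hev1 : ∀ᶠ k in (↑G' : Filter ℕ), dist ⟪z k, y⟫ ⟪zs, y⟫ < δ :=
    (Metric.tendsto_nhds.mp htend) δ hδ
  have hev2 : ∀ᶠ k in (↑G' : Filter ℕ), k ∈ s :=
    hG'le (Filter.mem_inf_of_right (Filter.mem_principal_self s))
  obtain ⟨k, hk1, hk2⟩ := (hev1.and hev2).exists
  exact absurd hk1 (not_lt.mpr hk2)
end

section
/- (Pointwise complexity of the non-stationary iteration.) Let H be a real Hilbert space, T : H → H non-expansive with fix T non-empty, and (T_k) a sequence of non-expansive operators H → H. Let (z_k) satisfy z_{k+1} = z_k + λ_k(T_k z_k + ε_k − z_k), and set e_k = z_k − T z_k. Assume: (a) there are λ̲, λ̄ with 0 < λ̲ ≤ λ_k ≤ λ̄ < 1 for all k, and let τ̲ = inf_k λ_k(1−λ_k); (b) Σ_k (k+1)‖ε_k‖ < +∞; (c) for every ρ ≥ 0, Σ_k (k+1)Δ_{k,ρ} < +∞ where Δ_{k,ρ} = sup{‖T_k z −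 T z‖ : ‖z‖ ≤ ρ}. Then there exists a constant C₁ ≥ 0 such that for every k: ‖e_k‖ ≤ √((d₀² + C₁)/(τ̲(k+1))), where d₀ = d(z₀, fix T). -/
set_option maxHeartbeats 1000000

private lemma stmt18_combo {H : Type*} [NormedAddCommGroup H] [InnerProductSpace ℝ H]
    (a b : H) (t : ℝ) :
    ‖(1 - t) • a + t • b‖ ^ 2
      = (1 - t) * ‖a‖ ^ 2 + t * ‖b‖ ^ 2 - t * (1 - t) * ‖a - b‖ ^ 2 := by
  simp only [← real_inner_self_eq_norm_sq]
  simp only [inner_add_left, inner_add_right, inner_sub_left, inner_sub_right,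
    real_inner_smul_left, real_inner_smul_right, real_inner_comm b a]
  ring

private lemma stmt18_final {s r Q P W ek : ℝ} (hspos : 0 < s) (hr1 : 1 ≤ r)
    (hW0 : 0 ≤ W) (hQP : Q * s ≤ P) (hmain : r * r * ek ≤ r * Q + 2 * W) :
    ek * (s * r) ≤ P + 2 * W * s := by
  have hrpos : 0 < r := lt_of_lt_of_le one_pos hr1
  have t1 : s * (r * r * ek) ≤ s * (r * Q + 2 * W) := mul_le_mul_of_nonneg_left hmain hspos.le
  have t2 : r * (Q * s) ≤ r * P := mul_le_mul_of_nonneg_left hQP hrpos.le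
  have t4 : 2*W*s ≤ 2*W*s*r := by
    nlinarith [mul_nonneg (mul_nonneg hW0 hspos.le) (sub_nonneg.2 hr1)]
  have t5 : r * (s * r * ek) ≤ r * (P + 2*W*s) := by nlinarith [t1, t2, t4]
  have t6 : s * r * ek ≤ P + 2*W*s := le_of_mul_le_mul_left t5 hrpos
  nlinarith [t6]

/-- Pointwise complexity of the non-stationary inexact Krasnosel'skiĭ–Mann iteration:
if each `T_k` is non-expansive, `0 < λ̲ ≤ λ_k ≤ λ̄ < 1`, `Σ (k+1)‖ε_k‖ < ∞` and
`Σ (k+1)Δ_{k,ρ} < ∞` for every `ρ ≥ 0` where `Δ_{k,ρ} = sup_{‖w‖≤ρ} ‖T_k w − T w‖`, then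
there is `C₁ ≥ 0` such that `‖e_k‖ ≤ √((d₀² + C₁)/(τ̲(k+1)))` for every `k`, with
`e_k = z_k − T z_k`, `d₀ = d(z₀, fix T)` and `τ̲ = inf_k λ_k(1−λ_k)`. -/
theorem stmt18 {H : Type*} [NormedAddCommGroup H] [InnerProductSpace ℝ H]
    (T : H → H) (hT : ∀ x y, ‖T x - T y‖ ≤ ‖x - y‖)
    (fixT : Set H) (hfixT : fixT = {w | T w = w}) (hne : fixT.Nonempty)
    (Tk : ℕ → H → H) (hTk : ∀ k x y, ‖Tk k x - Tk k y‖ ≤ ‖x - y‖)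
    (lam : ℕ → ℝ) (ε : ℕ → H) (z : ℕ → H)
    (hiter : ∀ k, z (k + 1) = z k + lam k • (Tk k (z k) + ε k - z k))
    (e : ℕ → H) (he : ∀ k, e k = z k - T (z k))
    (lamlo lamhi : ℝ) (hlo : 0 < lamlo) (hhi : lamhi < 1)
    (hlam : ∀ k, lamlo ≤ lam k ∧ lam k ≤ lamhi)
    (τlo : ℝ) (hτlo : τlo = ⨅ k, lam k * (1 - lam k))
    (herr : Summable (fun k : ℕ => ((k : ℝ) + 1) * ‖ε k‖))
    (hΔ : ∀ ρ : ℝ, 0 ≤ ρ →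
      Summable (fun k : ℕ => ((k : ℝ) + 1) * ⨆ w : {w : H // ‖w‖ ≤ ρ}, ‖Tk k w.1 - T w.1‖)) :
    ∃ C₁ : ℝ, 0 ≤ C₁ ∧
      ∀ k, ‖e k‖ ≤
        Real.sqrt ((Metric.infDist (z 0) fixT ^ 2 + C₁) / (τlo * ((k : ℝ) + 1))) := by
  -- basic facts about lam and τlo
  have hlam01 : ∀ k, 0 < lam k ∧ lam k < 1 := fun k =>
    ⟨hlo.trans_le (hlam k).1, lt_of_le_of_lt (hlam k).2 hhi⟩
  have hhipos : 0 < lamhi := hlo.trans_le ((hlam 0).1.trans (hlam 0).2)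
  have hτlb : ∀ k, lamlo * (1 - lamhi) ≤ lam k * (1 - lam k) := fun k =>
    mul_le_mul (hlam k).1 (by linarith [(hlam k).2]) (by linarith) (hlam01 k).1.le
  have hτpos : 0 < τlo := by
    rw [hτlo]
    calc (0:ℝ) < lamlo * (1 - lamhi) := by nlinarith
    _ ≤ ⨅ k, lam k * (1 - lam k) := le_ciInf hτlb
  have hτle : ∀ k, τlo ≤ lam k * (1 - lam k) := by
    intro k; rw [hτlo]
    refine ciInf_le ⟨lamlo * (1 - lamhi), ?_⟩ k
    rintro x ⟨j, rfl⟩; exact hτlb j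
  -- the sup Δ_{k,r}
  set D : ℝ → ℕ → ℝ := fun r k => ⨆ w : {w : H // ‖w‖ ≤ r}, ‖Tk k w.1 - T w.1‖ with hD
  have hDnonneg : ∀ r k, 0 ≤ D r k := fun r k => Real.iSup_nonneg fun w => norm_nonneg _
  have hDle : ∀ r : ℝ, 0 ≤ r → ∀ k, ∀ x : H, ‖x‖ ≤ r → ‖Tk k x - T x‖ ≤ D r k := by
    intro r hr k x hx
    have hbdd : BddAbove (Set.range fun w : {w : H // ‖w‖ ≤ r} => ‖Tk k w.1 - T w.1‖) := by
      refine ⟨2 * r + ‖Tk k 0 - T 0‖, ?_⟩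
      rintro y ⟨⟨v, hv⟩, rfl⟩
      have e1 : ‖Tk k v - Tk k 0‖ ≤ r := (hTk k v 0).trans (by simpa using hv)
      have e2 : ‖T 0 - T v‖ ≤ r := (hT 0 v).trans (by simpa [norm_sub_rev] using hv)
      calc ‖Tk k v - T v‖ = ‖(Tk k v - Tk k 0) + (Tk k 0 - T 0) + (T 0 - T v)‖ := by
            congr 1; abel
        _ ≤ ‖Tk k v - Tk k 0‖ + ‖Tk k 0 - T 0‖ + ‖T 0 - T v‖ := norm_add₃_le
        _ ≤ 2 * r + ‖Tk k 0 - T 0‖ := by linarith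
    exact le_ciSup hbdd ⟨x, hx⟩
  have hsumD : ∀ r, 0 ≤ r → Summable (D r) := by
    intro r hr
    refine Summable.of_nonneg_of_le (hDnonneg r) (fun k => ?_) (by simpa only [hD] using hΔ r hr)
    exact le_mul_of_one_le_left (hDnonneg r k) (le_add_of_nonneg_left (Nat.cast_nonneg k))
  have hsume : Summable (fun k => ‖ε k‖) :=
    Summable.of_nonneg_of_le (fun k => norm_nonneg _)
      (fun k => le_mul_of_one_le_left (norm_nonneg _) (le_add_of_nonneg_left (Nat.cast_nonneg k)))
      herr
  -- pick an approximate nearest fixed point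
  obtain ⟨w, hwmem, hwd⟩ := (Metric.infDist_lt_iff hne).1 (lt_add_one (Metric.infDist (z 0) fixT))
  have hTw : T w = w := by rw [hfixT] at hwmem; exact hwmem
  set d0 := Metric.infDist (z 0) fixT with hd0def
  have hd0 : 0 ≤ d0 := Metric.infDist_nonneg
  have ha0 : ‖z 0 - w‖ ≤ d0 + 1 := by rw [← dist_eq_norm]; linarith
  -- first boundedness estimate
  set δ : ℕ → ℝ := fun k => ‖Tk k w - w‖ with hδ
  have hδle : ∀ k, δ k ≤ D ‖w‖ k := by
    intro k
    have h := hDle ‖w‖ (norm_nonneg w) k w le_rfl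
    rwa [hTw] at h
  have hsumδ : Summable δ :=
    Summable.of_nonneg_of_le (fun k => norm_nonneg _) hδle (hsumD ‖w‖ (norm_nonneg w))
  set S0 := ∑' k, (δ k + ‖ε k‖) with hS0
  have hsum0 : Summable (fun k => δ k + ‖ε k‖) := hsumδ.add hsume
  have hS0nn : 0 ≤ S0 := tsum_nonneg fun k => add_nonneg (norm_nonneg _) (norm_nonneg _)
  have hstep1 : ∀ k, ‖z (k+1) - w‖ ≤ ‖z k - w‖ + lamhi * (δ k + ‖ε k‖) := by
    intro k
    have hid : z (k+1) - w = (1 - lam k) • (z k - w) + (lam k • (Tk k (z k) - Tk k w)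
        + (lam k • (Tk k w - w) + lam k • ε k)) := by
      rw [hiter k]; module
    have nA : ‖(1 - lam k) • (z k - w)‖ = (1 - lam k) * ‖z k - w‖ := by
      rw [norm_smul, Real.norm_eq_abs, abs_of_nonneg (by linarith [(hlam01 k).2])]
    have nB : ‖lam k • (Tk k (z k) - Tk k w)‖ ≤ lam k * ‖z k - w‖ := by
      rw [norm_smul, Real.norm_eq_abs, abs_of_nonneg (hlam01 k).1.le]
      exact mul_le_mul_of_nonneg_left (hTk k _ _) (hlam01 k).1.le
    have nC : ‖lam k • (Tk k w - w)‖ ≤ lamhi * δ k := by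
      rw [norm_smul, Real.norm_eq_abs, abs_of_nonneg (hlam01 k).1.le]
      exact mul_le_mul (hlam k).2 le_rfl (norm_nonneg _) hhipos.le
    have nD : ‖lam k • ε k‖ ≤ lamhi * ‖ε k‖ := by
      rw [norm_smul, Real.norm_eq_abs, abs_of_nonneg (hlam01 k).1.le]
      exact mul_le_mul (hlam k).2 le_rfl (norm_nonneg _) hhipos.le
    calc ‖z (k+1) - w‖ ≤ ‖(1 - lam k) • (z k - w)‖ + (‖lam k • (Tk k (z k) - Tk k w)‖
          + (‖lam k • (Tk k w - w)‖ + ‖lam k • ε k‖)) := by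
          rw [hid]
          exact (norm_add_le _ _).trans (add_le_add_right ((norm_add_le _ _).trans
            (add_le_add_right (norm_add_le _ _) _)) _)
      _ ≤ ‖z k - w‖ + lamhi * (δ k + ‖ε k‖) := by
          rw [nA]; nlinarith [(hlam01 k).1, norm_nonneg (z k - w)]
  have hbnd : ∀ k, ‖z k - w‖ ≤ ‖z 0 - w‖ + lamhi * S0 := by
    have key : ∀ k, ‖z k - w‖ ≤ ‖z 0 - w‖ + lamhi * ∑ j ∈ Finset.range k, (δ j + ‖ε j‖) := by
      intro k
      induction k with
      | zero => simp
      | succ n ih =>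
        rw [Finset.sum_range_succ, mul_add]
        linarith [hstep1 n]
    intro k
    have hpart : ∑ j ∈ Finset.range k, (δ j + ‖ε j‖) ≤ S0 :=
      hsum0.sum_le_tsum _ (fun j _ => add_nonneg (norm_nonneg _) (norm_nonneg _))
    have := key k
    nlinarith [hhipos.le]
  -- radius and perturbation bounds
  set ρ := ‖w‖ + (‖z 0 - w‖ + lamhi * S0) with hρdef
  have hρ : 0 ≤ ρ := by nlinarith [norm_nonneg w, norm_nonneg (z 0 - w), hS0nn, hhipos.le]
  have hzρ : ∀ k, ‖z k‖ ≤ ρ := by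
    intro k
    calc ‖z k‖ = ‖(z k - w) + w‖ := by rw [sub_add_cancel]
      _ ≤ ‖z k - w‖ + ‖w‖ := norm_add_le _ _
      _ ≤ ρ := by rw [hρdef]; linarith [hbnd k]
  set v : ℕ → ℝ := fun k => lamhi * (D ρ k + ‖ε k‖) with hv
  have hv0 : ∀ k, 0 ≤ v k := fun k =>
    mul_nonneg hhipos.le (add_nonneg (hDnonneg ρ k) (norm_nonneg _))
  have hsumv : Summable v := ((hsumD ρ hρ).add hsume).mul_left lamhi
  have hsumv1 : Summable (fun k : ℕ => ((k:ℝ)+1) * v k) := by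
    have he1 : (fun k : ℕ => ((k:ℝ)+1) * v k)
        = fun k : ℕ => lamhi * (((k:ℝ)+1) * D ρ k + ((k:ℝ)+1) * ‖ε k‖) := by
      funext k; simp only [hv]; ring
    rw [he1]
    refine Summable.mul_left lamhi (Summable.add ?_ herr)
    simpa only [hD] using hΔ ρ hρ
  set V := ∑' k, v k with hV
  set W := ∑' k : ℕ, ((k:ℝ)+1) * v k with hW
  have hV0 : 0 ≤ V := tsum_nonneg hv0
  have hW0 : 0 ≤ W := tsum_nonneg fun k : ℕ => mul_nonneg (by positivity) (hv0 k)
  have hvV : ∀ k, v k ≤ V := fun k => hsumv.le_tsum k fun j _ => hv0 j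
  set A0 := (d0 + 1) + lamhi * S0 with hA0def
  have hA0 : ∀ k, ‖z k - w‖ ≤ A0 := by
    intro k; have := hbnd k; rw [hA0def]; linarith
  have hA0nn : 0 ≤ A0 := le_trans (norm_nonneg _) (hA0 0)
  -- decomposition into an exact KM step plus perturbation
  have hdecomp : ∀ k, z (k+1)
      = (z k + lam k • (T (z k) - z k)) + lam k • (Tk k (z k) + ε k - T (z k)) := by
    intro k; rw [hiter k]; module
  have hpnorm : ∀ k, ‖lam k • (Tk k (z k) + ε k - T (z k))‖ ≤ v k := by
    intro k
    rw [norm_smul, Real.norm_eq_abs, abs_of_nonneg (hlam01 k).1.le]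
    have h1 : ‖Tk k (z k) + ε k - T (z k)‖ ≤ D ρ k + ‖ε k‖ := by
      have hid : Tk k (z k) + ε k - T (z k) = (Tk k (z k) - T (z k)) + ε k := by abel
      rw [hid]
      exact (norm_add_le _ _).trans (add_le_add_left (hDle ρ hρ k (z k) (hzρ k)) _)
    calc lam k * ‖Tk k (z k) + ε k - T (z k)‖ ≤ lamhi * (D ρ k + ‖ε k‖) :=
          mul_le_mul (hlam k).2 h1 (norm_nonneg _) hhipos.le
      _ = v k := by rw [hv]
  -- Fejér-type inequality
  have hfejer : ∀ k, ‖z (k+1) - w‖^2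
      ≤ ‖z k - w‖^2 - τlo * ‖e k‖^2 + v k * (2*A0 + v k) := by
    intro k
    set y := z k + lam k • (T (z k) - z k) with hy
    have hyw : y - w = (1 - lam k) • (z k - w) + lam k • (T (z k) - w) := by
      rw [hy]; module
    have hTzw : ‖T (z k) - w‖ ≤ ‖z k - w‖ := by
      have h := hT (z k) w; rwa [hTw] at h
    have hsub : (z k - w) - (T (z k) - w) = e k := by rw [he k]; abel
    have hy2 : ‖y - w‖^2 ≤ ‖z k - w‖^2 - τlo * ‖e k‖^2 := by
      rw [hyw, stmt18_combo, hsub]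
      nlinarith [mul_nonneg (hlam01 k).1.le
          (by nlinarith [hTzw, norm_nonneg (T (z k) - w), norm_nonneg (z k - w)] :
            (0:ℝ) ≤ ‖z k - w‖^2 - ‖T (z k) - w‖^2),
        mul_nonneg (by linarith [hτle k] : (0:ℝ) ≤ lam k * (1 - lam k) - τlo) (sq_nonneg ‖e k‖)]
    have hyle : ‖y - w‖ ≤ ‖z k - w‖ := by
      have h0 : ‖y - w‖^2 ≤ ‖z k - w‖^2 := by
        linarith [hy2, mul_nonneg hτpos.le (sq_nonneg ‖e k‖)]
      exact (pow_le_pow_iff_left₀ (norm_nonneg _) (norm_nonneg _) two_ne_zero).1 h0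
    have hd := hdecomp k
    rw [← hy] at hd
    have hz1 : ‖z (k+1) - w‖ ≤ ‖y - w‖ + v k := by
      have hid2 : z (k+1) - w = (y - w) + lam k • (Tk k (z k) + ε k - T (z k)) := by
        rw [hd]; abel
      rw [hid2]
      exact (norm_add_le _ _).trans (add_le_add_right (hpnorm k) _)
    have hsq : ‖z (k+1) - w‖^2 ≤ (‖y - w‖ + v k)^2 :=
      pow_le_pow_left₀ (norm_nonneg _) hz1 2
    nlinarith [hsq, hy2, mul_le_mul_of_nonneg_right (hyle.trans (hA0 k)) (hv0 k)]
  -- summed Fejér inequality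
  have hsumfejer : ∀ n : ℕ, τlo * ∑ j ∈ Finset.range n, ‖e j‖^2
      ≤ (d0+1)^2 + (2*A0+V)*V := by
    have key : ∀ n : ℕ, τlo * ∑ j ∈ Finset.range n, ‖e j‖^2 + ‖z n - w‖^2
        ≤ ‖z 0 - w‖^2 + ∑ j ∈ Finset.range n, v j * (2*A0 + v j) := by
      intro n
      induction n with
      | zero => simp
      | succ m ih =>
        rw [Finset.sum_range_succ, Finset.sum_range_succ, mul_add]
        linarith [hfejer m]
    intro n
    have h1 := key n
    have h2 : ∑ j ∈ Finset.range n, v j * (2*A0+v j) ≤ (2*A0+V)*V := by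
      calc ∑ j ∈ Finset.range n, v j * (2*A0+v j)
          ≤ ∑ j ∈ Finset.range n, v j * (2*A0+V) :=
            Finset.sum_le_sum fun j _ =>
              mul_le_mul_of_nonneg_left (by linarith [hvV j]) (hv0 j)
        _ = (2*A0+V) * ∑ j ∈ Finset.range n, v j := by
            rw [Finset.mul_sum]; exact Finset.sum_congr rfl fun j _ => mul_comm _ _
        _ ≤ (2*A0+V) * V :=
            mul_le_mul_of_nonneg_left (hsumv.sum_le_tsum _ (fun i _ => hv0 i))
              (by linarith [hA0nn, hV0])
    have h3 : ‖z 0 - w‖^2 ≤ (d0+1)^2 := pow_le_pow_left₀ (norm_nonneg _) ha0 2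
    nlinarith [sq_nonneg ‖z n - w‖]
  -- quasi-monotonicity of the residual
  have heres : ∀ k, ‖e (k+1)‖ ≤ ‖e k‖ + 2 * v k := by
    intro k
    set y := z k + lam k • (T (z k) - z k) with hy
    have hd := hdecomp k
    rw [← hy] at hd
    have h1 : y - T y = (1 - lam k) • (z k - T (z k)) + (T (z k) - T y) := by
      rw [hy]; module
    have h3 : z k - y = lam k • e k := by rw [hy, he k]; module
    have h2 : ‖T (z k) - T y‖ ≤ lam k * ‖e k‖ := by
      calc ‖T (z k) - T y‖ ≤ ‖z k - y‖ := hT _ _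
        _ = lam k * ‖e k‖ := by
            rw [h3, norm_smul, Real.norm_eq_abs, abs_of_nonneg (hlam01 k).1.le]
    have h4 : ‖y - T y‖ ≤ ‖e k‖ := by
      have c1 : ‖y - T y‖ ≤ ‖(1 - lam k) • (z k - T (z k))‖ + ‖T (z k) - T y‖ := by
        rw [h1]; exact norm_add_le _ _
      have c2 : ‖(1 - lam k) • (z k - T (z k))‖ = (1 - lam k) * ‖e k‖ := by
        rw [← he k, norm_smul, Real.norm_eq_abs, abs_of_nonneg (by linarith [(hlam01 k).2])]
      nlinarith [h2, c1, c2]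
    have h5 : e (k+1) = lam k • (Tk k (z k) + ε k - T (z k))
        + ((y - T y) + (T y - T (z (k+1)))) := by
      rw [he (k+1), hd]; abel
    have h6 : ‖T y - T (z (k+1))‖ ≤ v k := by
      have c3 : y - z (k+1) = -(lam k • (Tk k (z k) + ε k - T (z k))) := by rw [hd]; abel
      calc ‖T y - T (z (k+1))‖ ≤ ‖y - z (k+1)‖ := hT _ _
        _ = ‖lam k • (Tk k (z k) + ε k - T (z k))‖ := by rw [c3, norm_neg]
        _ ≤ v k := hpnorm k
    calc ‖e (k+1)‖ ≤ ‖lam k • (Tk k (z k) + ε k - T (z k))‖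
          + (‖y - T y‖ + ‖T y - T (z (k+1))‖) := by
          rw [h5]; exact (norm_add_le _ _).trans (add_le_add_right (norm_add_le _ _) _)
      _ ≤ v k + (‖e k‖ + v k) := add_le_add (hpnorm k) (add_le_add h4 h6)
      _ = ‖e k‖ + 2 * v k := by ring
  -- chain inequality
  have hchain : ∀ k i, i ≤ k → ‖e k‖ ≤ ‖e i‖ + 2 * ∑ l ∈ Finset.Ico i k, v l := by
    intro k
    induction k with
    | zero =>
      intro i hi
      obtain rfl := Nat.le_zero.1 hi
      simp
    | succ m ih =>
      intro i hi
      rcases Nat.lt_or_ge i (m+1) with h | h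
      · have hi' : i ≤ m := Nat.lt_succ_iff.1 h
        rw [Finset.sum_Ico_succ_top hi', mul_add]
        linarith [ih i hi', heres m]
      · obtain rfl : i = m + 1 := le_antisymm hi h
        simp
  -- averaged bound
  have hdouble : ∀ k : ℕ, ((k:ℝ)+1) * ‖e k‖
      ≤ (∑ i ∈ Finset.range (k+1), ‖e i‖) + 2 * W := by
    intro k
    have h1 : ∑ _i ∈ Finset.range (k+1), ‖e k‖
        ≤ ∑ i ∈ Finset.range (k+1), (‖e i‖ + 2 * ∑ l ∈ Finset.Ico i k, v l) :=
      Finset.sum_le_sum fun i hi => hchain k i (Nat.lt_succ_iff.1 (Finset.mem_range.1 hi))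
    rw [Finset.sum_const, Finset.card_range, nsmul_eq_mul] at h1
    push_cast at h1
    have h2 : ∑ i ∈ Finset.range (k+1), (‖e i‖ + 2 * ∑ l ∈ Finset.Ico i k, v l)
        = (∑ i ∈ Finset.range (k+1), ‖e i‖)
          + 2 * ∑ i ∈ Finset.range (k+1), ∑ l ∈ Finset.Ico i k, v l := by
      rw [Finset.sum_add_distrib, Finset.mul_sum]
    have h3 : ∑ i ∈ Finset.range (k+1), ∑ l ∈ Finset.Ico i k, v l ≤ W := by
      have e0 : ∑ i ∈ Finset.range (k+1), ∑ l ∈ Finset.Ico i k, v l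
          = ∑ i ∈ Finset.Ico 0 k, ∑ l ∈ Finset.Ico i k, v l := by
        rw [Finset.range_eq_Ico, Finset.sum_Ico_succ_top (Nat.zero_le k),
          Finset.Ico_self, Finset.sum_empty, add_zero]
      rw [e0, Finset.sum_Ico_Ico_comm]
      have e1 : ∀ l : ℕ, ∑ _i ∈ Finset.Ico 0 (l+1), v l = ((l:ℝ)+1) * v l := by
        intro l
        rw [Finset.sum_const, Nat.card_Ico, nsmul_eq_mul]
        push_cast; ring
      calc ∑ l ∈ Finset.Ico 0 k, ∑ _i ∈ Finset.Ico 0 (l+1), v l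
          = ∑ l ∈ Finset.Ico 0 k, ((l:ℝ)+1) * v l := Finset.sum_congr rfl fun l _ => e1 l
        _ ≤ W := hsumv1.sum_le_tsum _ (fun i _ => mul_nonneg (by positivity) (hv0 i))
    linarith
  -- Cauchy–Schwarz
  have hCS : ∀ k : ℕ, (∑ i ∈ Finset.range (k+1), ‖e i‖)^2
      ≤ ((k:ℝ)+1) * ∑ i ∈ Finset.range (k+1), ‖e i‖^2 := by
    intro k
    have h := sq_sum_le_card_mul_sum_sq (s := Finset.range (k+1)) (f := fun i => ‖e i‖)
    rw [Finset.card_range] at h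
    push_cast at h
    exact h
  -- assemble the constant
  have hC2nn : (0:ℝ) ≤ (2*A0+V)*V := mul_nonneg (by linarith) hV0
  set P := Real.sqrt ((d0+1)^2 + (2*A0+V)*V) with hP
  have hPnn : 0 ≤ P := Real.sqrt_nonneg _
  set s := Real.sqrt τlo with hs
  have hspos : 0 < s := Real.sqrt_pos.2 hτpos
  have hssq : s^2 = τlo := Real.sq_sqrt hτpos.le
  refine ⟨(P + 2*W*s)^2 - d0^2, ?_, ?_⟩
  · have hPd : d0 ≤ P := by
      calc d0 = Real.sqrt (d0^2) := (Real.sqrt_sq hd0).symm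
        _ ≤ P := Real.sqrt_le_sqrt (by nlinarith)
    have h1 : d0 ≤ P + 2*W*s := by nlinarith [hPd, mul_nonneg hW0 hspos.le]
    have h2 : d0^2 ≤ (P + 2*W*s)^2 := pow_le_pow_left₀ hd0 h1 2
    linarith
  · intro k
    set r := Real.sqrt ((k:ℝ)+1) with hr
    have hk1 : (0:ℝ) < (k:ℝ)+1 := by positivity
    have hr1 : 1 ≤ r := by
      rw [hr]
      have h1 : Real.sqrt 1 ≤ Real.sqrt ((k:ℝ)+1) :=
        Real.sqrt_le_sqrt (by linarith [Nat.cast_nonneg (α := ℝ) k])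
      simpa using h1
    have hrpos : 0 < r := lt_of_lt_of_le one_pos hr1
    have hrsq : r^2 = (k:ℝ)+1 := Real.sq_sqrt hk1.le
    have hRHS : Real.sqrt ((d0^2 + ((P + 2*W*s)^2 - d0^2)) / (τlo * ((k:ℝ)+1)))
        = (P + 2*W*s) / (s*r) := by
      rw [show d0^2 + ((P+2*W*s)^2 - d0^2) = (P+2*W*s)^2 by ring,
        Real.sqrt_div (sq_nonneg _), Real.sqrt_sq (by nlinarith [hW0, hspos.le]),
        Real.sqrt_mul hτpos.le, ← hs, ← hr]
    rw [hRHS]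
    set Q := Real.sqrt (∑ i ∈ Finset.range (k+1), ‖e i‖^2) with hQdef
    have hQnn : 0 ≤ Q := Real.sqrt_nonneg _
    have hEnn : 0 ≤ ∑ i ∈ Finset.range (k+1), ‖e i‖^2 :=
      Finset.sum_nonneg fun i _ => sq_nonneg _
    have hQsq : Q^2 = ∑ i ∈ Finset.range (k+1), ‖e i‖^2 := Real.sq_sqrt hEnn
    have hQP : Q * s ≤ P := by
      have hsq2 : (Q*s)^2 ≤ P^2 := by
        rw [mul_pow, hQsq, hssq, hP,
          Real.sq_sqrt (by nlinarith : (0:ℝ) ≤ (d0+1)^2 + (2*A0+V)*V)]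
        linarith [hsumfejer (k+1)]
      exact (pow_le_pow_iff_left₀ (mul_nonneg hQnn hspos.le) hPnn two_ne_zero).1 hsq2
    have hsum_e : ∑ i ∈ Finset.range (k+1), ‖e i‖ ≤ r * Q := by
      have h2 : ∑ i ∈ Finset.range (k+1), ‖e i‖
          ≤ Real.sqrt (((k:ℝ)+1) * ∑ i ∈ Finset.range (k+1), ‖e i‖^2) := by
        rw [← Real.sqrt_sq (Finset.sum_nonneg fun i (_ : i ∈ Finset.range (k+1)) => norm_nonneg (e i))]
        exact Real.sqrt_le_sqrt (hCS k)
      rwa [Real.sqrt_mul hk1.le, ← hr, ← hQdef] at h2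
    have hmain : ((k:ℝ)+1) * ‖e k‖ ≤ r * Q + 2 * W := by
      linarith [hdouble k, hsum_e]
    rw [le_div_iff₀ (mul_pos hspos hrpos)]
    rw [show ((k:ℝ)+1) = r * r by rw [← hrsq]; ring] at hmain
    exact stmt18_final hspos hr1 hW0 hQP hmain
end

section
/- (Ergodic complexity of the non-stationary iteration.) Let H be a real Hilbert space, T : H → H non-expansive with fix T non-empty, and (T_k) a sequence of non-expansive operators H → H. Let (z_k) satisfy z_{k+1} = z_k + λ_k(T_k z_k + ε_k − z_k) with λ_k ∈ (0,1], set e_k = z_k − T z_k, Λ_k = Σ_{j=0}^{k} λ_j and ē_k = (1/Λ_k) Σ_{j=0}^{k} λ_j e_j. Assume Σ_k λ_k‖ε_k‖ < +∞ and, for every ρ ≥ 0, Σ_k λ_k Δ_{k,ρ} < +∞ where Δ_{k,ρ} = sup{‖T_k z − T z‖ : ‖z‖ ≤ ρ}. Then there exists a constant C₂ ≥ 0 such that for every k with Λ_k > 0: ‖ē_k‖ ≤ 2(d₀ + C₂)/Λ_k, where d₀ = d(z₀, fix T); in particular, if inf_k λ_k > 0 then ‖ē_k‖ = O(1/k). 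-/
/-- Ergodic complexity of the non-stationary inexact Krasnosel'skiĭ–Mann iteration:
if each `T_k` is non-expansive, `λ_k ∈ (0,1]`, `Σ λ_k‖ε_k‖ < ∞`, and
`Σ λ_k Δ_{k,ρ} < ∞` for every `ρ ≥ 0` where `Δ_{k,ρ} = sup_{‖w‖≤ρ} ‖T_k w − T w‖`, then
there is `C₂ ≥ 0` such that `‖ē_k‖ ≤ 2(d₀ + C₂)/Λ_k` whenever `Λ_k > 0`, with
`Λ_k = Σ_{j=0}^{k} λ_j`, `ē_k = (1/Λ_k) Σ_{j=0}^{k} λ_j e_j`, `e_j = z_j − T z_j` and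
`d₀ = d(z₀, fix T)`; in particular if `inf_k λ_k > 0` then `‖ē_k‖ = O(1/k)`. -/
theorem stmt19 {H : Type*} [NormedAddCommGroup H] [InnerProductSpace ℝ H]
    (T : H → H) (hT : ∀ x y, ‖T x - T y‖ ≤ ‖x - y‖)
    (fixT : Set H) (hfixT : fixT = {w | T w = w}) (hne : fixT.Nonempty)
    (Tk : ℕ → H → H) (hTk : ∀ k x y, ‖Tk k x - Tk k y‖ ≤ ‖x - y‖)
    (lam : ℕ → ℝ) (ε : ℕ → H) (z : ℕ → H)
    (hlam : ∀ k, lam k ∈ Set.Ioc (0 : ℝ) 1)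
    (hiter : ∀ k, z (k + 1) = z k + lam k • (Tk k (z k) + ε k - z k))
    (e : ℕ → H) (he : ∀ k, e k = z k - T (z k))
    (Λ : ℕ → ℝ) (hΛ : ∀ k, Λ k = ∑ j ∈ Finset.range (k + 1), lam j)
    (ebar : ℕ → H) (hebar : ∀ k, ebar k = (Λ k)⁻¹ • ∑ j ∈ Finset.range (k + 1), lam j • e j)
    (herr : Summable (fun k => lam k * ‖ε k‖))
    (hΔ : ∀ ρ : ℝ, 0 ≤ ρ →
      Summable (fun k => lam k * ⨆ w : {w : H // ‖w‖ ≤ ρ}, ‖Tk k w.1 - T w.1‖)) :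
    ∃ C₂ : ℝ, 0 ≤ C₂ ∧
      (∀ k, 0 < Λ k → ‖ebar k‖ ≤ 2 * (Metric.infDist (z 0) fixT + C₂) / Λ k) ∧
      ((0 < ⨅ k, lam k) →
        ∃ C : ℝ, 0 ≤ C ∧ ∀ k : ℕ, 1 ≤ k → ‖ebar k‖ ≤ C / (k : ℝ)) := by

  classical
  set d0 := Metric.infDist (z 0) fixT with hd0def
  have hd0 : 0 ≤ d0 := Metric.infDist_nonneg
  obtain ⟨w, hwmem, hwdist⟩ := (Metric.infDist_lt_iff hne).mp (lt_add_one d0)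
  have hTw : T w = w := by rw [hfixT] at hwmem; exact hwmem
  have hwz : ‖z 0 - w‖ ≤ d0 + 1 := by rw [← dist_eq_norm]; exact hwdist.le
  -- the sup function
  set D : ℝ → ℕ → ℝ := fun ρ k => ⨆ w : {w : H // ‖w‖ ≤ ρ}, ‖Tk k w.1 - T w.1‖ with hD
  have hbdd : ∀ (ρ : ℝ) (k : ℕ),
      BddAbove (Set.range fun w : {w : H // ‖w‖ ≤ ρ} => ‖Tk k w.1 - T w.1‖) := by
    intro ρ k
    refine ⟨‖Tk k 0 - T 0‖ + 2 * ρ, ?_⟩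
    rintro _ ⟨⟨x, hx⟩, rfl⟩
    have h1 : ‖Tk k x - T x‖ ≤ ‖Tk k x - Tk k 0‖ + ‖Tk k 0 - T 0‖ + ‖T 0 - T x‖ := by
      have := norm_add₃_le (a := Tk k x - Tk k 0) (b := Tk k 0 - T 0) (c := T 0 - T x)
      simpa using this
    have h2 : ‖Tk k x - Tk k 0‖ ≤ ‖x‖ := by simpa using hTk k x 0
    have h3 : ‖T 0 - T x‖ ≤ ‖x‖ := by simpa using hT 0 x
    linarith
  have hle : ∀ (ρ : ℝ) (k : ℕ) (x : H), ‖x‖ ≤ ρ → ‖Tk k x - T x‖ ≤ D ρ k := by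
    intro ρ k x hx
    exact le_ciSup (hbdd ρ k) ⟨x, hx⟩
  have hDnn : ∀ (ρ : ℝ), 0 ≤ ρ → ∀ k, 0 ≤ D ρ k := by
    intro ρ hρ k
    exact le_trans (norm_nonneg _) (hle ρ k 0 (by simpa using hρ))
  -- boundedness of the iterates
  set ρ₁ : ℝ := ‖w‖ with hρ₁
  have hsum1 : Summable (fun k => lam k * D ρ₁ k) := hΔ ρ₁ (norm_nonneg w)
  set a : ℕ → ℝ := fun k => lam k * ‖ε k‖ + lam k * D ρ₁ k with ha
  have hsa : Summable a := herr.add hsum1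
  have hann : ∀ k, 0 ≤ a k := fun k => add_nonneg
    (mul_nonneg (hlam k).1.le (norm_nonneg _))
    (mul_nonneg (hlam k).1.le (hDnn ρ₁ (norm_nonneg w) k))
  set A : ℝ := ∑' k, a k with hA
  have hAnn : 0 ≤ A := tsum_nonneg hann
  have hstep : ∀ k, ‖z (k + 1) - w‖ ≤ ‖z k - w‖ + a k := by
    intro k
    have hid : z (k + 1) - w = (1 - lam k) • (z k - w) + lam k • (Tk k (z k) - Tk k w)
        + (lam k • (Tk k w - T w) + lam k • ε k) := by
      rw [hiter k, hTw]; module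
    have hnb : ‖z (k + 1) - w‖ ≤ ‖(1 - lam k) • (z k - w)‖ + ‖lam k • (Tk k (z k) - Tk k w)‖
        + (‖lam k • (Tk k w - T w)‖ + ‖lam k • ε k‖) := by
      rw [hid]
      exact le_trans (norm_add_le _ _) (by gcongr <;> exact norm_add_le _ _)
    have hl0 : (0:ℝ) < lam k := (hlam k).1
    have hl1 : lam k ≤ 1 := (hlam k).2
    have e1 : ‖(1 - lam k) • (z k - w)‖ = (1 - lam k) * ‖z k - w‖ := by
      rw [norm_smul, Real.norm_eq_abs, abs_of_nonneg (by linarith)]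
    have e2 : ‖lam k • (Tk k (z k) - Tk k w)‖ ≤ lam k * ‖z k - w‖ := by
      rw [norm_smul, Real.norm_eq_abs, abs_of_pos hl0]
      exact mul_le_mul_of_nonneg_left (hTk k (z k) w) hl0.le
    have e3 : ‖lam k • (Tk k w - T w)‖ ≤ lam k * D ρ₁ k := by
      rw [norm_smul, Real.norm_eq_abs, abs_of_pos hl0]
      exact mul_le_mul_of_nonneg_left (hle ρ₁ k w le_rfl) hl0.le
    have e4 : ‖lam k • ε k‖ = lam k * ‖ε k‖ := by
      rw [norm_smul, Real.norm_eq_abs, abs_of_pos hl0]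
    have := hnb
    rw [e1, e4] at this
    have hnorm : 0 ≤ ‖z k - w‖ := norm_nonneg _
    simp only [ha]
    nlinarith [e2, e3]
  have hzb : ∀ k, ‖z k - w‖ ≤ ‖z 0 - w‖ + A := by
    have key : ∀ k, ‖z k - w‖ ≤ ‖z 0 - w‖ + ∑ j ∈ Finset.range k, a j := by
      intro k
      induction k with
      | zero => simp
      | succ n ih =>
        calc ‖z (n + 1) - w‖ ≤ ‖z n - w‖ + a n := hstep n
          _ ≤ ‖z 0 - w‖ + ∑ j ∈ Finset.range n, a j + a n := by linarith
          _ = ‖z 0 - w‖ + ∑ j ∈ Finset.range (n + 1), a j := by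
              rw [Finset.sum_range_succ]; ring
    intro k
    refine le_trans (key k) (by gcongr; exact Summable.sum_le_tsum _ (fun i _ => hann i) hsa)
  set ρ₂ : ℝ := ‖w‖ + (‖z 0 - w‖ + A) with hρ₂
  have hρ₂nn : 0 ≤ ρ₂ := add_nonneg (norm_nonneg _) (add_nonneg (norm_nonneg _) hAnn)
  have hzb2 : ∀ k, ‖z k‖ ≤ ρ₂ := by
    intro k
    calc ‖z k‖ = ‖w + (z k - w)‖ := by congr 1; abel
      _ ≤ ‖w‖ + ‖z k - w‖ := norm_add_le _ _
      _ ≤ ρ₂ := by have := hzb k; rw [hρ₂]; linarith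
  have hsum2 : Summable (fun k => lam k * D ρ₂ k) := hΔ ρ₂ hρ₂nn
  set A' : ℝ := ∑' k, lam k * ‖ε k‖ with hA'
  set B' : ℝ := ∑' k, lam k * D ρ₂ k with hB'
  have hA'nn : 0 ≤ A' := tsum_nonneg (fun k => mul_nonneg (hlam k).1.le (norm_nonneg _))
  have hB'nn : 0 ≤ B' := tsum_nonneg (fun k => mul_nonneg (hlam k).1.le (hDnn ρ₂ hρ₂nn k))
  -- telescoping
  have hterm : ∀ j, lam j • e j = (z j - z (j + 1))
      + (lam j • ε j + lam j • (Tk j (z j) - T (z j))) := by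
    intro j
    rw [he j, hiter j]
    module
  have hsumid : ∀ k, ∑ j ∈ Finset.range (k + 1), lam j • e j
      = (z 0 - z (k + 1)) + ∑ j ∈ Finset.range (k + 1),
          (lam j • ε j + lam j • (Tk j (z j) - T (z j))) := by
    intro k
    rw [show (∑ j ∈ Finset.range (k + 1), lam j • e j)
        = ∑ j ∈ Finset.range (k + 1), ((z j - z (j + 1))
          + (lam j • ε j + lam j • (Tk j (z j) - T (z j)))) from
      Finset.sum_congr rfl (fun j _ => hterm j)]
    rw [Finset.sum_add_distrib, Finset.sum_range_sub' z]
  set K : ℝ := 2 * (d0 + 1) + A + A' + B' with hK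
  have hKmain : ∀ k, ‖∑ j ∈ Finset.range (k + 1), lam j • e j‖ ≤ K := by
    intro k
    rw [hsumid k]
    have t1 : ‖z 0 - z (k + 1)‖ ≤ 2 * (d0 + 1) + A := by
      calc ‖z 0 - z (k + 1)‖ = ‖(z 0 - w) - (z (k + 1) - w)‖ := by congr 1; abel
        _ ≤ ‖z 0 - w‖ + ‖z (k + 1) - w‖ := norm_sub_le _ _
        _ ≤ (d0 + 1) + (‖z 0 - w‖ + A) := by have := hzb (k + 1); linarith
        _ ≤ 2 * (d0 + 1) + A := by linarith
    have t2 : ‖∑ j ∈ Finset.range (k + 1),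
        (lam j • ε j + lam j • (Tk j (z j) - T (z j)))‖ ≤ A' + B' := by
      calc ‖∑ j ∈ Finset.range (k + 1), (lam j • ε j + lam j • (Tk j (z j) - T (z j)))‖
          ≤ ∑ j ∈ Finset.range (k + 1), (lam j * ‖ε j‖ + lam j * D ρ₂ j) := by
            refine le_trans (norm_sum_le _ _) (Finset.sum_le_sum (fun j _ => ?_))
            refine le_trans (norm_add_le _ _) ?_
            have hl0 : (0:ℝ) < lam j := (hlam j).1
            gcongr
            · rw [norm_smul, Real.norm_eq_abs, abs_of_pos hl0]
            · rw [norm_smul, Real.norm_eq_abs, abs_of_pos hl0]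
              exact mul_le_mul_of_nonneg_left (hle ρ₂ j (z j) (hzb2 j)) hl0.le
        _ = (∑ j ∈ Finset.range (k + 1), lam j * ‖ε j‖)
            + ∑ j ∈ Finset.range (k + 1), lam j * D ρ₂ j := Finset.sum_add_distrib
        _ ≤ A' + B' := by
            gcongr
            · exact Summable.sum_le_tsum _ (fun i _ => mul_nonneg (hlam i).1.le (norm_nonneg _)) herr
            · exact Summable.sum_le_tsum _ (fun i _ => mul_nonneg (hlam i).1.le (hDnn ρ₂ hρ₂nn i)) hsum2
    calc ‖(z 0 - z (k + 1)) + _‖ ≤ ‖z 0 - z (k + 1)‖ + _ := norm_add_le _ _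
      _ ≤ K := by rw [hK]; linarith
  refine ⟨1 + (A + A' + B') / 2, by linarith, ?_, ?_⟩
  · intro k hΛk
    have hK2 : K = 2 * (d0 + (1 + (A + A' + B') / 2)) := by rw [hK]; ring
    rw [hebar k, norm_smul, Real.norm_eq_abs, abs_of_pos (inv_pos.mpr hΛk)]
    rw [div_eq_inv_mul, ← hK2]
    exact mul_le_mul_of_nonneg_left (hKmain k) (inv_pos.mpr hΛk).le
  · intro hm
    set m : ℝ := ⨅ k, lam k with hmdef
    have hbddb : BddBelow (Set.range lam) := ⟨0, by rintro _ ⟨j, rfl⟩; exact (hlam j).1.le⟩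
    have hml : ∀ j, m ≤ lam j := fun j => ciInf_le hbddb j
    have hΛlb : ∀ k : ℕ, ((k : ℝ) + 1) * m ≤ Λ k := by
      intro k
      rw [hΛ k]
      calc ((k : ℝ) + 1) * m = ∑ _j ∈ Finset.range (k + 1), m := by
            rw [Finset.sum_const, Finset.card_range, nsmul_eq_mul]; push_cast; ring
        _ ≤ ∑ j ∈ Finset.range (k + 1), lam j := Finset.sum_le_sum (fun j _ => hml j)
    have hKnn : 0 ≤ K := le_trans (norm_nonneg _) (hKmain 0)
    refine ⟨K / m, div_nonneg hKnn hm.le, ?_⟩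
    intro k hk
    have hk1 : (1:ℝ) ≤ (k : ℝ) := by exact_mod_cast hk
    have hΛpos : 0 < Λ k := lt_of_lt_of_le (by positivity) (hΛlb k)
    have hkm : (k : ℝ) * m ≤ Λ k := le_trans (by nlinarith) (hΛlb k)
    have h1 : ‖ebar k‖ ≤ K / Λ k := by
      have hK2 : 2 * (d0 + (1 + (A + A' + B') / 2)) = K := by rw [hK]; ring
      have := hΛpos
      rw [hebar k, norm_smul, Real.norm_eq_abs, abs_of_pos (inv_pos.mpr hΛpos),
        div_eq_inv_mul]
      exact mul_le_mul_of_nonneg_left (hKmain k) (inv_pos.mpr hΛpos).le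
    calc ‖ebar k‖ ≤ K / Λ k := h1
      _ ≤ K / ((k : ℝ) * m) := by
          apply div_le_div_of_nonneg_left hKnn (by nlinarith) hkm
      _ = K / m / (k : ℝ) := by rw [div_div, mul_comm]
end
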